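/- arXiv:1708.06062 — 7 statements merged into one kernel-verified Lean document; each statement's English description precedes it below -/
import Mathlib

section
/- Let m ≥ 3 and let c : ZMod m → {red, green, blue} be a coloring of the vertices of a simple cycle of length m (with edges joining i and i+1 for each i ∈ ZMod m). For distinct colors x, y, let n_{xy} denote the number of indices i ∈ ZMod m such that {c(i), c(i+1)} = {x, y}. Then n_{rg} ≡ n_{rb} ≡ n_{gb} (mod 2). -/
open Finset

/-- Boundary parity: for any `f : ZMod m → ZMod 2`, the number of `i` with
`f i ≠ f (i+1)` is even. -/
lemma even_boundary (m : ℕ) [NeZero m] (f : ZMod m → ZMod 2) :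
    (Finset.univ.filter (fun i : ZMod m => f i ≠ f (i + 1))).card % 2 = 0 := by
  classical
  have hsum : (∑ i : ZMod m, (f i + f (i + 1))) = 0 := by
    rw [Finset.sum_add_distrib]
    have : (∑ i : ZMod m, f (i + 1)) = ∑ i : ZMod m, f i :=
      Fintype.sum_equiv (Equiv.addRight 1) _ _ (fun i => rfl)
    rw [this]
    have : ∀ x : ZMod 2, x + x = 0 := by decide
    rw [← Finset.sum_add_distrib]
    simp [this]
  have hterm : ∀ x y : ZMod 2, x + y = if x ≠ y then 1 else 0 := by decide
  have : (((Finset.univ.filter (fun i : ZMod m => f i ≠ f (i + 1))).card : ZMod 2)) = 0 := by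
    have hc : (((Finset.univ.filter (fun i : ZMod m => f i ≠ f (i + 1))).card : ZMod 2))
        = ∑ i : ZMod m, (f i + f (i + 1)) := by
      rw [← Finset.sum_boole]
      exact Finset.sum_congr rfl (fun i _ => (hterm (f i) (f (i + 1))).symm)
    rw [hc, hsum]
  have hdvd := (ZMod.natCast_eq_zero_iff _ 2).mp this
  omega

lemma aux3 (x y z u v : Fin 3) (hxy : x ≠ y) (hxz : x ≠ z) (hyz : y ≠ z) :
    ((if u = x then (1 : ZMod 2) else 0) ≠ (if v = x then (1 : ZMod 2) else 0)) ↔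
      ((u = x ∧ v = y ∨ u = y ∧ v = x) ∨ (u = x ∧ v = z ∨ u = z ∧ v = x)) := by
  fin_cases x <;> fin_cases y <;> fin_cases z <;> fin_cases u <;> fin_cases v <;>
    simp_all

/-- **Parity lemma for 3-colored cycles.**
Vertices of the cycle on `ZMod m` (edges `{i, i+1}`) are colored with colors
`Fin 3` (0 = red, 1 = green, 2 = blue).  For distinct colors `x, y`, the number
of edges whose endpoint colors are exactly `{x, y}` is
`{i | {c i, c (i+1)} = {x, y}}.ncard`.  Then `n_rg ≡ n_rb ≡ n_gb (mod 2)`. -/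
theorem stmt_1 (m : ℕ) (hm : 3 ≤ m) (c : ZMod m → Fin 3) :
    {i : ZMod m | ({c i, c (i + 1)} : Set (Fin 3)) = {0, 1}}.ncard % 2
      = {i : ZMod m | ({c i, c (i + 1)} : Set (Fin 3)) = {0, 2}}.ncard % 2 ∧
    {i : ZMod m | ({c i, c (i + 1)} : Set (Fin 3)) = {0, 2}}.ncard % 2
      = {i : ZMod m | ({c i, c (i + 1)} : Set (Fin 3)) = {1, 2}}.ncard % 2 := by
  classical
  haveI : NeZero m := ⟨by omega⟩
  have hncard : ∀ (p : ZMod m → Prop), {i | p i}.ncard = (Finset.univ.filter p).card := by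
    intro p
    rw [← Set.ncard_coe_finset]
    congr 1
    ext i
    simp
  -- counting function
  set N : Fin 3 → Fin 3 → ℕ := fun a b =>
    (Finset.univ.filter (fun i : ZMod m =>
      (c i = a ∧ c (i + 1) = b) ∨ (c i = b ∧ c (i + 1) = a))).card with hN
  have hpair : ∀ a b : Fin 3,
      {i : ZMod m | ({c i, c (i + 1)} : Set (Fin 3)) = {a, b}}.ncard = N a b := by
    intro a b
    rw [hncard]
    congr 1
    ext i
    simp [Set.pair_eq_pair_iff]
  have key : ∀ x y z : Fin 3, x ≠ y → x ≠ z → y ≠ z → (N x y + N x z) % 2 = 0 := by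
    intro x y z hxy hxz hyz
    have hb := even_boundary m (fun i => if c i = x then (1 : ZMod 2) else 0)
    have hsplit : (Finset.univ.filter (fun i : ZMod m =>
        (if c i = x then (1 : ZMod 2) else 0) ≠ (if c (i + 1) = x then (1 : ZMod 2) else 0))).card
        = N x y + N x z := by
      rw [hN]
      rw [← Finset.card_union_of_disjoint]
      · rw [← Finset.filter_or]
        congr 1
        ext i
        simp only [Finset.mem_filter, Finset.mem_univ, true_and]
        exact aux3 x y z (c i) (c (i + 1)) hxy hxz hyz
      · rw [Finset.disjoint_filter]
        rintro i _ (⟨h1, h2⟩ | ⟨h1, h2⟩) <;> rintro (⟨h3, h4⟩ | ⟨h3, h4⟩) <;>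
          simp_all
    rw [hsplit] at hb
    exact hb
  rw [hpair, hpair, hpair]
  have h1 := key 0 1 2 (by decide) (by decide) (by decide)
  have h2 := key 1 0 2 (by decide) (by decide) (by decide)
  have h3 := key 2 0 1 (by decide) (by decide) (by decide)
  have symm : ∀ a b : Fin 3, N a b = N b a := by
    intro a b
    simp only [hN]
    refine congrArg Finset.card (Finset.filter_congr ?_)
    intro i _
    tauto
  rw [symm 1 0] at h2; rw [symm 2 0, symm 2 1] at h3
  omega
end

section
/- Let d ≥ 2, let V be a finite set, and let F be a finite family of d-element subsets of V (the facets) such that every (d−1)-element subset of V is contained in either zero or exactly two members of F. Let c : V → {0, 1, …, d} be a coloring of the vertices with d+1 colors. For each subset T ⊆ {0, …, d} with |T| = d, let n_T be the number of facets f ∈ F such that c restricted to f is injective with image T. Then all the numbers n_T (over all d-element subsets T of the colors) have the same parity: either n_T is even for all such T, or n_T is odd for all such T. -/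
open Finset

/-- The set of "doors" of `f` onto the color set `S`: vertices `v ∈ f` such that
`c` is injective on `f.erase v` with image `S`. -/
def doorFilter {V α : Type*} [DecidableEq V] [DecidableEq α] (c : V → α)
    (S : Finset α) (f : Finset V) : Finset V :=
  f.filter (fun v => (∀ x ∈ f.erase v, ∀ y ∈ f.erase v, c x = c y → x = y) ∧
    (f.erase v).image c = S)

lemma mem_doorFilter {V α : Type*} [DecidableEq V] [DecidableEq α] (c : V → α)
    (S : Finset α) (f : Finset V) (v : V) :
    v ∈ doorFilter c S f ↔ v ∈ f ∧ (∀ x ∈ f.erase v, ∀ y ∈ f.erase v, c x = c y → x = y) ∧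
      (f.erase v).image c = S := by
  rw [doorFilter]
  exact Finset.mem_filter

/-- If `c` is injective on `f` with image `insert a S` (`a ∉ S`), then `f` has
exactly one "door" onto `S`: the set obtained by erasing the `a`-colored vertex. -/
lemma doors_rainbow {V α : Type*} [DecidableEq V] [DecidableEq α] (c : V → α)
    (S : Finset α) (a : α) (ha : a ∉ S) (f : Finset V)
    (hinj : ∀ x ∈ f, ∀ y ∈ f, c x = c y → x = y) (himg : f.image c = insert a S) :
    (doorFilter c S f).card = 1 := by
  classical
  rw [doorFilter]
  have haimg : a ∈ f.image c := by rw [himg]; exact mem_insert_self a S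
  obtain ⟨v₀, hv₀f, hv₀c⟩ := mem_image.mp haimg
  rw [Finset.card_eq_one]
  refine ⟨v₀, ?_⟩
  ext v
  simp only [mem_filter, mem_singleton]
  constructor
  · rintro ⟨hvf, hinj', himg'⟩
    -- show c v = a
    have hcv : c v = a := by
      by_contra hne
      have : a ∈ (f.erase v).image c := by
        refine mem_image.mpr ⟨v₀, ?_, hv₀c⟩
        refine mem_erase.mpr ⟨?_, hv₀f⟩
        intro h; exact hne (h ▸ hv₀c)
      rw [himg'] at this
      exact ha this
    exact hinj v hvf v₀ hv₀f (hcv.trans hv₀c.symm)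
  · rintro rfl
    refine ⟨hv₀f, ?_, ?_⟩
    · intro x hx y hy hxy
      exact hinj x (mem_of_mem_erase hx) y (mem_of_mem_erase hy) hxy
    · apply Finset.Subset.antisymm
      · intro s hs
        obtain ⟨x, hx, rfl⟩ := mem_image.mp hs
        have hxf := mem_of_mem_erase hx
        have : c x ∈ insert a S := himg ▸ mem_image_of_mem c hxf
        rcases mem_insert.mp this with h | h
        · exfalso
          have := hinj x hxf v hv₀f (h.trans hv₀c.symm)
          exact (mem_erase.mp hx).1 this
        · exact h
      · intro s hs
        have : s ∈ f.image c := himg ▸ mem_insert_of_mem hs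
        obtain ⟨x, hxf, hxc⟩ := mem_image.mp this
        refine mem_image.mpr ⟨x, mem_erase.mpr ⟨?_, hxf⟩, hxc⟩
        rintro rfl
        rw [hv₀c] at hxc
        exact ha (hxc ▸ hs)

/-- If `f` is not rainbow-colored with image `insert x S` for any `x ∉ S`,
then the number of doors of `f` onto `S` is even. -/
lemma doors_even {V α : Type*} [DecidableEq V] [DecidableEq α] (c : V → α)
    (S : Finset α) (f : Finset V)
    (h : ∀ x, x ∉ S → ¬((∀ x ∈ f, ∀ y ∈ f, c x = c y → x = y) ∧ f.image c = insert x S)) :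
    (doorFilter c S f).card % 2 = 0 := by
  classical
  rw [doorFilter]
  set D := f.filter (fun v => (∀ x ∈ f.erase v, ∀ y ∈ f.erase v, c x = c y → x = y) ∧
      (f.erase v).image c = S) with hD
  rcases D.eq_empty_or_nonempty with he | ⟨v, hv⟩
  · rw [he]; rfl
  have hvmem := mem_filter.mp hv
  have hvf := hvmem.1
  have hinj' := hvmem.2.1
  have himg' := hvmem.2.2
  -- c v ∈ S
  have hcv : c v ∈ S := by
    by_contra hcv
    apply h (c v) hcv
    constructor
    · intro x hx y hy hxy
      by_cases hxv : x = v
      · by_cases hyv : y = v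
        · rw [hxv, hyv]
        · exfalso
          have h2 : c y ∈ S := himg' ▸ mem_image_of_mem c (mem_erase.mpr ⟨hyv, hy⟩)
          rw [hxv] at hxy
          exact hcv (hxy ▸ h2)
      · by_cases hyv : y = v
        · exfalso
          have h2 : c x ∈ S := himg' ▸ mem_image_of_mem c (mem_erase.mpr ⟨hxv, hx⟩)
          rw [hyv] at hxy
          exact hcv (hxy ▸ h2)
        · exact hinj' x (mem_erase.mpr ⟨hxv, hx⟩) y (mem_erase.mpr ⟨hyv, hy⟩) hxy
    · rw [← Finset.insert_erase hvf, image_insert, himg']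
  -- find the partner w
  have : c v ∈ (f.erase v).image c := himg' ▸ hcv
  obtain ⟨w, hw, hwc⟩ := mem_image.mp this
  have hwv : w ≠ v := (mem_erase.mp hw).1
  have hwf : w ∈ f := mem_of_mem_erase hw
  have hwD : w ∈ D := by
    rw [hD]
    refine mem_filter.mpr ⟨hwf, ?_, ?_⟩
    · -- injectivity on f.erase w
      intro x hx y hy hxy
      have hxf := mem_of_mem_erase hx
      have hyf := mem_of_mem_erase hy
      have hxw := (mem_erase.mp hx).1
      have hyw := (mem_erase.mp hy).1
      by_cases hxv : x = v
      · by_cases hyv : y = v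
        · rw [hxv, hyv]
        · have hyev : y ∈ f.erase v := mem_erase.mpr ⟨hyv, hyf⟩
          have h2 : y = w := hinj' y hyev w hw (by rw [← hxy, hxv, hwc])
          exact absurd h2 hyw
      · by_cases hyv : y = v
        · have hxev : x ∈ f.erase v := mem_erase.mpr ⟨hxv, hxf⟩
          have h2 : x = w := hinj' x hxev w hw (by rw [hxy, hyv, hwc])
          exact absurd h2 hxw
        · exact hinj' x (mem_erase.mpr ⟨hxv, hxf⟩) y (mem_erase.mpr ⟨hyv, hyf⟩) hxy
    · -- image of f.erase w equals S
      apply Finset.Subset.antisymm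
      · intro s hs
        obtain ⟨x, hx, rfl⟩ := mem_image.mp hs
        have hxf := mem_of_mem_erase hx
        by_cases hxv : x = v
        · rw [hxv]; exact hcv
        · exact himg' ▸ mem_image_of_mem c (mem_erase.mpr ⟨hxv, hxf⟩)
      · intro s hs
        have : s ∈ (f.erase v).image c := himg' ▸ hs
        obtain ⟨x, hx, hxc⟩ := mem_image.mp this
        by_cases hxw : x = w
        · refine mem_image.mpr ⟨v, mem_erase.mpr ⟨hwv.symm, hvf⟩, ?_⟩
          rw [← hwc, ← hxw]; exact hxc
        · exact mem_image.mpr ⟨x, mem_erase.mpr ⟨hxw, mem_of_mem_erase hx⟩, hxc⟩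
  have hDeq : D = {v, w} := by
    apply Finset.Subset.antisymm
    · intro u hu
      have humem := mem_filter.mp (hD ▸ hu)
      have huf := humem.1
      have hinju := humem.2.1
      simp only [mem_insert, mem_singleton]
      by_contra hcon
      push_neg at hcon
      obtain ⟨huv, huw⟩ := hcon
      have hvu : v ∈ f.erase u := mem_erase.mpr ⟨fun h2 => huv h2.symm, hvf⟩
      have hwu : w ∈ f.erase u := mem_erase.mpr ⟨fun h2 => huw h2.symm, hwf⟩
      exact hwv (hinju w hwu v hvu hwc)
    · intro u hu
      rcases mem_insert.mp hu with h1 | h1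
      · exact h1 ▸ hv
      · exact (mem_singleton.mp h1) ▸ hwD
  rw [hDeq, Finset.card_insert_of_notMem (by simp [Ne.symm hwv]), Finset.card_singleton]

/-- **Parity lemma for `(d+1)`-colored pseudomanifolds (Sperner-type lemma).**
`F` is a family of `d`-element facets such that every `(d-1)`-element set lies
in zero or exactly two facets, and vertices are colored with `d+1` colors.
For a `d`-element set of colors `T` (a good type), `n_T` counts facets on which
`c` is injective with image `T`.  All the `n_T` have the same parity. -/
theorem stmt_2 (d : ℕ) (hd : 2 ≤ d) (V : Type*) [Fintype V] [DecidableEq V]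
    (F : Finset (Finset V))
    (hfacet : ∀ f ∈ F, f.card = d)
    (hpm : ∀ e : Finset V, e.card = d - 1 →
      (F.filter (fun f => e ⊆ f)).card = 0 ∨ (F.filter (fun f => e ⊆ f)).card = 2)
    (c : V → Fin (d + 1)) :
    ∀ T₁ T₂ : Finset (Fin (d + 1)), T₁.card = d → T₂.card = d →
      (F.filter (fun f => (∀ x ∈ f, ∀ y ∈ f, c x = c y → x = y) ∧ f.image c = T₁)).card % 2
        = (F.filter (fun f =>
            (∀ x ∈ f, ∀ y ∈ f, c x = c y → x = y) ∧ f.image c = T₂)).card % 2 := by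
  intro T₁ T₂ hT₁ hT₂
  by_cases hTT : T₁ = T₂
  · rw [hTT]
  -- the common (d-1)-set of colors
  set S : Finset (Fin (d + 1)) := T₁ ∩ T₂ with hSdef
  have hSsub1 : S ⊆ T₁ := Finset.inter_subset_left
  have hSsub2 : S ⊆ T₂ := Finset.inter_subset_right
  have hScard : S.card = d - 1 := by
    have h1 : (T₁ ∪ T₂).card ≤ d + 1 := by
      calc (T₁ ∪ T₂).card ≤ (Finset.univ : Finset (Fin (d + 1))).card :=
            Finset.card_le_univ _
        _ = d + 1 := by simp
    have h2 := Finset.card_union_add_card_inter T₁ T₂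
    have h3 : (T₁ ∩ T₂).card ≤ T₁.card := Finset.card_le_card Finset.inter_subset_left
    have h4 : (T₁ ∩ T₂).card ≠ d := by
      intro h
      have hS1 : T₁ ∩ T₂ = T₁ := Finset.eq_of_subset_of_card_le Finset.inter_subset_left
        (by rw [hT₁]; omega)
      have hsub : T₁ ⊆ T₂ := hS1 ▸ Finset.inter_subset_right
      exact hTT (Finset.eq_of_subset_of_card_le hsub (by rw [hT₁, hT₂]))
    show (T₁ ∩ T₂).card = d - 1
    omega
  -- the two extra colors a, b
  have hcard1 : (T₁ \ S).card = 1 := by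
    rw [Finset.card_sdiff_of_subset hSsub1, hT₁, hScard]; omega
  obtain ⟨a, ha⟩ := Finset.card_eq_one.mp hcard1
  have haT : a ∈ T₁ ∧ a ∉ S := by
    have := ha ▸ Finset.mem_singleton_self a
    exact ⟨(Finset.mem_sdiff.mp this).1, (Finset.mem_sdiff.mp this).2⟩
  have hcard2 : (T₂ \ S).card = 1 := by
    rw [Finset.card_sdiff_of_subset hSsub2, hT₂, hScard]; omega
  obtain ⟨b, hb⟩ := Finset.card_eq_one.mp hcard2
  have hbT : b ∈ T₂ ∧ b ∉ S := by
    have := hb ▸ Finset.mem_singleton_self b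
    exact ⟨(Finset.mem_sdiff.mp this).1, (Finset.mem_sdiff.mp this).2⟩
  have hT₁eq : T₁ = insert a S := by
    refine (Finset.eq_of_subset_of_card_le (Finset.insert_subset haT.1 hSsub1) ?_).symm
    rw [Finset.card_insert_of_notMem haT.2, hScard, hT₁]; omega
  have hT₂eq : T₂ = insert b S := by
    refine (Finset.eq_of_subset_of_card_le (Finset.insert_subset hbT.1 hSsub2) ?_).symm
    rw [Finset.card_insert_of_notMem hbT.2, hScard, hT₂]; omega
  have hab : a ≠ b := by
    intro h
    have haS : a ∈ S := by
      rw [hSdef]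
      exact Finset.mem_inter.mpr ⟨haT.1, h ▸ hbT.1⟩
    exact haT.2 haS
  -- every color outside S is a or b
  have huniv : ∀ x : Fin (d + 1), x ∉ S → x = a ∨ x = b := by
    have hcardins : (insert a (insert b S)).card = d + 1 := by
      rw [Finset.card_insert_of_notMem (by
          simp only [Finset.mem_insert]
          rintro (h | h); exact hab h; exact haT.2 h),
        Finset.card_insert_of_notMem hbT.2, hScard]
      omega
    have huniveq : insert a (insert b S) = (Finset.univ : Finset (Fin (d + 1))) := by
      apply Finset.eq_of_subset_of_card_le (Finset.subset_univ _)
      rw [hcardins]; simp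
    intro x hx
    have : x ∈ insert a (insert b S) := huniveq ▸ Finset.mem_univ x
    rcases Finset.mem_insert.mp this with h | h
    · exact Or.inl h
    · rcases Finset.mem_insert.mp h with h | h
      · exact Or.inr h
      · exact absurd h hx
  -- key parity count for each facet
  have keyB : ∀ f ∈ F, (doorFilter c S f).card % 2 =
      ((if (∀ x ∈ f, ∀ y ∈ f, c x = c y → x = y) ∧ f.image c = T₁ then 1 else 0) +
       (if (∀ x ∈ f, ∀ y ∈ f, c x = c y → x = y) ∧ f.image c = T₂ then 1 else 0)) % 2 := by
    intro f hf
    by_cases h1 : (∀ x ∈ f, ∀ y ∈ f, c x = c y → x = y) ∧ f.image c = T₁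
    · have h2 : ¬((∀ x ∈ f, ∀ y ∈ f, c x = c y → x = y) ∧ f.image c = T₂) := by
        rintro ⟨-, himg2⟩
        exact hTT (h1.2 ▸ himg2 ▸ rfl)
      rw [if_pos h1, if_neg h2]
      rw [doors_rainbow c S a haT.2 f h1.1 (hT₁eq ▸ h1.2)]
    · by_cases h2 : (∀ x ∈ f, ∀ y ∈ f, c x = c y → x = y) ∧ f.image c = T₂
      · rw [if_neg h1, if_pos h2]
        rw [doors_rainbow c S b hbT.2 f h2.1 (hT₂eq ▸ h2.2)]
      · rw [if_neg h1, if_neg h2]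
        apply doors_even
        intro x hx hcon
        rcases huniv x hx with rfl | rfl
        · exact h1 ⟨hcon.1, hT₁eq ▸ hcon.2⟩
        · exact h2 ⟨hcon.1, hT₂eq ▸ hcon.2⟩
  -- double counting: the total number of doors is even
  set E : Finset (Finset V) := Finset.univ.filter (fun e =>
    e.card = d - 1 ∧ (∀ x ∈ e, ∀ y ∈ e, c x = c y → x = y) ∧ e.image c = S) with hE
  have keyA : ∀ f ∈ F, (doorFilter c S f).card = (E.filter (fun e => e ⊆ f)).card := by
    intro f hf
    apply Finset.card_bij (fun v _ => f.erase v)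
    · intro v hv
      rw [mem_doorFilter] at hv
      simp only [hE, Finset.mem_filter, Finset.mem_univ, true_and]
      refine ⟨⟨?_, hv.2⟩, Finset.erase_subset _ _⟩
      rw [Finset.card_erase_of_mem hv.1, hfacet f hf]
    · intro v hv w hw hvw
      have hvf := ((mem_doorFilter c S f v).mp hv).1
      by_contra hne
      have h2 : v ∈ f.erase w := Finset.mem_erase.mpr ⟨hne, hvf⟩
      rw [← hvw] at h2
      exact (Finset.mem_erase.mp h2).1 rfl
    · intro e he
      rw [Finset.mem_filter] at he
      have hesub : e ⊆ f := he.2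
      have heE := he.1
      simp only [hE, Finset.mem_filter, Finset.mem_univ, true_and] at heE
      have hecard : e.card = d - 1 := heE.1
      have hone : (f \ e).card = 1 := by
        rw [Finset.card_sdiff_of_subset hesub, hfacet f hf, hecard]; omega
      obtain ⟨v, hveq⟩ := Finset.card_eq_one.mp hone
      have hvmem : v ∈ f \ e := hveq ▸ Finset.mem_singleton_self v
      have hvf : v ∈ f := (Finset.mem_sdiff.mp hvmem).1
      have hve : v ∉ e := (Finset.mem_sdiff.mp hvmem).2
      have heeq : e = f.erase v := by
        apply Finset.eq_of_subset_of_card_le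
        · intro x hx
          exact Finset.mem_erase.mpr ⟨fun h => hve (h ▸ hx), hesub hx⟩
        · rw [Finset.card_erase_of_mem hvf, hfacet f hf, hecard]
      refine ⟨v, ?_, heeq.symm⟩
      rw [mem_doorFilter]
      refine ⟨hvf, ?_, ?_⟩
      · rw [← heeq]; exact heE.2.1
      · rw [← heeq]; exact heE.2.2
  have hEcard : ∀ e ∈ E, (F.filter (fun f => e ⊆ f)).card % 2 = 0 := by
    intro e he
    have hecard : e.card = d - 1 := ((Finset.mem_filter.mp he).2).1
    rcases hpm e hecard with h | h <;> rw [h]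
  have htotal : (∑ f ∈ F, (doorFilter c S f).card) % 2 = 0 := by
    have hswap : ∑ f ∈ F, (doorFilter c S f).card = ∑ e ∈ E, (F.filter (fun f => e ⊆ f)).card := by
      calc ∑ f ∈ F, (doorFilter c S f).card = ∑ f ∈ F, (E.filter (fun e => e ⊆ f)).card :=
            Finset.sum_congr rfl keyA
        _ = ∑ f ∈ F, ∑ e ∈ E, (if e ⊆ f then 1 else 0) := by
            refine Finset.sum_congr rfl fun f _ => ?_
            rw [Finset.card_filter]
        _ = ∑ e ∈ E, ∑ f ∈ F, (if e ⊆ f then 1 else 0) := Finset.sum_comm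
        _ = ∑ e ∈ E, (F.filter (fun f => e ⊆ f)).card := by
            refine Finset.sum_congr rfl fun e _ => ?_
            rw [Finset.card_filter]
    rw [hswap, Finset.sum_nat_mod]
    rw [Finset.sum_congr rfl hEcard]
    simp
  -- conclude
  have hsum : ((F.filter (fun f => (∀ x ∈ f, ∀ y ∈ f, c x = c y → x = y) ∧
        f.image c = T₁)).card +
      (F.filter (fun f => (∀ x ∈ f, ∀ y ∈ f, c x = c y → x = y) ∧
        f.image c = T₂)).card) % 2 = 0 := by
    rw [Finset.card_filter, Finset.card_filter, ← Finset.sum_add_distrib,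
      Finset.sum_nat_mod, ← Finset.sum_congr rfl keyB, ← Finset.sum_nat_mod]
    exact htotal
  omega
end

section
/- Let L be a finite set of lines in the plane, each colored red, green, or blue, with at least one line of each color, such that the arrangement is simple (no two lines of L are parallel and no three lines of L pass through a common point). Then there exist points p, q ∈ ℝ² such that the closed segment [p, q] intersects exactly one red line, exactly one green line, and exactly one blue line of L. -/
/-!
Shear the plane so that no line of `L` is vertical and no two vertices of the arrangement lie on
a common vertical line. Every line is then a graph `y = m x + c`, and a vertical segment over `x`
meets exactly the lines whose height at `x` lies between its endpoints, so it suffices to find an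
`x` over which three lines of distinct colours are consecutive in the vertical order.

Suppose there is none. Far to the left, a rainbow triple of minimal width is a *band*: lines `a`
below `a'` of two colours with only lines of the third colour `B` strictly between them (at least
one), where `a` and `a'` have yet to cross. Passing the next crossing, one line overtakes an
adjacent one, and a band survives (possibly bounded by a new line of the same colour), since
otherwise three consecutive lines would already have distinct colours. A band always has a
crossing ahead of it, so the sweep would pass infinitely many of the finitely many crossings.
-/

open Set

namespace RainbowSegment

variable {α : Type*} (F : Finset α) (col : α → Fin 3)

def HasRainbowWindow (v : α → ℝ) : Prop :=
  ∃ y₁ y₂, ∀ i, ∃! f, f ∈ F ∧ col f = i ∧ v f ∈ uIcc y₁ y₂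

structure IsBand (v : α → ℝ) (B : Fin 3) (a a' : α) : Prop where
  lower_mem : a ∈ F
  upper_mem : a' ∈ F
  lt : v a < v a'
  col_lower_ne : col a ≠ B
  col_upper_ne : col a' ≠ B
  col_ne : col a ≠ col a'
  exists_between : ∃ z ∈ F, v a < v z ∧ v z < v a'
  col_between : ∀ z ∈ F, v a < v z → v z < v a' → col z = B

structure Overtakes (v v' : α → ℝ) (g h : α) : Prop where
  fst_mem : g ∈ F
  snd_mem : h ∈ F
  lt : v g < v h
  lt' : v' h < v' g
  iff_of_ne : ∀ u ∈ F, u ≠ g → u ≠ h → ∀ w ∈ F,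
    (v u < v w ↔ v' u < v' w) ∧ (v w < v u ↔ v' w < v' u)

variable {F col} {v v' s : α → ℝ} {B : Fin 3} {a a' g h : α}

lemma HasRainbowWindow.of_neg (hr : HasRainbowWindow F col (-v)) : HasRainbowWindow F col v := by
  obtain ⟨y₁, y₂, hr⟩ := hr
  refine ⟨-y₁, -y₂, fun i => ?_⟩
  simpa only [← image_neg_uIcc, image_neg_eq_neg, mem_neg, Pi.neg_apply] using hr i

lemma hasRainbowWindow_of_consecutive {u z w : α} (hu : u ∈ F) (hz : z ∈ F) (hw : w ∈ F)
    (huz : v u < v z) (hzw : v z < v w)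
    (hcuz : col u ≠ col z) (hcuw : col u ≠ col w) (hczw : col z ≠ col w)
    (honly : ∀ f ∈ F, v u ≤ v f → v f ≤ v w → f = u ∨ f = z ∨ f = w) :
    HasRainbowWindow F col v := by
  have hwin : ∀ f ∈ F, v f ∈ uIcc (v u) (v w) ↔ f = u ∨ f = z ∨ f = w := by
    intro f hf
    rw [uIcc_of_le (huz.trans hzw).le, mem_Icc]
    refine ⟨fun h => honly f hf h.1 h.2, ?_⟩
    rintro (rfl | rfl | rfl) <;> constructor <;> linarith
  refine ⟨v u, v w, fun i => ?_⟩
  obtain ⟨f, hf, hfi, hfwin⟩ : ∃ f ∈ F, col f = i ∧ v f ∈ uIcc (v u) (v w) := by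
    rcases (by omega : i = col u ∨ i = col z ∨ i = col w) with rfl | rfl | rfl
    exacts [⟨u, hu, rfl, (hwin u hu).2 (by simp)⟩, ⟨z, hz, rfl, (hwin z hz).2 (by simp)⟩,
      ⟨w, hw, rfl, (hwin w hw).2 (by simp)⟩]
  refine ⟨f, ⟨hf, hfi, hfwin⟩, fun f' ⟨hf', hf'i, hf'win⟩ => ?_⟩
  rcases (hwin f hf).1 hfwin with rfl | rfl | rfl <;>
    rcases (hwin f' hf').1 hf'win with rfl | rfl | rfl <;> simp_all

namespace Overtakes

lemma not_between (hov : Overtakes F v v' g h) {z : α} (hz : z ∈ F) :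
    ¬(v g < v z ∧ v z < v h) := by
  rintro ⟨hgz, hzh⟩
  have hzg : z ≠ g := by rintro rfl; exact lt_irrefl _ hgz
  have hzh' : z ≠ h := by rintro rfl; exact lt_irrefl _ hzh
  have h₁ := (hov.iff_of_ne z hz hzg hzh' g hov.fst_mem).2.1 hgz
  have h₂ := (hov.iff_of_ne z hz hzg hzh' h hov.snd_mem).1.1 hzh
  linarith [hov.lt']

lemma neg (hov : Overtakes F v v' g h) : Overtakes F (-v) (-v') h g where
  fst_mem := hov.snd_mem
  snd_mem := hov.fst_mem
  lt := neg_lt_neg hov.lt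
  lt' := neg_lt_neg hov.lt'
  iff_of_ne u hu huh hug w hw := by
    simpa only [Pi.neg_apply, neg_lt_neg_iff, and_comm] using hov.iff_of_ne u hu hug huh w hw

end Overtakes

namespace IsBand

lemma col_eq (hb : IsBand F col v B a a') (i : Fin 3) : i = B ∨ i = col a ∨ i = col a' := by
  have := hb.col_lower_ne; have := hb.col_upper_ne; have := hb.col_ne; omega

lemma lower_ne_upper (hb : IsBand F col v B a a') : a ≠ a' := ne_of_apply_ne v hb.lt.ne

lemma neg (hb : IsBand F col v B a a') : IsBand F col (-v) B a' a where
  lower_mem := hb.upper_mem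
  upper_mem := hb.lower_mem
  lt := neg_lt_neg hb.lt
  col_lower_ne := hb.col_upper_ne
  col_upper_ne := hb.col_lower_ne
  col_ne := hb.col_ne.symm
  exists_between := by
    obtain ⟨z, hz, h₁, h₂⟩ := hb.exists_between
    exact ⟨z, hz, neg_lt_neg h₂, neg_lt_neg h₁⟩
  col_between z hz h₁ h₂ := hb.col_between z hz (neg_lt_neg_iff.1 h₂) (neg_lt_neg_iff.1 h₁)

lemma of_overtakes_of_ne (hb : IsBand F col v B a a') (hov : Overtakes F v v' g h)
    (hag : a ≠ g) (hah : a ≠ h) (ha'g : a' ≠ g) (ha'h : a' ≠ h) : IsBand F col v' B a a' := by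
  have hlow := hov.iff_of_ne a hb.lower_mem hag hah
  have hup := hov.iff_of_ne a' hb.upper_mem ha'g ha'h
  refine { hb with
    lt := (hlow a' hb.upper_mem).1.1 hb.lt
    exists_between := ?_
    col_between := fun z hz h₁ h₂ =>
      hb.col_between z hz ((hlow z hz).1.2 h₁) ((hup z hz).2.2 h₂) }
  obtain ⟨z, hz, h₁, h₂⟩ := hb.exists_between
  exact ⟨z, hz, (hlow z hz).1.1 h₁, (hup z hz).2.1 h₂⟩

lemma hasRainbowWindow_of_forall_between_eq (hb : IsBand F col v B a a') (hv : InjOn v F)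
    {z : α} (hz : z ∈ F) (honly : ∀ f ∈ F, v a < v f → v f < v a' → f = z) :
    HasRainbowWindow F col v := by
  obtain ⟨z₀, hz₀, h₁, h₂⟩ := hb.exists_between
  obtain rfl := honly z₀ hz₀ h₁ h₂
  have hcz := hb.col_between z₀ hz₀ h₁ h₂
  refine hasRainbowWindow_of_consecutive hb.lower_mem hz₀ hb.upper_mem h₁ h₂
    (hcz ▸ hb.col_lower_ne) hb.col_ne (hcz ▸ hb.col_upper_ne.symm) fun f hf hf₁ hf₂ => ?_
  rcases hf₁.lt_or_eq with hf₁ | hf₁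
  · rcases hf₂.lt_or_eq with hf₂ | hf₂
    · exact Or.inr (Or.inl (honly f hf hf₁ hf₂))
    · exact Or.inr (Or.inr (hv hf hb.upper_mem hf₂))
  · exact Or.inl (hv hf hb.lower_mem hf₁.symm)

lemma hasRainbowWindow_of_adjacent_below (hb : IsBand F col v B a a') (hv : InjOn v F)
    (hg : g ∈ F) (hga : v g < v a) (hadj : ∀ z ∈ F, ¬(v g < v z ∧ v z < v a))
    (hcol : col g = col a') : HasRainbowWindow F col v := by
  classical
  obtain ⟨z₀, hz₀, h₁, h₂⟩ := hb.exists_between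
  obtain ⟨b, hbmem, hbmin⟩ := (F.filter fun z => v a < v z ∧ v z < v a').exists_min_image v
    ⟨z₀, Finset.mem_filter.2 ⟨hz₀, h₁, h₂⟩⟩
  obtain ⟨hbF, hab, hba'⟩ := Finset.mem_filter.1 hbmem
  have hcb := hb.col_between b hbF hab hba'
  refine hasRainbowWindow_of_consecutive hg hb.lower_mem hbF hga hab
    (hcol ▸ hb.col_ne.symm) (hcb ▸ hcol ▸ hb.col_upper_ne) (hcb ▸ hb.col_lower_ne)
    fun f hf hf₁ hf₂ => ?_
  rcases hf₁.lt_or_eq with hf₁ | hf₁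
  · rcases lt_trichotomy (v f) (v a) with hfa | hfa | hfa
    · exact absurd ⟨hf₁, hfa⟩ (hadj f hf)
    · exact Or.inr (Or.inl (hv hf hb.lower_mem hfa))
    · rcases hf₂.lt_or_eq with hf₂ | hf₂
      · exact absurd (hbmin f (Finset.mem_filter.2 ⟨hf, hfa, hf₂.trans hba'⟩)) (not_le.2 hf₂)
      · exact Or.inr (Or.inr (hv hf hbF hf₂))
  · exact Or.inl (hv hf hg hf₁.symm)

lemma of_lower_overtakes (hb : IsBand F col v B a a') (hv : InjOn v F)
    (hno : ¬HasRainbowWindow F col v) (hov : Overtakes F v v' a h) (hha' : h ≠ a') :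
    IsBand F col v' B a a' := by
  have hah : v h < v a' := by
    rcases lt_trichotomy (v h) (v a') with h₁ | h₁ | h₁
    · exact h₁
    · exact absurd (hv hov.snd_mem hb.upper_mem h₁) hha'
    · exact absurd ⟨hb.lt, h₁⟩ (hov.not_between hb.upper_mem)
  by_cases honly : ∀ f ∈ F, v a < v f → v f < v a' → f = h
  · exact absurd (hb.hasRainbowWindow_of_forall_between_eq hv hov.snd_mem honly) hno
  push Not at honly
  obtain ⟨z₀, hz₀, h₁, h₂, hz₀h⟩ := honly
  have hup := hov.iff_of_ne a' hb.upper_mem hb.lower_ne_upper.symm hha'.symm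
  have hout : ∀ z ∈ F, v' a < v' z → z ≠ a ∧ z ≠ h := fun z _ hz =>
    ⟨by rintro rfl; exact lt_irrefl _ hz, by rintro rfl; linarith [hov.lt']⟩
  refine { hb with
    lt := (hup a hb.lower_mem).2.1 hb.lt
    exists_between := ⟨z₀, hz₀, ?_, (hup z₀ hz₀).2.1 h₂⟩
    col_between := fun z hz h₁ h₂ => hb.col_between z hz ?_ ((hup z hz).2.2 h₂) }
  · exact (hov.iff_of_ne z₀ hz₀ (by rintro rfl; exact lt_irrefl _ h₁) hz₀h a hb.lower_mem).2.1 h₁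
  · exact (hov.iff_of_ne z hz (hout z hz h₁).1 (hout z hz h₁).2 a hb.lower_mem).2.2 h₁

lemma of_overtakes_lower (hb : IsBand F col v B a a') (hov : Overtakes F v v' g a)
    (hcol : col g = B) : IsBand F col v' B a a' := by
  have hup := hov.iff_of_ne a' hb.upper_mem (by rintro rfl; linarith [hb.lt, hov.lt])
    hb.lower_ne_upper.symm
  refine { hb with
    lt := (hup a hb.lower_mem).2.1 hb.lt
    exists_between := ⟨g, hov.fst_mem, hov.lt', (hup g hov.fst_mem).2.1 (hov.lt.trans hb.lt)⟩
    col_between := fun z hz h₁ h₂ => ?_ }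
  by_cases hzg : z = g
  · rw [hzg, hcol]
  have hza : z ≠ a := by rintro rfl; exact lt_irrefl _ h₁
  exact hb.col_between z hz ((hov.iff_of_ne z hz hzg hza a hb.lower_mem).2.2 h₁)
    ((hup z hz).2.2 h₂)

lemma overtaker_of_overtakes_lower (hb : IsBand F col v B a a') (hv : InjOn v F)
    (hov : Overtakes F v v' g a) (hcol : col g = col a) : IsBand F col v' B g a' := by
  have hga := hov.lt
  have hup := hov.iff_of_ne a' hb.upper_mem (by rintro rfl; linarith [hb.lt])
    hb.lower_ne_upper.symm
  obtain ⟨z₀, hz₀, h₁, h₂⟩ := hb.exists_between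
  have hz₀g : z₀ ≠ g := by rintro rfl; linarith
  have hz₀a : z₀ ≠ a := by rintro rfl; exact lt_irrefl _ h₁
  refine ⟨hov.fst_mem, hb.upper_mem, (hup g hov.fst_mem).2.1 (hga.trans hb.lt),
    hcol ▸ hb.col_lower_ne, hb.col_upper_ne, hcol ▸ hb.col_ne,
    ⟨z₀, hz₀, (hov.iff_of_ne z₀ hz₀ hz₀g hz₀a g hov.fst_mem).2.1 (hga.trans h₁),
      (hup z₀ hz₀).2.1 h₂⟩, fun z hz h₁ h₂ => ?_⟩
  have hzg : z ≠ g := by rintro rfl; exact lt_irrefl _ h₁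
  have hza : z ≠ a := by rintro rfl; linarith [hov.lt']
  have hgz := (hov.iff_of_ne z hz hzg hza g hov.fst_mem).2.2 h₁
  have haz : v a < v z := by
    rcases lt_trichotomy (v z) (v a) with h | h | h
    · exact absurd ⟨hgz, h⟩ (hov.not_between hz)
    · exact absurd (hv hz hb.lower_mem h) hza
    · exact h
  exact hb.col_between z hz haz ((hup z hz).2.2 h₂)

lemma exists_of_overtakes_of_ne_upper (hb : IsBand F col v B a a') (hsa : s a' < s a)
    (hv : InjOn v F) (hno : ¬HasRainbowWindow F col v) (hov : Overtakes F v v' g h)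
    (hs : s h < s g) (hga' : g ≠ a') (hha' : h ≠ a') :
    ∃ b b', IsBand F col v' B b b' ∧ s b' < s b := by
  by_cases hag : a = g
  · subst hag
    exact ⟨a, a', hb.of_lower_overtakes hv hno hov hha', hsa⟩
  by_cases hah : a = h
  · subst hah
    rcases hb.col_eq (col g) with hcol | hcol | hcol
    · exact ⟨a, a', hb.of_overtakes_lower hov hcol, hsa⟩
    · exact ⟨g, a', hb.overtaker_of_overtakes_lower hv hov hcol, hsa.trans hs⟩
    · exact absurd (hb.hasRainbowWindow_of_adjacent_below hv hov.fst_mem hov.lt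
        (fun z hz => hov.not_between hz) hcol) hno
  exact ⟨a, a', hb.of_overtakes_of_ne hov hag hah hga'.symm hha'.symm, hsa⟩

/-- `s` is the order of the lines far to the right (their slopes): `s a' < s a` says that `a` and
`a'` have yet to cross. -/
lemma exists_of_overtakes (hb : IsBand F col v B a a') (hsa : s a' < s a)
    (hv : InjOn v F) (hno : ¬HasRainbowWindow F col v) (hov : Overtakes F v v' g h)
    (hs : s h < s g) : ∃ b b', IsBand F col v' B b b' ∧ s b' < s b := by
  by_cases hup : g ≠ a' ∧ h ≠ a'
  · exact hb.exists_of_overtakes_of_ne_upper hsa hv hno hov hs hup.1 hup.2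
  simp only [not_and_or, not_not] at hup
  have hga : g ≠ a := by
    rintro rfl
    rcases hup with rfl | rfl
    · exact hb.lower_ne_upper rfl
    · obtain ⟨z, hz, h₁, h₂⟩ := hb.exists_between
      exact hov.not_between hz ⟨h₁, h₂⟩
  have hha : h ≠ a := by
    rintro rfl
    rcases hup with rfl | rfl
    · exact lt_asymm hb.lt hov.lt
    · exact hb.lower_ne_upper rfl
  -- Reflecting all heights exchanges the two bounding lines of the band.
  obtain ⟨b', b, hb', hs'⟩ := hb.neg.exists_of_overtakes_of_ne_upper (s := -s) (neg_lt_neg hsa)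
    (fun x hx y hy hxy => hv hx hy (neg_inj.1 hxy)) (fun hr => hno hr.of_neg) hov.neg
    (neg_lt_neg hs) hha hga
  exact ⟨b, b', neg_neg v' ▸ hb'.neg, neg_lt_neg_iff.1 hs'⟩

end IsBand

lemma exists_rainbow_triple (hv : InjOn v F) {p q r : α} (hp : p ∈ F) (hq : q ∈ F) (hr : r ∈ F)
    (hpq : col p ≠ col q) (hpr : col p ≠ col r) (hqr : col q ≠ col r) :
    ∃ u ∈ F, ∃ z ∈ F, ∃ w ∈ F, v u < v z ∧ v z < v w ∧
      col u ≠ col z ∧ col u ≠ col w ∧ col z ≠ col w := by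
  have hne : ∀ {x y}, x ∈ F → y ∈ F → col x ≠ col y → v x ≠ v y :=
    fun hx hy hc he => hc (congrArg col (hv hx hy he))
  wlog hpq' : v p < v q generalizing p q
  · exact this hq hp hpq.symm hqr hpr ((hne hq hp hpq.symm).lt_of_le (not_lt.1 hpq'))
  rcases (hne hr hp hpr.symm).lt_or_gt with hrp | hpr'
  · exact ⟨r, hr, p, hp, q, hq, hrp, hpq', hpr.symm, hqr.symm, hpq⟩
  rcases (hne hr hq hqr.symm).lt_or_gt with hrq | hqr'
  · exact ⟨p, hp, r, hr, q, hq, hpr', hrq, hpr, hpq, hqr.symm⟩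
  · exact ⟨p, hp, q, hq, r, hr, hpq', hqr', hpq, hpr, hqr⟩

/-- A rainbow triple of minimal width is a band. -/
lemma exists_isBand (hv : InjOn v F) (hcolors : ∀ i, ∃ f ∈ F, col f = i) :
    ∃ B a a', IsBand F col v B a a' := by
  classical
  let T := (F ×ˢ F ×ˢ F).filter fun t : α × α × α => v t.1 < v t.2.1 ∧ v t.2.1 < v t.2.2 ∧
    col t.1 ≠ col t.2.1 ∧ col t.1 ≠ col t.2.2 ∧ col t.2.1 ≠ col t.2.2
  have hT : ∀ {u z w}, (u, z, w) ∈ T ↔ u ∈ F ∧ z ∈ F ∧ w ∈ F ∧ v u < v z ∧ v z < v w ∧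
      col u ≠ col z ∧ col u ≠ col w ∧ col z ≠ col w := by
    simp [T, and_assoc]
  obtain ⟨p, hp, hpc⟩ := hcolors 0
  obtain ⟨q, hq, hqc⟩ := hcolors 1
  obtain ⟨r, hr, hrc⟩ := hcolors 2
  obtain ⟨u, hu, z, hz, w, hw, htriple⟩ :=
    exists_rainbow_triple (col := col) hv hp hq hr (by rw [hpc, hqc]; decide)
      (by rw [hpc, hrc]; decide) (by rw [hqc, hrc]; decide)
  obtain ⟨⟨u, z, w⟩, hmem, hmin⟩ :=
    T.exists_min_image (fun t => v t.2.2 - v t.1) ⟨(u, z, w), hT.2 ⟨hu, hz, hw, htriple⟩⟩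
  obtain ⟨hu, hz, hw, huz, hzw, hcuz, hcuw, hczw⟩ := hT.1 hmem
  have hshorter : ∀ {u' z' w'}, (u', z', w') ∈ T → v w' - v u' < v w - v u → False :=
    fun ht hlt => (hmin _ ht).not_gt hlt
  refine ⟨col z, u, w, ⟨hu, hw, huz.trans hzw, hcuz, hczw.symm, hcuw, ⟨z, hz, huz, hzw⟩,
    fun y hy h₁ h₂ => ?_⟩⟩
  by_contra hyz
  have hyz' : v y ≠ v z := fun e => hyz (congrArg col (hv hy hz e))
  rcases (by omega : col y = col u ∨ col y = col w) with hc | hc <;>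
    rcases hyz'.lt_or_gt with hlt | hlt
  · exact hshorter (hT.2 ⟨hy, hz, hw, hlt, hzw, hyz, hc ▸ hcuw, hczw⟩) (by linarith)
  · exact hshorter (hT.2 ⟨hz, hy, hw, hlt, h₂, Ne.symm hyz, hczw, hc ▸ hcuw⟩) (by linarith)
  · exact hshorter (hT.2 ⟨hu, hy, hz, h₁, hlt, hc ▸ hcuw, hcuz, hyz⟩) (by linarith)
  · exact hshorter (hT.2 ⟨hu, hz, hy, huz, hlt, hcuz, hc ▸ hcuw, hc ▸ hczw⟩) (by linarith)

lemma lt_iff_lt_of_forall_ne {f g : ℝ → ℝ} {x x' : ℝ} (hxx' : x ≤ x')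
    (hf : ContinuousOn f (Icc x x')) (hg : ContinuousOn g (Icc x x'))
    (hne : ∀ y ∈ Icc x x', f y ≠ g y) : f x < g x ↔ f x' < g x' := by
  have hd : ContinuousOn (fun y => g y - f y) (Icc x x') := hg.sub hf
  constructor
  · intro h
    by_contra h'
    obtain ⟨y, hy, hy0⟩ := intermediate_value_Icc' hxx' hd
      (show (0 : ℝ) ∈ Icc (g x' - f x') (g x - f x) from ⟨by linarith [not_lt.1 h'], by linarith⟩)
    exact hne y hy (sub_eq_zero.1 hy0).symm
  · intro h
    by_contra h'
    obtain ⟨y, hy, hy0⟩ := intermediate_value_Icc hxx' hd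
      (show (0 : ℝ) ∈ Icc (g x - f x) (g x' - f x') from ⟨by linarith [not_lt.1 h'], by linarith⟩)
    exact hne y hy (sub_eq_zero.1 hy0).symm

lemma slope_lt_of_lt_of_eq {p q p' q' x y : ℝ} (hxy : x < y)
    (hlt : p * x + q < p' * x + q') (heq : p * y + q = p' * y + q') : p' < p := by
  nlinarith

lemma exists_crossing {p q p' q' : ℝ} (h : p ≠ p') : ∃ y, p * y + q = p' * y + q' :=
  ⟨(q' - q) / (p - p'), by field_simp [sub_ne_zero.2 h]; ring⟩

lemma exists_crossing_gt {p q p' q' x : ℝ} (hlt : p * x + q < p' * x + q') (hp : p' < p) :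
    ∃ y, x < y ∧ p * y + q = p' * y + q' := by
  obtain ⟨y, hy⟩ := exists_crossing (q := q) (q' := q') hp.ne'
  exact ⟨y, by nlinarith, hy⟩

lemma exists_inter_Ioc_eq_singleton {S : Set ℝ} (hS : S.Finite) {x : ℝ}
    (hx : (S ∩ Ioi x).Nonempty) : ∃ x₁ x', x < x₁ ∧ x₁ < x' ∧ S ∩ Ioc x x' = {x₁} := by
  obtain ⟨x₁, ⟨hx₁S, hxx₁⟩, hmin⟩ := exists_min_image _ id (hS.inter_of_left _) hx
  have hnhds : (S \ {x₁})ᶜ ∈ nhds x₁ := (hS.sdiff).isClosed.compl_mem_nhds (by simp)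
  obtain ⟨x', hx', hsub⟩ := mem_nhdsGT_iff_exists_Ioc_subset.1 (nhdsWithin_le_nhds hnhds)
  refine ⟨x₁, x', hxx₁, hx', Subset.antisymm (fun y ⟨hyS, hxy, hyx'⟩ => ?_) ?_⟩
  · by_contra hne
    rcases lt_or_gt_of_ne hne with h | h
    · exact (hmin y ⟨hyS, hxy⟩).not_gt h
    · exact hsub ⟨h, hyx'⟩ ⟨hyS, hne⟩
  · rintro _ rfl
    exact ⟨hx₁S, hxx₁, hx'.le⟩

section Sweep

variable (F) (m c : α → ℝ)

def crossings : Set ℝ := {x | ∃ f ∈ F, ∃ g ∈ F, f ≠ g ∧ m f * x + c f = m g * x + c g}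

structure IsGenericSweep : Prop where
  slope_ne : ∀ f ∈ F, ∀ g ∈ F, f ≠ g → m f ≠ m g
  eq_of_crossing_eq : ∀ x, ∀ f ∈ F, ∀ g ∈ F, ∀ u ∈ F, ∀ w ∈ F, f ≠ g → u ≠ w →
    m f * x + c f = m g * x + c g → m u * x + c u = m w * x + c w →
    (u = f ∧ w = g) ∨ (u = g ∧ w = f)

variable {F m c}

lemma crossings_finite (hm : ∀ f ∈ F, ∀ g ∈ F, f ≠ g → m f ≠ m g) :
    (crossings F m c).Finite := by
  refine (F.offDiag.finite_toSet.image fun p => (c p.2 - c p.1) / (m p.1 - m p.2)).subset ?_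
  rintro x ⟨f, hf, g, hg, hfg, hx⟩
  refine ⟨(f, g), Finset.mem_offDiag.2 ⟨hf, hg, hfg⟩, ?_⟩
  have := sub_ne_zero.2 (hm f hf g hg hfg)
  field_simp
  linarith

lemma injOn_of_notMem_crossings {x : ℝ} (hx : x ∉ crossings F m c) :
    InjOn (fun f => m f * x + c f) F :=
  fun f hf g hg h => by_contra fun hfg => hx ⟨f, hf, g, hg, hfg, h⟩

lemma IsGenericSweep.exists_overtakes (hF : IsGenericSweep F m c) {x : ℝ}
    (hx : x ∉ crossings F m c) (hnext : (crossings F m c ∩ Ioi x).Nonempty) :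
    ∃ x' g h, x' ∉ crossings F m c ∧
      (crossings F m c ∩ Ioi x').ncard < (crossings F m c ∩ Ioi x).ncard ∧
      Overtakes F (fun f => m f * x + c f) (fun f => m f * x' + c f) g h ∧ m h < m g := by
  have hS := crossings_finite (c := c) hF.slope_ne
  obtain ⟨x₁, x', hxx₁, hx₁x', hIoc⟩ := exists_inter_Ioc_eq_singleton hS hnext
  have hx₁ : x₁ ∈ crossings F m c ∩ Ioc x x' := hIoc ▸ rfl
  obtain ⟨g, hg, h, hh, hgh, heq⟩ := hx₁.1
  wlog hlt : m g * x + c g < m h * x + c h generalizing g h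
  · exact this h hh g hg hgh.symm heq.symm
      ((Ne.symm fun e => hx ⟨g, hg, h, hh, hgh, e⟩).lt_of_le (not_lt.1 hlt))
  have hslope := slope_lt_of_lt_of_eq hxx₁ hlt heq
  have hxx' := hxx₁.trans hx₁x'
  have hx' : x' ∉ crossings F m c := fun h' => hx₁x'.ne' (hIoc.subset ⟨h', hxx', le_rfl⟩)
  refine ⟨x', g, h, hx', ncard_lt_ncard ⟨fun y hy => ⟨hy.1, hxx'.trans hy.2⟩, fun hsub => ?_⟩
    (hS.inter_of_left _), ⟨hg, hh, hlt, by nlinarith, fun u hu hug huh w hw => ?_⟩, hslope⟩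
  · exact (hsub ⟨hx₁.1, hxx₁⟩).2.not_gt hx₁x'
  rcases eq_or_ne u w with rfl | huw
  · simp
  have hne : ∀ y ∈ Icc x x', m u * y + c u ≠ m w * y + c w := by
    intro y hy he
    have hyS : y ∈ crossings F m c := ⟨u, hu, w, hw, huw, he⟩
    obtain rfl : y = x₁ := hIoc.subset ⟨hyS, hy.1.lt_of_ne (by rintro rfl; exact hx hyS), hy.2⟩
    rcases hF.eq_of_crossing_eq y g hg h hh u hu w hw hgh huw heq he with h' | h'
    exacts [hug h'.1, huh h'.1]
  have hcont : ∀ f, ContinuousOn (fun y => m f * y + c f) (Icc x x') := fun f => by fun_prop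
  exact ⟨lt_iff_lt_of_forall_ne hxx'.le (hcont u) (hcont w) hne,
    lt_iff_lt_of_forall_ne hxx'.le (hcont w) (hcont u) fun y hy e => hne y hy e.symm⟩

lemma IsGenericSweep.not_isBand (hF : IsGenericSweep F m c)
    (hno : ∀ x, ¬HasRainbowWindow F col fun f => m f * x + c f) {x : ℝ}
    (hx : x ∉ crossings F m c) {B : Fin 3} {a a' : α}
    (hb : IsBand F col (fun f => m f * x + c f) B a a') (hsa : m a' < m a) : False := by
  induction hn : (crossings F m c ∩ Ioi x).ncard using Nat.strong_induction_on
    generalizing x a a' with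
  | _ n ih =>
  obtain ⟨y, hxy, hy⟩ := exists_crossing_gt hb.lt hsa
  obtain ⟨x', g, h, hx', hlt, hov, hs⟩ := hF.exists_overtakes hx
    ⟨y, ⟨a, hb.lower_mem, a', hb.upper_mem, hb.lower_ne_upper, hy⟩, hxy⟩
  obtain ⟨b, b', hb', hs'⟩ :=
    hb.exists_of_overtakes hsa (injOn_of_notMem_crossings hx) (hno x) hov hs
  exact ih _ (hn ▸ hlt) hx' hb' hs' rfl

theorem IsGenericSweep.exists_hasRainbowWindow (hF : IsGenericSweep F m c)
    (hcolors : ∀ i, ∃ f ∈ F, col f = i) :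
    ∃ x, HasRainbowWindow F col fun f => m f * x + c f := by
  by_contra! hno
  obtain ⟨x, hx⟩ : ∃ x, ∀ y ∈ crossings F m c, x < y := by
    obtain ⟨b, hb⟩ := (crossings_finite (c := c) hF.slope_ne).bddBelow
    exact ⟨b - 1, fun y hy => by linarith [hb hy]⟩
  have hxS : x ∉ crossings F m c := fun h => lt_irrefl x (hx x h)
  obtain ⟨B, a, a', hb⟩ := exists_isBand (injOn_of_notMem_crossings hxS) hcolors
  -- `a` and `a'` cross somewhere, necessarily to the right of `x`.
  obtain ⟨y, hy⟩ := exists_crossing (q := c a) (q' := c a')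
    (hF.slope_ne a hb.lower_mem a' hb.upper_mem hb.lower_ne_upper)
  have hxy := hx y ⟨a, hb.lower_mem, a', hb.upper_mem, hb.lower_ne_upper, hy⟩
  exact hF.not_isBand hno hxS hb (slope_lt_of_lt_of_eq hxy hb.lt hy)

end Sweep

section Geometry

/-- The point at height `y` on the sweep line of direction `(t, 1)` through `(x, 0)`. -/
def sweepPoint (t x : ℝ) : ℝ →ᵃ[ℝ] ℝ × ℝ := AffineMap.lineMap (x, 0) (x + t, 1)

lemma sweepPoint_apply (t x y : ℝ) : sweepPoint t x y = (x + t * y, y) := by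
  ext <;> simp [sweepPoint, AffineMap.lineMap_apply]
  ring

lemma sweepPoint_surjective (t : ℝ) (p : ℝ × ℝ) : ∃ x y, sweepPoint t x y = p :=
  ⟨p.1 - t * p.2, p.2, by simp [sweepPoint_apply]⟩

lemma segment_sweepPoint (t x y₁ y₂ : ℝ) :
    segment ℝ (sweepPoint t x y₁) (sweepPoint t x y₂) = sweepPoint t x '' uIcc y₁ y₂ := by
  rw [← segment_eq_uIcc, image_segment]

lemma sweepPoint_mem_iff {t a b k : ℝ} (h : a * t + b ≠ 0) (x y : ℝ) :
    sweepPoint t x y ∈ {p : ℝ × ℝ | a * p.1 + b * p.2 = k} ↔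
      y = -a / (a * t + b) * x + k / (a * t + b) := by
  rw [sweepPoint_apply, div_mul_eq_mul_div, ← add_div, eq_div_iff h]
  change a * (x + t * y) + b * y = k ↔ _
  constructor <;> intro h' <;> linarith

lemma exists_mul_add_ne_zero (S : Finset (ℝ × ℝ)) (hS : (0 : ℝ × ℝ) ∉ S) :
    ∃ t : ℝ, ∀ p ∈ S, p.1 * t + p.2 ≠ 0 := by
  obtain ⟨t, ht⟩ := Infinite.exists_notMem_finset (S.image fun p => -p.2 / p.1)
  refine ⟨t, fun p hp h0 => ?_⟩
  rcases eq_or_ne p.1 0 with h1 | h1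
  · have hp0 : p = 0 := Prod.ext h1 (by simpa [h1] using h0)
    exact hS (hp0 ▸ hp)
  · exact ht (Finset.mem_image.2 ⟨p, hp, by field_simp; linarith⟩)

def vertices (L : Finset (Set (ℝ × ℝ))) : Set (ℝ × ℝ) :=
  {p | ∃ ℓ ∈ L, ∃ ℓ' ∈ L, ℓ ≠ ℓ' ∧ p ∈ ℓ ∧ p ∈ ℓ'}

def IsSweepGraph (L : Finset (Set (ℝ × ℝ))) (t : ℝ) (m c : Set (ℝ × ℝ) → ℝ) : Prop :=
  ∀ ℓ ∈ L, ∀ x y, sweepPoint t x y ∈ ℓ ↔ y = m ℓ * x + c ℓ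

variable {L : Finset (Set (ℝ × ℝ))} {t : ℝ} {m c : Set (ℝ × ℝ) → ℝ} {ℓ ℓ' : Set (ℝ × ℝ)}

namespace IsSweepGraph

lemma slope_ne (hL : IsSweepGraph L t m c) (hℓ : ℓ ∈ L) (hℓ' : ℓ' ∈ L) (hne : ℓ ≠ ℓ')
    (hmeet : (ℓ ∩ ℓ').Nonempty) : m ℓ ≠ m ℓ' := by
  intro hm
  obtain ⟨p, hp, hp'⟩ := hmeet
  obtain ⟨x, y, rfl⟩ := sweepPoint_surjective t p
  have hc : c ℓ = c ℓ' := by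
    have h₁ := (hL ℓ hℓ x y).1 hp
    have h₂ := (hL ℓ' hℓ' x y).1 hp'
    rw [hm] at h₁
    linarith
  apply hne
  ext q
  obtain ⟨x', y', rfl⟩ := sweepPoint_surjective t q
  rw [hL ℓ hℓ, hL ℓ' hℓ', hm, hc]

lemma eq_of_mem_of_mem (hL : IsSweepGraph L t m c) (hℓ : ℓ ∈ L) (hℓ' : ℓ' ∈ L)
    (hm : m ℓ ≠ m ℓ') {p q : ℝ × ℝ} (hp : p ∈ ℓ) (hp' : p ∈ ℓ') (hq : q ∈ ℓ) (hq' : q ∈ ℓ') :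
    p = q := by
  obtain ⟨x, y, rfl⟩ := sweepPoint_surjective t p
  obtain ⟨x', y', rfl⟩ := sweepPoint_surjective t q
  have h₁ := (hL ℓ hℓ x y).1 hp
  have h₂ := (hL ℓ' hℓ' x y).1 hp'
  have h₃ := (hL ℓ hℓ x' y').1 hq
  have h₄ := (hL ℓ' hℓ' x' y').1 hq'
  have hx : x = x' := by
    apply mul_left_cancel₀ (sub_ne_zero.2 hm)
    linarith
  subst hx
  rw [h₁, h₃]

lemma segment_inter_nonempty_iff (hL : IsSweepGraph L t m c) (hℓ : ℓ ∈ L) (x y₁ y₂ : ℝ) :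
    (segment ℝ (sweepPoint t x y₁) (sweepPoint t x y₂) ∩ ℓ).Nonempty ↔
      m ℓ * x + c ℓ ∈ uIcc y₁ y₂ := by
  rw [segment_sweepPoint]
  constructor
  · rintro ⟨_, ⟨y, hy, rfl⟩, hyℓ⟩
    rwa [(hL ℓ hℓ x y).1 hyℓ] at hy
  · exact fun h => ⟨_, ⟨_, h, rfl⟩, (hL ℓ hℓ x _).2 rfl⟩

lemma isGenericSweep (hL : IsSweepGraph L t m c)
    (hnotpar : ∀ ℓ₁ ∈ L, ∀ ℓ₂ ∈ L, ℓ₁ ≠ ℓ₂ → (ℓ₁ ∩ ℓ₂).Nonempty)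
    (hsimple : ∀ p : ℝ × ℝ, ∀ ℓ₁ ∈ L, ∀ ℓ₂ ∈ L, ∀ ℓ₃ ∈ L,
      p ∈ ℓ₁ → p ∈ ℓ₂ → p ∈ ℓ₃ → ℓ₁ = ℓ₂ ∨ ℓ₁ = ℓ₃ ∨ ℓ₂ = ℓ₃)
    (hsep : ∀ x y y', sweepPoint t x y ∈ vertices L → sweepPoint t x y' ∈ vertices L → y = y') :
    IsGenericSweep L m c where
  slope_ne ℓ hℓ ℓ' hℓ' hne := hL.slope_ne hℓ hℓ' hne (hnotpar ℓ hℓ ℓ' hℓ' hne)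
  eq_of_crossing_eq x f hf g hg u hu w hw hfg huw hx hx' := by
    have hy : m f * x + c f = m u * x + c u :=
      hsep x _ _ ⟨f, hf, g, hg, hfg, (hL f hf x _).2 rfl, (hL g hg x _).2 hx⟩
        ⟨u, hu, w, hw, huw, (hL u hu x _).2 rfl, (hL w hw x _).2 hx'⟩
    have hpf := (hL f hf x _).2 rfl
    have hpg := (hL g hg x _).2 hx
    have hpu := (hL u hu x _).2 hy
    have hpw := (hL w hw x _).2 (hy.trans hx')
    have := hsimple _ f hf g hg u hu hpf hpg hpu
    have := hsimple _ f hf g hg w hw hpf hpg hpw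
    grind

end IsSweepGraph

lemma exists_isSweepGraph (hline : ∀ ℓ ∈ L, ∃ a b c : ℝ, (a, b) ≠ (0, 0) ∧
      ℓ = {p : ℝ × ℝ | a * p.1 + b * p.2 = c}) (P : Finset (ℝ × ℝ)) :
    ∃ t m c, IsSweepGraph L t m c ∧
      ∀ x y y', sweepPoint t x y ∈ P → sweepPoint t x y' ∈ P → y = y' := by
  classical
  choose! A B C hAB hℓ using hline
  obtain ⟨t, ht⟩ := exists_mul_add_ne_zero (L.image (fun ℓ => (A ℓ, B ℓ)) ∪
    P.offDiag.image fun pq => (pq.1.2 - pq.2.2, pq.2.1 - pq.1.1)) (by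
      simp only [Finset.mem_union, Finset.mem_image, Finset.mem_offDiag, not_or, not_exists,
        not_and]
      refine ⟨fun ℓ hℓ h => hAB ℓ hℓ h, ?_⟩
      rintro ⟨p, q⟩ ⟨-, -, hpq⟩ h
      simp only [Prod.ext_iff, Prod.fst_zero, Prod.snd_zero, sub_eq_zero] at h
      exact hpq (Prod.ext h.2.symm h.1))
  refine ⟨t, fun ℓ => -A ℓ / (A ℓ * t + B ℓ), fun ℓ => C ℓ / (A ℓ * t + B ℓ),
    fun ℓ hℓL x y => ?_, fun x y y' hy hy' => ?_⟩
  · have hD : A ℓ * t + B ℓ ≠ 0 :=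
      ht _ (Finset.mem_union_left _ (Finset.mem_image_of_mem _ hℓL))
    conv_lhs => rw [hℓ ℓ hℓL]
    exact sweepPoint_mem_iff hD x y
  · by_contra hne
    have hpq : sweepPoint t x y ≠ sweepPoint t x y' := fun h => hne (by
      rw [sweepPoint_apply, sweepPoint_apply] at h
      exact (Prod.ext_iff.1 h).2)
    refine ht _ (Finset.mem_union_right _ (Finset.mem_image.2
      ⟨(_, _), Finset.mem_offDiag.2 ⟨hy, hy', hpq⟩, rfl⟩)) ?_
    simp only [sweepPoint_apply]
    ring

lemma exists_isSweepGraph_separating_vertices (hline : ∀ ℓ ∈ L, ∃ a b c : ℝ, (a, b) ≠ (0, 0) ∧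
      ℓ = {p : ℝ × ℝ | a * p.1 + b * p.2 = c})
    (hnotpar : ∀ ℓ₁ ∈ L, ∀ ℓ₂ ∈ L, ℓ₁ ≠ ℓ₂ → (ℓ₁ ∩ ℓ₂).Nonempty) :
    ∃ t m c, IsSweepGraph L t m c ∧
      ∀ x y y', sweepPoint t x y ∈ vertices L → sweepPoint t x y' ∈ vertices L → y = y' := by
  classical
  choose! V hV using hnotpar
  obtain ⟨t, m, c, hL, hP⟩ := exists_isSweepGraph hline (L.offDiag.image fun p => V p.1 p.2)
  have hvert : ∀ p ∈ vertices L, p ∈ L.offDiag.image fun p => V p.1 p.2 := by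
    rintro p ⟨ℓ, hℓ, ℓ', hℓ', hne, hp, hp'⟩
    refine Finset.mem_image.2 ⟨(ℓ, ℓ'), Finset.mem_offDiag.2 ⟨hℓ, hℓ', hne⟩, ?_⟩
    obtain ⟨hV₁, hV₂⟩ := hV ℓ hℓ ℓ' hℓ' hne
    exact hL.eq_of_mem_of_mem hℓ hℓ' (hL.slope_ne hℓ hℓ' hne ⟨p, hp, hp'⟩) hV₁ hV₂ hp hp'
  exact ⟨t, m, c, hL, fun x y y' hy hy' => hP x y y' (hvert _ hy) (hvert _ hy')⟩

end Geometry

end RainbowSegment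

open RainbowSegment

/-- **A segment crossing exactly one line of each color.**
For every simple arrangement of lines colored with colors `Fin 3`
(0 = red, 1 = green, 2 = blue), each color appearing at least once, there is a
closed segment `[p, q]` meeting exactly one line of each color. -/
theorem stmt_3
    (L : Finset (Set (ℝ × ℝ)))
    (color : Set (ℝ × ℝ) → Fin 3)
    (hline : ∀ ℓ ∈ L, ∃ a b c : ℝ, (a, b) ≠ (0, 0) ∧
      ℓ = {p : ℝ × ℝ | a * p.1 + b * p.2 = c})
    (hcolors : ∀ i : Fin 3, ∃ ℓ ∈ L, color ℓ = i)
    (hnotpar : ∀ ℓ₁ ∈ L, ∀ ℓ₂ ∈ L, ℓ₁ ≠ ℓ₂ → (ℓ₁ ∩ ℓ₂).Nonempty)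
    (hsimple : ∀ p : ℝ × ℝ, ∀ ℓ₁ ∈ L, ∀ ℓ₂ ∈ L, ∀ ℓ₃ ∈ L,
      p ∈ ℓ₁ → p ∈ ℓ₂ → p ∈ ℓ₃ → ℓ₁ = ℓ₂ ∨ ℓ₁ = ℓ₃ ∨ ℓ₂ = ℓ₃) :
    ∃ p q : ℝ × ℝ, ∀ i : Fin 3,
      ∃! ℓ : Set (ℝ × ℝ), ℓ ∈ L ∧ color ℓ = i ∧ (segment ℝ p q ∩ ℓ).Nonempty := by
  obtain ⟨t, m, c, hL, hsep⟩ := exists_isSweepGraph_separating_vertices hline hnotpar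
  obtain ⟨x, y₁, y₂, hwin⟩ :=
    (hL.isGenericSweep hnotpar hsimple hsep).exists_hasRainbowWindow hcolors
  refine ⟨sweepPoint t x y₁, sweepPoint t x y₂, fun i =>
    (existsUnique_congr fun ℓ => ?_).2 (hwin i)⟩
  exact and_congr_right fun hℓ => and_congr_right fun _ =>
    hL.segment_inter_nonempty_iff hℓ x y₁ y₂
end

section
/- Let S be a finite set of points in ℝ², colored red, green, and blue, with at least one point of each color, in general position (no three points of S are collinear) and with pairwise distinct x-coordinates. Then there exists a double wedge containing exactly one red point, exactly one green point, and exactly one blue point of S: that is, there exist real numbers m₁, c₁, m₂, c₂ with m₁ ≠ m₂ such that for each color, exactly one point (x, y) of S of that color satisfies (y − m₁x − c₁)(y − m₂x − c₂) < 0. -/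
/-!
Order the points by their residual `y - m x` for a slope `m` avoiding the finitely many slopes
of segments of `S`. If for some such `m` three consecutive points have pairwise distinct colours,
a thin strip of slope `m` around them, with one boundary line slightly tilted, is the required
double wedge.

Suppose no slope gives such a rainbow triple; let `γ` be the leftmost point and `c` its colour.
Crossing one critical slope swaps pairwise disjoint pairs of consecutive points (no three points
are collinear). A point of colour `c` cannot swap with a member of a consecutive pair of the two
other colours, as the three would be rainbow. Hence the existence of a pair of points of the two
other colours with no point of colour `c` between them survives every critical slope, and so
does the position of such a pair relative to `γ`. Near the slope of a segment joining points of
those colours such a pair exists, so it also exists at very negative slopes, where `γ` is lowest;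
there it lies above `γ`, and it stays above `γ` up to very positive slopes, where `γ` is highest.
-/

open Set Filter Topology

namespace DoubleWedge

variable {α κ : Type*}

lemma mem_uIoo_iff_mul_neg {x a b : ℝ} : x ∈ uIoo a b ↔ (x - a) * (x - b) < 0 := by
  rcases le_total a b with h | h
  · rw [uIoo_of_le h, mem_Ioo]
    constructor
    · rintro ⟨h₁, h₂⟩; nlinarith
    · intro h'; constructor <;> nlinarith
  · rw [uIoo_of_ge h, mem_Ioo]
    constructor
    · rintro ⟨h₁, h₂⟩; nlinarith
    · intro h'; constructor <;> nlinarith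

section Order

variable (r r' : α → ℝ) (S : Finset α) (col : α → κ)

def Adjacent (a b : α) : Prop := ∀ q ∈ S, r q ∉ uIoo (r a) (r b)

def Rainbow : Prop :=
  ∃ a ∈ S, ∃ b ∈ S, ∃ d ∈ S, Adjacent r S a b ∧ Adjacent r S b d ∧ r b ∈ uIoo (r a) (r d) ∧
    col a ≠ col b ∧ col a ≠ col d ∧ col b ≠ col d

def Crosses (p q : α) : Prop := (r p - r q) * (r' p - r' q) < 0

def IsAvoidingPair (c : κ) (u v : α) : Prop :=
  col u ≠ col v ∧ col u ≠ c ∧ col v ≠ c ∧ ∀ q ∈ S, col q = c → r q ∉ uIoo (r u) (r v)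

variable {r r' S col} {a b d p q u v : α} {c : κ}

lemma Adjacent.symm (h : Adjacent r S a b) : Adjacent r S b a := by
  simpa only [Adjacent, uIoo_comm] using h

lemma IsAvoidingPair.symm (h : IsAvoidingPair r S col c u v) : IsAvoidingPair r S col c v u :=
  ⟨h.1.symm, h.2.2.1, h.2.1, by simpa only [uIoo_comm] using h.2.2.2⟩

lemma Crosses.symm (h : Crosses r r' p q) : Crosses r r' q p := by
  unfold Crosses at *
  linarith [show (r q - r p) * (r' q - r' p) = (r p - r q) * (r' p - r' q) by ring]

lemma Crosses.ne (h : Crosses r r' p q) : p ≠ q := by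
  rintro rfl; simp [Crosses] at h

lemma lt_of_not_crosses (h : r p < r q) (hc : ¬Crosses r r' p q) (hne : r' p ≠ r' q) :
    r' p < r' q := by
  have := not_lt.1 hc
  exact hne.lt_or_gt.resolve_right fun h' => by nlinarith

lemma mem_uIoo_of_not_crosses (h : r' q ∈ uIoo (r' a) (r' b)) (ha : ¬Crosses r r' q a)
    (hb : ¬Crosses r r' q b) (hqa : r q ≠ r a) (hqb : r q ≠ r b) : r q ∈ uIoo (r a) (r b) := by
  rw [mem_uIoo_iff_mul_neg] at h ⊢
  replace ha := not_lt.1 ha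
  replace hb := not_lt.1 hb
  have ha' := lt_of_le_of_ne ha (mul_ne_zero (sub_ne_zero.2 hqa) (left_ne_zero_of_mul h.ne)).symm
  have hb' := lt_of_le_of_ne hb (mul_ne_zero (sub_ne_zero.2 hqb) (right_ne_zero_of_mul h.ne)).symm
  nlinarith [mul_pos ha' hb']

lemma mem_uIoo_of_adjacent_of_adjacent (hr : InjOn r S) (ha : a ∈ S) (hb : b ∈ S) (hd : d ∈ S)
    (hab : Adjacent r S a b) (had : Adjacent r S a d) (hba : b ≠ a) (hda : d ≠ a) (hbd : b ≠ d) :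
    r a ∈ uIoo (r b) (r d) := by
  have h₁ := hab d hd
  have h₂ := had b hb
  rw [mem_uIoo_iff_mul_neg, not_lt] at h₁ h₂
  rw [mem_uIoo_iff_mul_neg]
  refine lt_of_le_of_ne ?_ (mul_ne_zero (sub_ne_zero.2 (hr.ne ha hb hba.symm))
    (sub_ne_zero.2 (hr.ne ha hd hda.symm)))
  have := sq_pos_of_ne_zero (sub_ne_zero.2 (hr.ne hb hd hbd))
  nlinarith [mul_nonneg h₁ h₂]

lemma exists_adjacent_isAvoidingPair (hr : InjOn r S) (hu : u ∈ S) (hv : v ∈ S)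
    (huv : r u < r v) (h : IsAvoidingPair r S col c u v) :
    ∃ a ∈ S, ∃ b ∈ S, r u ≤ r a ∧ r a < r b ∧ Adjacent r S a b ∧ IsAvoidingPair r S col c a b := by
  classical
  obtain ⟨a, ha, ha_max⟩ := (S.filter fun q => col q = col u ∧ r q < r v).exists_max_image r
    ⟨u, Finset.mem_filter.2 ⟨hu, rfl, huv⟩⟩
  rw [Finset.mem_filter] at ha
  obtain ⟨b, hb, hb_min⟩ := (S.filter fun q => r a < r q).exists_min_image r
    ⟨v, Finset.mem_filter.2 ⟨hv, ha.2.2⟩⟩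
  rw [Finset.mem_filter] at hb
  have hua : r u ≤ r a := ha_max u (Finset.mem_filter.2 ⟨hu, rfl, huv⟩)
  have hadj : Adjacent r S a b := fun q hq hqI => by
    rw [uIoo_of_lt hb.2] at hqI
    exact (hb_min q (Finset.mem_filter.2 ⟨hq, hqI.1⟩)).not_gt hqI.2
  have hb_col : col b ≠ col u ∧ col b ≠ c := by
    rcases (hb_min v (Finset.mem_filter.2 ⟨hv, ha.2.2⟩)).lt_or_eq with hbv | hbv
    · refine ⟨fun hbu => (ha_max b (Finset.mem_filter.2 ⟨hb.1, hbu, hbv⟩)).not_gt hb.2,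
        fun hbc => h.2.2.2 b hb.1 hbc ?_⟩
      rw [uIoo_of_lt huv]
      exact ⟨hua.trans_lt hb.2, hbv⟩
    · obtain rfl := hr hb.1 hv hbv
      exact ⟨h.1.symm, h.2.2.1⟩
  exact ⟨a, ha.1, b, hb.1, hua, hb.2, hadj, ha.2.1 ▸ hb_col.1.symm, ha.2.1 ▸ h.2.1, hb_col.2,
    fun q hq _ => hadj q hq⟩

section Partners

variable (hr : InjOn r S) (hr' : InjOn r' S)
  (hpart : ∀ p ∈ S, ∀ q ∈ S, ∀ q' ∈ S, Crosses r r' p q → Crosses r r' p q' → q = q')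
include hr' hpart

lemma adjacent_of_crosses (hp : p ∈ S) (hq : q ∈ S) (h : Crosses r r' p q) : Adjacent r S p q := by
  wlog hpq : r p < r q generalizing p q
  · have hne : r p ≠ r q := fun he => by simp [Crosses, he] at h
    exact (this hq hp h.symm (lt_of_le_of_ne (not_lt.1 hpq) hne.symm)).symm
  intro z hz hzI
  rw [uIoo_of_lt hpq] at hzI
  have hzp : z ≠ p := by rintro rfl; exact hzI.1.false
  have hzq : z ≠ q := by rintro rfl; exact hzI.2.false
  have h₁ : r' p < r' z := lt_of_not_crosses hzI.1 (fun hc => hzq (hpart p hp z hz q hq hc h))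
    (hr'.ne hp hz hzp.symm)
  have h₂ : r' z < r' q := lt_of_not_crosses hzI.2
    (fun hc => hzp (hpart q hq z hz p hp hc.symm h.symm)) (hr'.ne hz hq hzq)
  unfold Crosses at h; nlinarith

include hr in
lemma not_crosses_of_adjacent (hno : ¬Rainbow r S col) (ha : a ∈ S) (hb : b ∈ S)
    (hab : Adjacent r S a b) (h : IsAvoidingPair r S col c a b) {g : α} (hg : g ∈ S)
    (hgc : col g = c) : ¬Crosses r r' g a ∧ ¬Crosses r r' g b := by
  have hga : g ≠ a := fun he => h.2.1 (he ▸ hgc)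
  have hgb : g ≠ b := fun he => h.2.2.1 (he ▸ hgc)
  have hab' : a ≠ b := fun he => h.1 (he ▸ rfl)
  constructor
  · intro hc
    have hag := (adjacent_of_crosses hr' hpart hg ha hc).symm
    exact hno ⟨g, hg, a, ha, b, hb, hag.symm, hab,
      mem_uIoo_of_adjacent_of_adjacent hr ha hg hb hag hab hga hab'.symm hgb,
      hgc ▸ h.2.1.symm, hgc ▸ h.2.2.1.symm, h.1⟩
  · intro hc
    have hbg := (adjacent_of_crosses hr' hpart hg hb hc).symm
    exact hno ⟨a, ha, b, hb, g, hg, hab, hbg,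
      mem_uIoo_of_adjacent_of_adjacent hr hb ha hg hab.symm hbg hab' hgb hga.symm,
      h.1, hgc ▸ h.2.1, hgc ▸ h.2.2.1⟩

include hr in
lemma exists_isAvoidingPair_of_not_rainbow (hno : ¬Rainbow r S col) (hu : u ∈ S) (hv : v ∈ S)
    (h : IsAvoidingPair r S col c u v) :
    ∃ a ∈ S, ∃ b ∈ S, IsAvoidingPair r' S col c a b ∧
      ∀ t ∈ S, col t = c → r t < r u → r t < r v → r' t < r' a ∧ r' t < r' b := by
  wlog huv : r u < r v generalizing u v
  · have hvu := lt_of_le_of_ne (not_lt.1 huv) (hr.ne hv hu fun he => h.1 (he ▸ rfl))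
    obtain ⟨a, ha, b, hb, hab, ht⟩ := this hv hu h.symm hvu
    exact ⟨a, ha, b, hb, hab, fun t ht' htc h₁ h₂ => ht t ht' htc h₂ h₁⟩
  obtain ⟨a, ha, b, hb, hua, hab, hadj, hpair⟩ := exists_adjacent_isAvoidingPair hr hu hv huv h
  have hnc : ∀ g ∈ S, col g = c → ¬Crosses r r' g a ∧ ¬Crosses r r' g b := fun g hg hgc =>
    not_crosses_of_adjacent hr hr' hpart hno ha hb hadj hpair hg hgc
  refine ⟨a, ha, b, hb, ⟨hpair.1, hpair.2.1, hpair.2.2.1, fun q hq hqc hqI => ?_⟩,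
    fun t ht htc htu _ => ?_⟩
  · have hqa : q ≠ a := fun he => hpair.2.1 (he ▸ hqc)
    have hqb : q ≠ b := fun he => hpair.2.2.1 (he ▸ hqc)
    exact hadj q hq (mem_uIoo_of_not_crosses hqI (hnc q hq hqc).1 (hnc q hq hqc).2
      (hr.ne hq ha hqa) (hr.ne hq hb hqb))
  · have hta : t ≠ a := fun he => hpair.2.1 (he ▸ htc)
    have htb : t ≠ b := fun he => hpair.2.2.1 (he ▸ htc)
    exact ⟨lt_of_not_crosses (htu.trans_le hua) (hnc t ht htc).1 (hr'.ne ht ha hta),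
      lt_of_not_crosses ((htu.trans_le hua).trans hab) (hnc t ht htc).2 (hr'.ne ht hb htb)⟩

end Partners

lemma lt_or_lt_of_adjacent_of_adjacent (hr : InjOn r S) (ha : a ∈ S) (hb : b ∈ S) (hd : d ∈ S)
    (hab : Adjacent r S a b) (hbd : Adjacent r S b d) (hb_mem : r b ∈ Ioo (r a) (r d))
    (hp : p ∈ S) (hpa : p ≠ a) (hpb : p ≠ b) (hpd : p ≠ d) : r p < r a ∨ r d < r p := by
  have h₁ := hab p hp
  have h₂ := hbd p hp
  rw [uIoo_of_lt hb_mem.1, mem_Ioo] at h₁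
  rw [uIoo_of_lt hb_mem.2, mem_Ioo] at h₂
  by_contra! h
  rcases (hr.ne hp hb hpb).lt_or_gt with h' | h'
  · exact h₁ ⟨h.1.lt_of_ne (hr.ne hp ha hpa).symm, h'⟩
  · exact h₂ ⟨h', h.2.lt_of_ne (hr.ne hp hd hpd)⟩

lemma exists_strip (hr : InjOn r S) (ha : a ∈ S) (hb : b ∈ S) (hd : d ∈ S) (hab : Adjacent r S a b)
    (hbd : Adjacent r S b d) (hb_mem : r b ∈ uIoo (r a) (r d)) :
    ∃ c₁ c₂ : ℝ, ∀ p ∈ S, (r p - c₁) * (r p - c₂) ≠ 0 ∧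
      ((r p - c₁) * (r p - c₂) < 0 ↔ p = a ∨ p = b ∨ p = d) := by
  wlog had : r a < r d generalizing a d
  · have hda := lt_of_le_of_ne (not_lt.1 had) fun he => by simp [he] at hb_mem
    obtain ⟨c₁, c₂, h⟩ := this hd ha hbd.symm hab.symm (uIoo_comm (r a) (r d) ▸ hb_mem) hda
    exact ⟨c₁, c₂, fun p hp => (h p hp).imp_right fun h' => h'.trans (by tauto)⟩
  rw [uIoo_of_lt had] at hb_mem
  have hout : ∀ p ∈ S, ¬(p = a ∨ p = b ∨ p = d) → r p < r a ∨ r d < r p := by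
    intro p hp hpabd
    push Not at hpabd
    exact lt_or_lt_of_adjacent_of_adjacent hr ha hb hd hab hbd hb_mem hp hpabd.1 hpabd.2.1 hpabd.2.2
  have : ∀ᶠ ε in 𝓝[>] (0 : ℝ), ∀ p ∈ S, ¬(p = a ∨ p = b ∨ p = d) →
      r p < r a - ε ∨ r d + ε < r p := by
    rw [eventually_all_finset]
    intro p hp
    rcases em (p = a ∨ p = b ∨ p = d) with hp' | hp'
    · exact Eventually.of_forall fun _ h => absurd hp' h
    rcases hout p hp hp' with h | h
    · filter_upwards [nhdsWithin_le_nhds (eventually_lt_nhds (sub_pos.2 h))] with ε hε _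
      exact Or.inl (by linarith)
    · filter_upwards [nhdsWithin_le_nhds (eventually_lt_nhds (sub_pos.2 h))] with ε hε _
      exact Or.inr (by linarith)
  obtain ⟨ε, hε, hε_pos⟩ := (this.and self_mem_nhdsWithin).exists
  refine ⟨r a - ε, r d + ε, fun p hp => ?_⟩
  by_cases hp' : p = a ∨ p = b ∨ p = d
  · have hp_mem : r a ≤ r p ∧ r p ≤ r d := by
      rcases hp' with rfl | rfl | rfl <;> constructor <;> linarith [hb_mem.1, hb_mem.2]
    have hneg : (r p - (r a - ε)) * (r p - (r d + ε)) < 0 :=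
      mul_neg_of_pos_of_neg (by linarith) (by linarith)
    exact ⟨hneg.ne, iff_of_true hneg hp'⟩
  · have hpos : 0 < (r p - (r a - ε)) * (r p - (r d + ε)) := by
      rcases hε p hp hp' with h | h
      · exact mul_pos_of_neg_of_neg (by linarith) (by linarith)
      · exact mul_pos (by linarith) (by linarith)
    exact ⟨hpos.ne', iff_of_false hpos.not_gt hp'⟩

end Order

lemma imp_of_step_of_lt {C : Finset ℝ} {P : ℝ → Prop}
    (hstep : ∀ m m', m < m' → m ∉ C → m' ∉ C →
      (∀ s ∈ C, ∀ s' ∈ C, s ∈ Ioo m m' → s' ∈ Ioo m m' → s = s') → P m → P m')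
    {m m' : ℝ} (hlt : m < m') (hm : m ∉ C) (hm' : m' ∉ C) (h : P m) : P m' := by
  classical
  induction hn : (C.filter (· ∈ Ioo m m')).card using Nat.strong_induction_on generalizing m m'
    with | _ n ih =>
  by_cases hle : (C.filter (· ∈ Ioo m m')).card ≤ 1
  · refine hstep m m' hlt hm hm' (fun s hs s' hs' hsI hs'I => ?_) h
    exact Finset.card_le_one.1 hle s (Finset.mem_filter.2 ⟨hs, hsI⟩) s'
      (Finset.mem_filter.2 ⟨hs', hs'I⟩)
  obtain ⟨s₁, hs₁, s₂, hs₂, hne⟩ := Finset.one_lt_card.1 (not_le.1 hle)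
  wlog h₁₂ : s₁ < s₂ generalizing s₁ s₂
  · exact this s₂ hs₂ s₁ hs₁ hne.symm (lt_of_le_of_ne (not_lt.1 h₁₂) hne.symm)
  rw [Finset.mem_filter] at hs₁ hs₂
  obtain ⟨μ, hμ, hμC⟩ := (Ioo_infinite h₁₂).exists_notMem_finset C
  have hsub : ∀ {a b}, m ≤ a → b ≤ m' → C.filter (· ∈ Ioo a b) ⊆ C.filter (· ∈ Ioo m m') :=
    fun ha hb s hs => by
      rw [Finset.mem_filter] at hs ⊢
      exact ⟨hs.1, ha.trans_lt hs.2.1, hs.2.2.trans_le hb⟩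
  have hlt₁ : (C.filter (· ∈ Ioo m μ)).card < n := hn ▸ Finset.card_lt_card
    ((Finset.ssubset_iff_of_subset (hsub le_rfl (hμ.2.trans hs₂.2.2).le)).2
      ⟨s₂, Finset.mem_filter.2 hs₂, fun h => (Finset.mem_filter.1 h).2.2.not_gt hμ.2⟩)
  have hlt₂ : (C.filter (· ∈ Ioo μ m')).card < n := hn ▸ Finset.card_lt_card
    ((Finset.ssubset_iff_of_subset (hsub (hs₁.2.1.trans hμ.1).le le_rfl)).2
      ⟨s₁, Finset.mem_filter.2 hs₁, fun h => (Finset.mem_filter.1 h).2.1.not_gt hμ.1⟩)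
  exact ih _ hlt₂ (hμ.2.trans hs₂.2.2) hμC hm'
    (ih _ hlt₁ (hs₁.2.1.trans hμ.1) hm hμC h rfl) rfl

lemma imp_of_step {C : Finset ℝ} {P : ℝ → Prop}
    (hstep : ∀ m m', m ∉ C → m' ∉ C →
      (∀ s ∈ C, ∀ s' ∈ C, s ∈ uIoo m m' → s' ∈ uIoo m m' → s = s') → P m → P m')
    {m m' : ℝ} (hm : m ∉ C) (hm' : m' ∉ C) (h : P m) : P m' := by
  rcases lt_trichotomy m m' with hlt | rfl | hlt
  · exact imp_of_step_of_lt (fun a b hab ha hb hs => hstep a b ha hb (by rwa [uIoo_of_lt hab]))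
      hlt hm hm' h
  · exact h
  · by_contra hP
    exact imp_of_step_of_lt (P := fun t => ¬P t)
      (fun a b hab ha hb hs hna hPb => hna (hstep b a hb ha (by rwa [uIoo_of_gt hab]) hPb))
      hlt hm' hm hP h

lemma exists_gt_forall_notMem_Ioc (C : Finset ℝ) (a : ℝ) : ∃ b > a, ∀ s ∈ C, s ∉ Ioc a b := by
  have : ∀ᶠ b in 𝓝[>] a, ∀ s ∈ C, s ∉ Ioc a b := by
    rw [eventually_all_finset]
    intro s _
    rcases le_or_gt s a with hs | hs
    · exact Eventually.of_forall fun b hb => hs.not_gt hb.1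
    · filter_upwards [nhdsWithin_le_nhds (eventually_lt_nhds hs)] with b hb hsb
      exact hb.not_ge hsb.2
  obtain ⟨b, hb, hab⟩ := (this.and self_mem_nhdsWithin).exists
  exact ⟨b, hab, hb⟩

def res (m : ℝ) (p : ℝ × ℝ) : ℝ := p.2 - m * p.1

noncomputable def pairSlope (p q : ℝ × ℝ) : ℝ := (p.2 - q.2) / (p.1 - q.1)

noncomputable def criticalSlopes (S : Finset (ℝ × ℝ)) : Finset ℝ :=
  S.offDiag.image fun pq => pairSlope pq.1 pq.2

variable {S : Finset (ℝ × ℝ)} {m m' : ℝ} {p q r : ℝ × ℝ}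

lemma res_sub_res (h : p.1 ≠ q.1) (m : ℝ) :
    res m p - res m q = (p.1 - q.1) * (pairSlope p q - m) := by
  have := sub_ne_zero.2 h
  unfold res pairSlope
  field_simp
  ring

lemma pairSlope_comm (p q : ℝ × ℝ) : pairSlope p q = pairSlope q p := by
  unfold pairSlope
  rw [← neg_sub q.2, ← neg_sub q.1, neg_div_neg_eq]

lemma pairSlope_mem_criticalSlopes (hp : p ∈ S) (hq : q ∈ S) (hpq : p ≠ q) :
    pairSlope p q ∈ criticalSlopes S :=
  Finset.mem_image.2 ⟨(p, q), Finset.mem_offDiag.2 ⟨hp, hq, hpq⟩, rfl⟩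

lemma injOn_res (hx : ∀ p ∈ S, ∀ q ∈ S, p ≠ q → p.1 ≠ q.1) (hm : m ∉ criticalSlopes S) :
    InjOn (res m) S := by
  intro p hp q hq hpq
  by_contra hne
  have := res_sub_res (hx p hp q hq hne) m
  rw [hpq, sub_self, zero_eq_mul] at this
  exact this.elim (sub_ne_zero.2 (hx p hp q hq hne))
    fun h => hm (sub_eq_zero.1 h ▸ pairSlope_mem_criticalSlopes hp hq hne)

lemma res_lt_res_of_forall_lt (hx : ∀ p ∈ S, ∀ q ∈ S, p ≠ q → p.1 ≠ q.1) (hp : p ∈ S)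
    (hp_min : ∀ z ∈ S, p.1 ≤ z.1) (hm : ∀ s ∈ criticalSlopes S, m < s) (hq : q ∈ S) (hqp : q ≠ p) :
    res m p < res m q := by
  have hlt := (hp_min q hq).lt_of_ne (hx p hp q hq hqp.symm)
  have := res_sub_res hlt.ne' m
  nlinarith [mul_pos (sub_pos.2 hlt) (sub_pos.2 (hm _ (pairSlope_mem_criticalSlopes hq hp hqp)))]

lemma res_lt_res_of_forall_gt (hx : ∀ p ∈ S, ∀ q ∈ S, p ≠ q → p.1 ≠ q.1) (hp : p ∈ S)
    (hp_min : ∀ z ∈ S, p.1 ≤ z.1) (hm : ∀ s ∈ criticalSlopes S, s < m) (hq : q ∈ S) (hqp : q ≠ p) :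
    res m q < res m p := by
  have hlt := (hp_min q hq).lt_of_ne (hx p hp q hq hqp.symm)
  have := res_sub_res hlt.ne' m
  nlinarith [mul_pos (sub_pos.2 hlt) (sub_pos.2 (hm _ (pairSlope_mem_criticalSlopes hq hp hqp)))]

lemma crosses_res_iff (h : p.1 ≠ q.1) :
    Crosses (res m) (res m') p q ↔ pairSlope p q ∈ uIoo m m' := by
  rw [mem_uIoo_iff_mul_neg, Crosses, res_sub_res h, res_sub_res h,
    show ∀ x y z : ℝ, x * y * (x * z) = x ^ 2 * (y * z) by intros; ring]
  have := sq_pos_of_ne_zero (sub_ne_zero.2 h)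
  exact ⟨fun h' => neg_of_mul_neg_right h' this.le, mul_neg_of_pos_of_neg this⟩

lemma collinear_of_pairSlope_eq (hpq : p.1 ≠ q.1) (hpr : p.1 ≠ r.1)
    (h : pairSlope p q = pairSlope p r) : Collinear ℝ ({p, q, r} : Set (ℝ × ℝ)) := by
  have hline : ∀ w : ℝ × ℝ, p.1 ≠ w.1 → w = (w.1 - p.1) • ((1 : ℝ), pairSlope p w) + p := by
    intro w hw
    have := sub_ne_zero.2 hw
    ext
    · simp
    · simp only [Prod.snd_add, Prod.smul_snd, smul_eq_mul, pairSlope]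
      field_simp
      ring
  refine (collinear_iff_of_mem (mem_insert p _)).2 ⟨(1, pairSlope p q), ?_⟩
  rintro w (rfl | rfl | rfl)
  · exact ⟨0, by simp⟩
  · exact ⟨w.1 - p.1, hline w hpq⟩
  · exact ⟨w.1 - p.1, h ▸ hline w hpr⟩

lemma exists_tilt (S : Finset (ℝ × ℝ)) {m c₁ c₂ : ℝ}
    (h : ∀ p ∈ S, (res m p - c₁) * (res m p - c₂) ≠ 0) :
    ∃ m₂ ≠ m, ∀ p ∈ S,
      ((res m p - c₁) * (res m₂ p - c₂) < 0 ↔ (res m p - c₁) * (res m p - c₂) < 0) := by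
  have : ∀ᶠ m₂ in 𝓝 m, ∀ p ∈ S,
      ((res m p - c₁) * (res m₂ p - c₂) < 0 ↔ (res m p - c₁) * (res m p - c₂) < 0) := by
    rw [eventually_all_finset]
    intro p hp
    have hcont : Continuous fun m₂ => (res m p - c₁) * (res m₂ p - c₂) := by
      unfold res; fun_prop
    rcases (h p hp).lt_or_gt with hneg | hpos
    · filter_upwards [hcont.continuousAt.eventually_lt continuousAt_const hneg] with m₂ hm₂
      exact iff_of_true hm₂ hneg
    · filter_upwards [continuousAt_const.eventually_lt hcont.continuousAt hpos] with m₂ hm₂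
      exact iff_of_false hm₂.not_gt hpos.not_gt
  obtain ⟨m₂, hm₂, hne⟩ :=
    ((this.filter_mono nhdsWithin_le_nhds).and self_mem_nhdsWithin).exists (f := 𝓝[≠] m)
  exact ⟨m₂, hne, hm₂⟩

section GeneralPosition

variable (hgen : ∀ p ∈ S, ∀ q ∈ S, ∀ r ∈ S, p ≠ q → p ≠ r → q ≠ r →
      ¬ Collinear ℝ ({p, q, r} : Set (ℝ × ℝ)))
  (hx : ∀ p ∈ S, ∀ q ∈ S, p ≠ q → p.1 ≠ q.1)
include hgen hx

lemma crosses_unique (hsingle : ∀ s ∈ criticalSlopes S, ∀ s' ∈ criticalSlopes S,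
      s ∈ uIoo m m' → s' ∈ uIoo m m' → s = s') :
    ∀ p ∈ S, ∀ q ∈ S, ∀ q' ∈ S,
      Crosses (res m) (res m') p q → Crosses (res m) (res m') p q' → q = q' := by
  intro p hp q hq q' hq' h h'
  by_contra hne
  refine hgen p hp q hq q' hq' h.ne h'.ne hne
    (collinear_of_pairSlope_eq (hx p hp q hq h.ne) (hx p hp q' hq' h'.ne) ?_)
  exact hsingle _ (pairSlope_mem_criticalSlopes hp hq h.ne) _
    (pairSlope_mem_criticalSlopes hp hq' h'.ne)
    ((crosses_res_iff (hx p hp q hq h.ne)).1 h) ((crosses_res_iff (hx p hp q' hq' h'.ne)).1 h')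

lemma exists_adjacent_res (hp : p ∈ S) (hq : q ∈ S) (hpq : p ≠ q) :
    ∃ m ∉ criticalSlopes S, Adjacent (res m) S p q := by
  set m₀ := pairSlope p q
  obtain ⟨m, hm₀, hm⟩ := exists_gt_forall_notMem_Ioc (criticalSlopes S) m₀
  refine ⟨m, fun h => hm m h ⟨hm₀, le_rfl⟩, fun z hz hzI => ?_⟩
  have hzp : z ≠ p := by rintro rfl; exact left_notMem_uIoo hzI
  have hzq : z ≠ q := by rintro rfl; exact right_notMem_uIoo hzI
  have hpq₀ : res m₀ p = res m₀ q := by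
    rw [← sub_eq_zero, res_sub_res (hx p hp q hq hpq), sub_self, mul_zero]
  have hz₀ : res m₀ z - res m₀ p ≠ 0 := fun he => by
    rw [res_sub_res (hx z hz p hp hzp), mul_eq_zero, sub_eq_zero, sub_eq_zero, pairSlope_comm] at he
    exact hgen p hp q hq z hz hpq hzp.symm hzq.symm (collinear_of_pairSlope_eq
      (hx p hp q hq hpq) (hx p hp z hz hzp.symm) (he.resolve_left (hx z hz p hp hzp)).symm)
  -- `z` lies on one side of the common residual of `p` and `q` at `m₀` and between them at `m`,
  -- so it crosses one of them at a slope in `(m₀, m)`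
  obtain ⟨w, hw, hzw, hc⟩ : ∃ w ∈ S, z ≠ w ∧ Crosses (res m₀) (res m) z w := by
    by_contra! hc
    have h₁ := not_lt.1 (hc p hp hzp)
    have h₂ := not_lt.1 (hc q hq hzq)
    rw [← hpq₀] at h₂
    rw [mem_uIoo_iff_mul_neg] at hzI
    nlinarith [mul_nonneg h₁ h₂, mul_neg_of_pos_of_neg (sq_pos_of_ne_zero hz₀) hzI]
  have := (crosses_res_iff (hx z hz w hw hzw)).1 hc
  rw [uIoo_of_lt hm₀] at this
  exact hm _ (pairSlope_mem_criticalSlopes hz hw hzw) (Ioo_subset_Ioc_self this)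

lemma exists_isAvoidingPair_res {col : ℝ × ℝ → κ} {c : κ} (hm : m ∉ criticalSlopes S)
    (hm' : m' ∉ criticalSlopes S) (hsingle : ∀ s ∈ criticalSlopes S, ∀ s' ∈ criticalSlopes S,
      s ∈ uIoo m m' → s' ∈ uIoo m m' → s = s')
    (hno : ¬Rainbow (res m) S col) {u v : ℝ × ℝ} (hu : u ∈ S) (hv : v ∈ S)
    (h : IsAvoidingPair (res m) S col c u v) :
    ∃ a ∈ S, ∃ b ∈ S, IsAvoidingPair (res m') S col c a b ∧ ∀ t ∈ S, col t = c →
      res m t < res m u → res m t < res m v → res m' t < res m' a ∧ res m' t < res m' b :=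
  exists_isAvoidingPair_of_not_rainbow (injOn_res hx hm) (injOn_res hx hm')
    (crosses_unique hgen hx hsingle) hno hu hv h

theorem exists_rainbow {col : ℝ × ℝ → κ} {p₀ p₁ p₂ : ℝ × ℝ} (h₀ : p₀ ∈ S)
    (h₁ : p₁ ∈ S) (h₂ : p₂ ∈ S) (h₀₁ : col p₀ ≠ col p₁) (h₀₂ : col p₀ ≠ col p₂)
    (h₁₂ : col p₁ ≠ col p₂) :
    ∃ m ∉ criticalSlopes S, Rainbow (res m) S col := by
  by_contra! hno
  set C := criticalSlopes S
  obtain ⟨γ, hγ, hγ_min⟩ := S.exists_min_image Prod.fst ⟨p₀, h₀⟩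
  obtain ⟨x, hxS, y, hyS, hxy, hxγ, hyγ⟩ :
      ∃ x ∈ S, ∃ y ∈ S, col x ≠ col y ∧ col x ≠ col γ ∧ col y ≠ col γ := by
    by_cases e₀ : col p₀ = col γ
    · exact ⟨p₁, h₁, p₂, h₂, h₁₂, e₀ ▸ h₀₁.symm, e₀ ▸ h₀₂.symm⟩
    by_cases e₁ : col p₁ = col γ
    · exact ⟨p₀, h₀, p₂, h₂, h₀₂, e₀, e₁ ▸ h₁₂.symm⟩
    · exact ⟨p₀, h₀, p₁, h₁, h₀₁, e₀, e₁⟩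
  obtain ⟨lo, hlo⟩ := C.bddBelow
  obtain ⟨hi, hhi⟩ := C.bddAbove
  have hlo' : ∀ s ∈ C, lo - 1 < s := fun s hs => by linarith [hlo hs]
  have hhi' : ∀ s ∈ C, s < hi + 1 := fun s hs => by linarith [hhi hs]
  obtain ⟨m₀, hm₀, hxy_adj⟩ := exists_adjacent_res hgen hx hxS hyS fun he => hxy (he ▸ rfl)
  obtain ⟨u, hu, v, hv, huv⟩ : ∃ u ∈ S, ∃ v ∈ S, IsAvoidingPair (res (lo - 1)) S col (col γ) u v :=
    imp_of_step (P := fun m => ∃ u ∈ S, ∃ v ∈ S, IsAvoidingPair (res m) S col (col γ) u v)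
      (fun m m' hm hm' hsingle ⟨u, hu, v, hv, h⟩ =>
        (exists_isAvoidingPair_res hgen hx hm hm' hsingle (hno m hm) hu hv h).imp
          fun a ⟨ha, b, hb, hab, _⟩ => ⟨ha, b, hb, hab⟩)
      hm₀ (fun h => (hlo' _ h).false) ⟨x, hxS, y, hyS, hxy, hxγ, hyγ, fun q hq _ => hxy_adj q hq⟩
  obtain ⟨a, ha, b, -, hab, hγa, -⟩ := imp_of_step (P := fun m => ∃ u ∈ S, ∃ v ∈ S,
      IsAvoidingPair (res m) S col (col γ) u v ∧ res m γ < res m u ∧ res m γ < res m v)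
    (fun m m' hm hm' hsingle ⟨u, hu, v, hv, h, hγu, hγv⟩ =>
      (exists_isAvoidingPair_res hgen hx hm hm' hsingle (hno m hm) hu hv h).imp
        fun a ⟨ha, b, hb, hab, ht⟩ => ⟨ha, b, hb, hab, ht γ hγ rfl hγu hγv⟩)
    (fun h => (hlo' _ h).false) (fun h => (hhi' _ h).false)
    ⟨u, hu, v, hv, huv,
      res_lt_res_of_forall_lt hx hγ hγ_min hlo' hu fun he => huv.2.1 (he ▸ rfl),
      res_lt_res_of_forall_lt hx hγ hγ_min hlo' hv fun he => huv.2.2.1 (he ▸ rfl)⟩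
  exact (res_lt_res_of_forall_gt hx hγ hγ_min hhi' ha fun he => hab.2.1 (he ▸ rfl)).not_gt hγa

end GeneralPosition

lemma existsUnique_of_three_colors {S : Finset α} {col : α → Fin 3} {W : α → Prop}
    {a b d : α} (ha : a ∈ S) (hb : b ∈ S) (hd : d ∈ S)
    (hcol : col a ≠ col b ∧ col a ≠ col d ∧ col b ≠ col d)
    (hW : ∀ p ∈ S, (W p ↔ p = a ∨ p = b ∨ p = d)) :
    ∀ i : Fin 3, ∃! p, p ∈ S ∧ col p = i ∧ W p := by
  intro i
  have hcover : ∀ x y z w : Fin 3, x ≠ y → x ≠ z → y ≠ z → w = x ∨ w = y ∨ w = z := by decide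
  obtain ⟨t, ht, rfl⟩ : ∃ t, (t = a ∨ t = b ∨ t = d) ∧ col t = i := by
    rcases hcover _ _ _ i hcol.1 hcol.2.1 hcol.2.2 with rfl | rfl | rfl
    exacts [⟨a, by simp⟩, ⟨b, by simp⟩, ⟨d, by simp⟩]
  have htS : t ∈ S := by rcases ht with rfl | rfl | rfl <;> assumption
  refine ⟨t, ⟨htS, rfl, (hW t htS).2 ht⟩, fun q ⟨hq, hqc, hqW⟩ => ?_⟩
  rcases (hW q hq).1 hqW with rfl | rfl | rfl <;> rcases ht with rfl | rfl | rfl <;> simp_all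

end DoubleWedge

/-- **A double wedge containing exactly one point of each color.**
For a finite 3-colored point set in the plane (colors `Fin 3`: 0 = red,
1 = green, 2 = blue), each color present, in general position (no three
collinear) and with distinct x-coordinates, there is a double wedge
`{(x,y) | (y - m₁x - c₁)(y - m₂x - c₂) < 0}` (with `m₁ ≠ m₂`) containing
exactly one point of each color. -/
theorem stmt_5
    (S : Finset (ℝ × ℝ))
    (color : ℝ × ℝ → Fin 3)
    (hcolors : ∀ i : Fin 3, ∃ p ∈ S, color p = i)
    (hgen : ∀ p ∈ S, ∀ q ∈ S, ∀ r ∈ S, p ≠ q → p ≠ r → q ≠ r →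
      ¬ Collinear ℝ ({p, q, r} : Set (ℝ × ℝ)))
    (hx : ∀ p ∈ S, ∀ q ∈ S, p ≠ q → p.1 ≠ q.1) :
    ∃ m₁ c₁ m₂ c₂ : ℝ, m₁ ≠ m₂ ∧ ∀ i : Fin 3,
      ∃! p : ℝ × ℝ, p ∈ S ∧ color p = i ∧
        (p.2 - m₁ * p.1 - c₁) * (p.2 - m₂ * p.1 - c₂) < 0 := by
  obtain ⟨p₀, h₀, hc₀⟩ := hcolors 0
  obtain ⟨p₁, h₁, hc₁⟩ := hcolors 1
  obtain ⟨p₂, h₂, hc₂⟩ := hcolors 2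
  obtain ⟨m, hm, a, ha, b, hb, d, hd, hab, hbd, hb_mem, hcol⟩ :=
    DoubleWedge.exists_rainbow hgen hx (col := color) h₀ h₁ h₂
      (by simp [hc₀, hc₁]) (by simp [hc₀, hc₂]) (by simp [hc₁, hc₂])
  obtain ⟨c₁, c₂, hstrip⟩ :=
    DoubleWedge.exists_strip (DoubleWedge.injOn_res hx hm) ha hb hd hab hbd hb_mem
  obtain ⟨m₂, hm₂, htilt⟩ := DoubleWedge.exists_tilt S fun p hp => (hstrip p hp).1
  exact ⟨m, c₁, m₂, c₂, hm₂.symm, DoubleWedge.existsUnique_of_three_colors ha hb hd hcol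
    fun p hp => (htilt p hp).trans (hstrip p hp).2⟩
end

section
/- Let S be a set of 6n points in ℝ² (n ≥ 1), consisting of exactly 2n red, 2n green, and 2n blue points, in general position (no three points of S are collinear) and with pairwise distinct x-coordinates and pairwise distinct y-coordinates. Then there exists a double wedge containing exactly n points of each color: there exist real numbers m₁, c₁, m₂, c₂ with m₁ ≠ m₂ such that for each color, exactly n points (x, y) of S of that color satisfy (y − m₁x − c₁)(y − m₂x − c₂) < 0. -/
/-!
Order the points by the intercepts of the lines of slope `s` through them and let `s` increase
from `-∞` to `+∞`: the order starts as the `x`-order, ends as its reverse, and changes by swaps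
of adjacent points (parallel pairs, which swap at the same slope, are swapped one at a time).
For the colour word of such an order, the excess `(r - n, g - n)` of red and green points in
the window of positions `k, …, k + 3n - 1` moves to a neighbour in the triangular lattice when
`k` increases by one, and at `k = 3n` it is the negative of its value at `k = 0`. If it never
vanished, its winding number around the origin would be an odd number of half-turns, unchanged
by each adjacent swap (only two of its steps change) but negated by the reversal. So some window
is balanced; its points are those between two lines, of distinct slopes, separating the window
from the points before and after it, and these lines bound the double wedge.
-/

open Finset

namespace DoubleWedge

/-- The sixty-degree sector, numbered cyclically `0, …, 5`, of the nonzero vector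
`(a, b, -a - b)` of the triangular lattice. -/
def hexSector (a b : ℤ) : ℤ :=
  if 0 < a ∧ b < 0 ∧ 0 ≤ a + b then 0
  else if 0 < a ∧ 0 ≤ b then 1
  else if a ≤ 0 ∧ 0 < b ∧ 0 < a + b then 2
  else if a < 0 ∧ 0 < b ∧ a + b ≤ 0 then 3
  else if a < 0 ∧ b ≤ 0 then 4
  else 5

/-- `(a', b')` is `(a, b)` or one of its six neighbours in the triangular lattice. -/
def IsHexStep (a b a' b' : ℤ) : Prop :=
  a' - a ∈ Set.Icc (-1) 1 ∧ b' - b ∈ Set.Icc (-1) 1 ∧ (a' + b') - (a + b) ∈ Set.Icc (-1) 1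

def sectorJump (a b a' b' : ℤ) : ℤ := (hexSector a' b' - hexSector a b + 1) % 6 - 1

lemma hexSector_neg {a b : ℤ} (h : ¬(a = 0 ∧ b = 0)) :
    hexSector (-a) (-b) ≡ hexSector a b + 3 [ZMOD 6] := by
  unfold Int.ModEq hexSector; split_ifs <;> omega

lemma sectorJump_modEq (a b a' b' : ℤ) :
    sectorJump a b a' b' ≡ hexSector a' b' - hexSector a b [ZMOD 6] := by
  unfold Int.ModEq sectorJump; omega

lemma sectorJump_mem_Icc {a b a' b' : ℤ} (h : ¬(a = 0 ∧ b = 0)) (h' : ¬(a' = 0 ∧ b' = 0))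
    (hs : IsHexStep a b a' b') : sectorJump a b a' b' ∈ Set.Icc (-1) 1 := by
  simp only [IsHexStep, Set.mem_Icc] at hs ⊢
  unfold sectorJump hexSector; split_ifs <;> omega

lemma IsHexStep.symm {a b a' b' : ℤ} (hs : IsHexStep a b a' b') : IsHexStep a' b' a b := by
  simp only [IsHexStep, Set.mem_Icc] at hs ⊢; omega

lemma sectorJump_swap {a b a' b' : ℤ} (h : ¬(a = 0 ∧ b = 0)) (h' : ¬(a' = 0 ∧ b' = 0))
    (hs : IsHexStep a b a' b') : sectorJump a' b' a b = -sectorJump a b a' b' := by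
  have h₁ := sectorJump_mem_Icc h h' hs
  have h₂ := sectorJump_mem_Icc h' h hs.symm
  have h₃ := sectorJump_modEq a b a' b'
  have h₄ := sectorJump_modEq a' b' a b
  simp only [Set.mem_Icc, Int.ModEq] at *
  omega

variable {n : ℕ}

def windowCount (n : ℕ) (w : ℕ → Fin 3) (k : ℕ) (c : Fin 3) : ℕ :=
  #{j ∈ Ico k (k + 3 * n) | w j = c}

def excess (n : ℕ) (w : ℕ → Fin 3) (k : ℕ) (c : Fin 3) : ℤ := windowCount n w k c - n

def IsBalancedWindow (n : ℕ) (w : ℕ → Fin 3) (k : ℕ) : Prop := ∀ c, windowCount n w k c = n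

def IsBalanced (n : ℕ) (w : ℕ → Fin 3) : Prop := ∀ c, #{j ∈ range (6 * n) | w j = c} = 2 * n

def windingStep (n : ℕ) (w : ℕ → Fin 3) (k : ℕ) : ℤ :=
  sectorJump (excess n w k 0) (excess n w k 1) (excess n w (k + 1) 0) (excess n w (k + 1) 1)

/-- The winding number, in sixths of a turn, of the lattice path `k ↦ (excess n w k 0,
excess n w k 1)`, `0 ≤ k ≤ 3n`, around the origin. -/
def winding (n : ℕ) (w : ℕ → Fin 3) : ℤ := ∑ k ∈ range (3 * n), windingStep n w k

lemma windowCount_succ (hn : 0 < n) (w : ℕ → Fin 3) (k : ℕ) (c : Fin 3) :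
    (windowCount n w (k + 1) c : ℤ) = windowCount n w k c - (if w k = c then 1 else 0) +
      (if w (k + 3 * n) = c then 1 else 0) := by
  unfold windowCount
  rw [card_filter, card_filter, show k + 1 + 3 * n = k + 3 * n + 1 by omega,
    sum_Ico_succ_top (by omega : k + 1 ≤ k + 3 * n),
    sum_eq_sum_Ico_succ_bot (by omega : k < k + 3 * n)]
  push_cast
  ring

lemma isHexStep_excess (hn : 0 < n) (w : ℕ → Fin 3) (k : ℕ) :
    IsHexStep (excess n w k 0) (excess n w k 1) (excess n w (k + 1) 0)
      (excess n w (k + 1) 1) := by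
  have h₀ := windowCount_succ hn w k 0
  have h₁ := windowCount_succ hn w k 1
  simp only [IsHexStep, excess, Set.mem_Icc]
  generalize w k = a at h₀ h₁
  generalize w (k + 3 * n) = b at h₀ h₁
  fin_cases a <;> fin_cases b <;> simp at h₀ h₁ <;> omega

lemma sum_windowCount (w : ℕ → Fin 3) (k : ℕ) :
    windowCount n w k 0 + windowCount n w k 1 + windowCount n w k 2 = 3 * n := by
  have h := card_eq_sum_card_fiberwise (s := Ico k (k + 3 * n)) (t := univ)
    (fun j _ => mem_univ (w j))
  rw [Fin.sum_univ_three, Nat.card_Ico, Nat.add_sub_cancel_left] at h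
  exact h.symm

lemma not_excess_eq_zero {w : ℕ → Fin 3} {k : ℕ} (h : ¬IsBalancedWindow n w k) :
    ¬(excess n w k 0 = 0 ∧ excess n w k 1 = 0) := by
  rintro ⟨h₀, h₁⟩
  have := sum_windowCount (n := n) w k
  refine h fun c => ?_
  simp only [excess] at h₀ h₁
  fin_cases c <;> simp <;> omega

lemma windowCount_add_windowCount_antipode {w : ℕ → Fin 3} (hw : IsBalanced n w) (c : Fin 3) :
    windowCount n w 0 c + windowCount n w (3 * n) c = 2 * n := by
  have h := hw c
  rw [range_eq_Ico, ← Ico_union_Ico_eq_Ico (Nat.zero_le (3 * n)) (by omega), filter_union,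
    card_union_of_disjoint (disjoint_filter_filter (Ico_disjoint_Ico_consecutive _ _ _))] at h
  simpa [windowCount, show 3 * n + 3 * n = 6 * n by omega] using h

lemma sum_windingStep_modEq (w : ℕ → Fin 3) (K : ℕ) :
    ∑ k ∈ range K, windingStep n w k ≡ hexSector (excess n w K 0) (excess n w K 1) -
      hexSector (excess n w 0 0) (excess n w 0 1) [ZMOD 6] := by
  induction K with
  | zero => simp [Int.ModEq]
  | succ K ih =>
    rw [sum_range_succ]
    have := sectorJump_modEq (excess n w K 0) (excess n w K 1) (excess n w (K + 1) 0)
      (excess n w (K + 1) 1)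
    simp only [Int.ModEq, windingStep] at *
    omega

/-- The path of excesses ends at the negative of its start, so it winds an odd number of
half-turns. -/
lemma winding_emod_six {w : ℕ → Fin 3} (hw : IsBalanced n w) (h₀ : ¬IsBalancedWindow n w 0) :
    winding n w % 6 = 3 := by
  have hsum := sum_windingStep_modEq (n := n) w (3 * n)
  have hr := windowCount_add_windowCount_antipode hw 0
  have hg := windowCount_add_windowCount_antipode hw 1
  have hend : excess n w (3 * n) 0 = -excess n w 0 0 ∧ excess n w (3 * n) 1 = -excess n w 0 1 := by
    simp only [excess]; omega
  rw [hend.1, hend.2] at hsum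
  have hneg := hexSector_neg (not_excess_eq_zero h₀)
  simp only [Int.ModEq, winding] at *
  omega

lemma windowCount_comp_swap (w : ℕ → Fin 3) {j k : ℕ} (c : Fin 3)
    (h : j ∈ Ico k (k + 3 * n) ↔ j + 1 ∈ Ico k (k + 3 * n)) :
    windowCount n (w ∘ Equiv.swap j (j + 1)) k c = windowCount n w k c := by
  have hσ := Equiv.swap_bijOn_self h
  unfold windowCount
  refine card_nbij' (Equiv.swap j (j + 1)) (Equiv.swap j (j + 1)) ?_ ?_ ?_ ?_
  · intro i hi
    simp only [coe_filter, Set.mem_ofPred_eq, Function.comp_apply] at hi ⊢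
    exact ⟨hσ.mapsTo hi.1, hi.2⟩
  · intro i hi
    simp only [coe_filter, Set.mem_ofPred_eq, Function.comp_apply, Equiv.swap_apply_self] at hi ⊢
    exact ⟨hσ.mapsTo hi.1, hi.2⟩
  · intro i _; simp
  · intro i _; simp

lemma excess_comp_swap (w : ℕ → Fin 3) {j k : ℕ} (c : Fin 3) (h₁ : k ≠ j + 1)
    (h₂ : k + 3 * n ≠ j + 1) : excess n (w ∘ Equiv.swap j (j + 1)) k c = excess n w k c := by
  rw [excess, windowCount_comp_swap w c (by simp only [mem_Ico]; omega), excess]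

lemma windingStep_comp_swap (w : ℕ → Fin 3) {j k : ℕ} (h₁ : k ≠ j + 1) (h₂ : k + 1 ≠ j + 1)
    (h₃ : k + 3 * n ≠ j + 1) (h₄ : k + 1 + 3 * n ≠ j + 1) :
    windingStep n (w ∘ Equiv.swap j (j + 1)) k = windingStep n w k := by
  simp only [windingStep, excess_comp_swap w _ h₁ h₃, excess_comp_swap w _ h₂ h₄]

lemma windingStep_mem_Icc (hn : 0 < n) {w : ℕ → Fin 3} {k : ℕ} (h : ¬IsBalancedWindow n w k)
    (h' : ¬IsBalancedWindow n w (k + 1)) : windingStep n w k ∈ Set.Icc (-1) 1 :=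
  sectorJump_mem_Icc (not_excess_eq_zero h) (not_excess_eq_zero h') (isHexStep_excess hn w k)

/-- The winding number changes by at most `4` but stays `3` modulo `6`. -/
lemma winding_eq_of_eqOn_compl_pair (hn : 0 < n) {v w : ℕ → Fin 3} (hv : IsBalanced n v)
    (hw : IsBalanced n w) (hv' : ∀ k ≤ 3 * n, ¬IsBalancedWindow n v k)
    (hw' : ∀ k ≤ 3 * n, ¬IsBalancedWindow n w k) {x₁ x₂ : ℕ} (hx₁ : x₁ < 3 * n)
    (hx₂ : x₂ < 3 * n) (hx : x₁ ≠ x₂)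
    (h : ∀ k < 3 * n, k ≠ x₁ → k ≠ x₂ → windingStep n v k = windingStep n w k) :
    winding n v = winding n w := by
  have hdiff : winding n v - winding n w =
      ∑ k ∈ {x₁, x₂}, (windingStep n v k - windingStep n w k) := by
    rw [winding, winding, ← sum_sub_distrib]
    refine (sum_subset (by simp [insert_subset_iff, hx₁, hx₂]) fun k hk hk' => ?_).symm
    simp only [mem_insert, mem_singleton, not_or] at hk'
    rw [h k (mem_range.mp hk) hk'.1 hk'.2, sub_self]
  rw [sum_pair hx] at hdiff
  have b₁ := windingStep_mem_Icc hn (hv' x₁ (by omega)) (hv' (x₁ + 1) (by omega))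
  have b₂ := windingStep_mem_Icc hn (hv' x₂ (by omega)) (hv' (x₂ + 1) (by omega))
  have b₃ := windingStep_mem_Icc hn (hw' x₁ (by omega)) (hw' (x₁ + 1) (by omega))
  have b₄ := windingStep_mem_Icc hn (hw' x₂ (by omega)) (hw' (x₂ + 1) (by omega))
  have m₁ := winding_emod_six hv (hv' 0 (by omega))
  have m₂ := winding_emod_six hw (hw' 0 (by omega))
  simp only [Set.mem_Icc] at b₁ b₂ b₃ b₄
  omega

/-- Swapping two adjacent letters moves only the windows starting at `j + 1` and `j + 1 - 3n`,
hence changes at most two winding steps. -/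
theorem winding_comp_swap (hn : 0 < n) {w : ℕ → Fin 3} {j : ℕ} (hj : j + 1 < 6 * n)
    (hw : IsBalanced n w) (hw' : IsBalanced n (w ∘ Equiv.swap j (j + 1)))
    (hnw : ∀ k ≤ 3 * n, ¬IsBalancedWindow n w k)
    (hnw' : ∀ k ≤ 3 * n, ¬IsBalancedWindow n (w ∘ Equiv.swap j (j + 1)) k) :
    winding n (w ∘ Equiv.swap j (j + 1)) = winding n w := by
  have step := fun k (h₁ : k ≠ j + 1) (h₂ : k + 1 ≠ j + 1) (h₃ : k + 3 * n ≠ j + 1)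
    (h₄ : k + 1 + 3 * n ≠ j + 1) => windingStep_comp_swap (n := n) w h₁ h₂ h₃ h₄
  rcases lt_trichotomy (j + 1) (3 * n) with hlt | heq | hgt
  · exact winding_eq_of_eqOn_compl_pair hn hw' hw hnw' hnw (x₁ := j) (x₂ := j + 1) (by omega)
      hlt (by omega) fun k hk h₁ h₂ => step k (by omega) (by omega) (by omega) (by omega)
  · exact winding_eq_of_eqOn_compl_pair hn hw' hw hnw' hnw (x₁ := 0) (x₂ := 3 * n - 1)
      (by omega) (by omega) (by omega)
      fun k hk h₁ h₂ => step k (by omega) (by omega) (by omega) (by omega)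
  · exact winding_eq_of_eqOn_compl_pair hn hw' hw hnw' hnw (x₁ := j - 3 * n)
      (x₂ := j + 1 - 3 * n) (by omega) (by omega) (by omega)
      fun k hk h₁ h₂ => step k (by omega) (by omega) (by omega) (by omega)

lemma windowCount_reverse {v w : ℕ → Fin 3} (hv : ∀ j < 6 * n, v j = w (6 * n - 1 - j))
    {k : ℕ} (hk : k ≤ 3 * n) (c : Fin 3) :
    windowCount n v k c = windowCount n w (3 * n - k) c := by
  unfold windowCount
  refine card_nbij' (fun j => 6 * n - 1 - j) (fun j => 6 * n - 1 - j) ?_ ?_ ?_ ?_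
  · intro j hj
    simp only [coe_filter, mem_Ico, Set.mem_ofPred_eq] at hj ⊢
    exact ⟨by omega, (hv j (by omega)).symm.trans hj.2⟩
  · intro j hj
    simp only [coe_filter, mem_Ico, Set.mem_ofPred_eq] at hj ⊢
    refine ⟨by omega, ?_⟩
    rw [hv _ (by omega), show 6 * n - 1 - (6 * n - 1 - j) = j by omega]
    exact hj.2
  all_goals
    intro j hj
    simp only [coe_filter, mem_Ico, Set.mem_ofPred_eq] at hj
    simp only
    omega

/-- Reading the word backwards runs the excess path backwards. -/
theorem winding_reverse (hn : 0 < n) {v w : ℕ → Fin 3}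
    (hv : ∀ j < 6 * n, v j = w (6 * n - 1 - j)) (hnw : ∀ k ≤ 3 * n, ¬IsBalancedWindow n w k) :
    winding n v = -winding n w := by
  have hex : ∀ k ≤ 3 * n, ∀ c, excess n v k c = excess n w (3 * n - k) c := fun k hk c => by
    rw [excess, excess, windowCount_reverse hv hk]
  have hstep : ∀ k < 3 * n, windingStep n v k = -windingStep n w (3 * n - 1 - k) := by
    intro k hk
    set m := 3 * n - 1 - k
    rw [windingStep, windingStep, hex k hk.le, hex k hk.le, hex (k + 1) hk, hex (k + 1) hk,
      show 3 * n - k = m + 1 by omega, show 3 * n - (k + 1) = m by omega]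
    exact sectorJump_swap (not_excess_eq_zero (hnw m (by omega)))
      (not_excess_eq_zero (hnw (m + 1) (by omega))) (isHexStep_excess hn w m)
  rw [winding, winding, ← sum_range_reflect (windingStep n w), ← sum_neg_distrib]
  exact sum_congr rfl fun k hk => hstep k (mem_range.mp hk)

def intercept (a : ℝ) (p : ℝ × ℝ) : ℝ := p.2 - a * p.1

noncomputable def lineSlope (p q : ℝ × ℝ) : ℝ := (q.2 - p.2) / (q.1 - p.1)

section Intercept

variable {p q : ℝ × ℝ}

lemma intercept_le_intercept_iff_of_fst_lt (h : p.1 < q.1) (a : ℝ) :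
    intercept a p ≤ intercept a q ↔ a ≤ lineSlope p q := by
  rw [intercept, intercept, lineSlope, le_div_iff₀ (sub_pos.mpr h)]
  constructor <;> intro <;> linarith

lemma intercept_lt_intercept_iff_of_fst_lt (h : p.1 < q.1) (a : ℝ) :
    intercept a p < intercept a q ↔ a < lineSlope p q := by
  rw [intercept, intercept, lineSlope, lt_div_iff₀ (sub_pos.mpr h)]
  constructor <;> intro <;> linarith

lemma intercept_le_intercept_iff_of_fst_gt (h : q.1 < p.1) (a : ℝ) :
    intercept a p ≤ intercept a q ↔ lineSlope p q ≤ a := by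
  rw [intercept, intercept, lineSlope, div_le_iff_of_neg (sub_neg.mpr h)]
  constructor <;> intro <;> linarith

lemma intercept_lt_intercept_iff_of_fst_gt (h : q.1 < p.1) (a : ℝ) :
    intercept a p < intercept a q ↔ lineSlope p q < a := by
  rw [intercept, intercept, lineSlope, div_lt_iff_of_neg (sub_neg.mpr h)]
  constructor <;> intro <;> linarith

lemma intercept_eq_intercept_iff (h : p.1 ≠ q.1) (a : ℝ) :
    intercept a p = intercept a q ↔ a = lineSlope p q := by
  rw [intercept, intercept, lineSlope, eq_div_iff (sub_ne_zero.mpr h.symm)]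
  constructor <;> intro <;> linarith

lemma collinear_of_intercept_eq {a : ℝ} {r : ℝ × ℝ} (hq : intercept a p = intercept a q)
    (hr : intercept a p = intercept a r) : Collinear ℝ ({p, q, r} : Set (ℝ × ℝ)) := by
  rw [collinear_iff_of_mem (Set.mem_insert p _)]
  refine ⟨(1, a), fun x hx => ⟨x.1 - p.1, ?_⟩⟩
  have hx : intercept a x = intercept a p := by
    rcases hx with rfl | rfl | rfl
    exacts [rfl, hq.symm, hr.symm]
  simp only [intercept] at hx
  refine Prod.ext (by simp) ?_
  simp only [Prod.smul_snd, smul_eq_mul, vadd_eq_add, Prod.snd_add]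
  linarith

end Intercept

structure InGeneralPosition (S : Finset (ℝ × ℝ)) : Prop where
  not_collinear : ∀ p ∈ S, ∀ q ∈ S, ∀ r ∈ S, p ≠ q → p ≠ r → q ≠ r →
    ¬Collinear ℝ ({p, q, r} : Set (ℝ × ℝ))
  fst_ne : ∀ p ∈ S, ∀ q ∈ S, p ≠ q → p.1 ≠ q.1

lemma InGeneralPosition.injOn_fst {S : Finset (ℝ × ℝ)} (hS : InGeneralPosition S) :
    Set.InjOn Prod.fst (S : Set (ℝ × ℝ)) :=
  fun p hp q hq h => by_contra fun hne => hS.fst_ne p hp q hq hne h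

lemma InGeneralPosition.eq_or_eq_of_intercept_eq {S : Finset (ℝ × ℝ)} (hS : InGeneralPosition S)
    {p q r : ℝ × ℝ} (hp : p ∈ S) (hq : q ∈ S) (hr : r ∈ S) {a : ℝ}
    (h₁ : intercept a p = intercept a q) (h₂ : intercept a p = intercept a r) :
    p = q ∨ p = r ∨ q = r := by
  by_contra! h
  exact hS.not_collinear p hp q hq r hr h.1 h.2.1 h.2.2 (collinear_of_intercept_eq h₁ h₂)

lemma exists_between_notMem (A B avoid : Finset ℝ) (h : ∀ a ∈ A, ∀ b ∈ B, a < b) :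
    ∃ μ ∉ avoid, (∀ a ∈ A, a < μ) ∧ ∀ b ∈ B, μ < b := by
  set I := (⋂ a ∈ A, Set.Ioi a) ∩ ⋂ b ∈ B, Set.Iio b
  have hI : IsOpen I :=
    (isOpen_biInter_finset fun _ _ => isOpen_Ioi).inter (isOpen_biInter_finset fun _ _ => isOpen_Iio)
  obtain ⟨μ₀, hA, hB⟩ := A.exists_between' B h
  obtain ⟨μ, hμI, hμ⟩ := (dense_univ.sdiff_finset avoid).inter_open_nonempty I hI
    ⟨μ₀, by simpa [I] using ⟨hA, hB⟩⟩
  exact ⟨μ, hμ.2, by simpa [I] using hμI⟩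

section Arrangement

variable {α β : Type*} [LinearOrder β] {S : Finset α} {f : α → β}

lemma exists_bijOn_strictMonoOn [Nonempty α] (hf : Set.InjOn f S) :
    ∃ w : ℕ → α, Set.BijOn w (Set.Iio #S) S ∧ StrictMonoOn (f ∘ w) (Set.Iio #S) := by
  have hcard : #(S.image f) = #S := card_image_of_injOn hf
  set e := (S.image f).orderEmbOfFin hcard
  choose g hgS hg using fun i => mem_image.mp (orderEmbOfFin_mem (S.image f) hcard i)
  set w : ℕ → α := fun i => if h : i < #S then g ⟨i, h⟩ else Classical.arbitrary α
  have hw : ∀ i (h : i < #S), w i = g ⟨i, h⟩ := fun i h => dif_pos h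
  have hmono : StrictMonoOn (f ∘ w) (Set.Iio #S) := fun i hi j hj hij => by
    simp only [Function.comp_apply, hw i hi, hw j hj, hg]
    exact e.strictMono (Fin.mk_lt_mk.mpr hij)
  refine ⟨w, ⟨fun i hi => by rw [hw i hi]; exact hgS _, Set.InjOn.of_comp hmono.injOn, ?_⟩, hmono⟩
  intro p hp
  obtain ⟨i, hi⟩ : f p ∈ Set.range e := by
    rw [range_orderEmbOfFin]; exact mem_image_of_mem f hp
  exact ⟨i, i.2, hf (by rw [hw i i.2]; exact hgS i) hp (by rw [hw i i.2, hg, ← hi])⟩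

lemma eq_rev_of_strictMonoOn_of_strictAntiOn (hf : Set.InjOn f S) {v w : ℕ → α}
    (hv : Set.BijOn v (Set.Iio #S) S) (hw : Set.BijOn w (Set.Iio #S) S)
    (hv' : StrictMonoOn (f ∘ v) (Set.Iio #S)) (hw' : StrictAntiOn (f ∘ w) (Set.Iio #S))
    {j : ℕ} (hj : j < #S) : w j = v (#S - 1 - j) := by
  have hcard : #(S.image f) = #S := card_image_of_injOn hf
  have hv'' : (fun i : Fin #S => f (v i)) = (S.image f).orderEmbOfFin hcard :=
    orderEmbOfFin_unique hcard (fun i => mem_image_of_mem f (hv.mapsTo i.2))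
      fun i i' h => hv' i.2 i'.2 h
  have hw'' : (fun i : Fin #S => f (w (Fin.rev i))) = (S.image f).orderEmbOfFin hcard :=
    orderEmbOfFin_unique hcard (fun i => mem_image_of_mem f (hw.mapsTo (Fin.rev i).2))
      fun i i' h => hw' (Fin.rev i').2 (Fin.rev i).2 (Fin.rev_lt_rev.mpr h)
  have h := congrFun (hw''.trans hv''.symm) (Fin.rev ⟨j, hj⟩)
  simp only [Fin.rev_rev, Fin.val_rev] at h
  rw [show #S - (j + 1) = #S - 1 - j by omega] at h
  exact hf (hw.mapsTo hj) (hv.mapsTo (by simp; omega)) h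

lemma card_filter_range_eq_of_bijOn {w : ℕ → α} (hw : Set.BijOn w (Set.Iio #S) S)
    (P : α → Prop) [DecidablePred P] : #{i ∈ range #S | P (w i)} = #{p ∈ S | P p} :=
  card_nbij w (fun i hi => by
      simp only [coe_filter, mem_range, Set.mem_ofPred_eq] at hi ⊢; exact ⟨hw.mapsTo hi.1, hi.2⟩)
    (hw.injOn.mono fun i hi => by simp_all) fun p hp => by
      obtain ⟨i, hi, rfl⟩ := hw.surjOn (mem_filter.mp hp).1
      exact ⟨i, by simp_all⟩

def ascents (x : ℕ → β) (N : ℕ) : Finset (ℕ × ℕ) :=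
  {ij ∈ range N ×ˢ range N | ij.1 < ij.2 ∧ x ij.1 < x ij.2}

lemma card_ascents_comp_swap_lt {x : ℕ → β} {N i : ℕ} (hi : i + 1 < N) (hx : x i < x (i + 1)) :
    #(ascents (x ∘ Equiv.swap i (i + 1)) N) < #(ascents x N) := by
  set σ := Equiv.swap i (i + 1)
  have hmem : (i, i + 1) ∈ ascents x N := by simp [ascents, hx]; omega
  calc #(ascents (x ∘ σ) N) ≤ #((ascents x N).erase (i, i + 1)) := by
        refine card_le_card_of_injOn (Prod.map σ σ) (fun ij hij => ?_) ?_
        · obtain ⟨a, b⟩ := ij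
          simp only [ascents, mem_coe, mem_filter, mem_product, mem_range,
            Function.comp_apply] at hij
          have hab : ¬(a = i ∧ b = i + 1) := by
            rintro ⟨rfl, rfl⟩
            simp only [σ, Equiv.swap_apply_left, Equiv.swap_apply_right] at hij
            exact lt_asymm hx hij.2.2
          simp only [ascents, mem_coe, mem_erase, mem_filter, mem_product, mem_range,
            Prod.map_apply, ne_eq, Prod.mk.injEq]
          refine ⟨?_, ?_, ?_, hij.2.2⟩ <;> simp only [σ, Equiv.swap_apply_def] <;> split_ifs <;>
            omega
        · exact (Prod.map_injective.mpr ⟨σ.injective, σ.injective⟩).injOn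
    _ < #(ascents x N) := card_erase_lt_of_mem hmem

end Arrangement

/-- The points `w 0, …, w (N - 1)` are met in this order by a line of slope `a` sweeping
upwards. -/
def SortedAt (a : ℝ) (N : ℕ) (w : ℕ → ℝ × ℝ) : Prop :=
  MonotoneOn (fun i => intercept a (w i)) (Set.Iio N)

lemma SortedAt.comp_swap {a : ℝ} {N i : ℕ} {w : ℕ → ℝ × ℝ} (hs : SortedAt a N w)
    (h : intercept a (w i) = intercept a (w (i + 1))) :
    SortedAt a N (w ∘ Equiv.swap i (i + 1)) := by
  have : (fun j => intercept a ((w ∘ Equiv.swap i (i + 1)) j)) = fun j => intercept a (w j) := by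
    funext j
    simp only [Function.comp_apply, Equiv.swap_apply_def]
    split_ifs with h₁ h₂ <;> simp_all
  rw [SortedAt, this]
  exact hs

variable {S : Finset (ℝ × ℝ)} {w : ℕ → ℝ × ℝ} {s : ℝ}

/-- Across any cut of a sorted arrangement there is at most one pair of points on a common line
of the sweep: a second one would put three points on that line. -/
lemma SortedAt.eq_of_intercept_eq (hS : InGeneralPosition S) (hw : Set.BijOn w (Set.Iio #S) S)
    (hs : SortedAt s #S w) {i j i' j' : ℕ} (hij : i < j) (hij' : i' < j') (hij'' : i < j')
    (hi'j : i' < j) (hj : j < #S) (hj' : j' < #S)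
    (h : intercept s (w i) = intercept s (w j)) (h' : intercept s (w i') = intercept s (w j')) :
    i = i' ∧ j = j' := by
  have hle₁ := hs (show i ∈ Set.Iio #S by simp; omega) (show j' ∈ Set.Iio #S from hj') hij''.le
  have hle₂ := hs (show i' ∈ Set.Iio #S by simp; omega) (show j ∈ Set.Iio #S from hj) hi'j.le
  simp only at hle₁ hle₂
  have hmem : ∀ k < #S, w k ∈ S := fun k hk => hw.mapsTo hk
  have hinj : ∀ k < #S, ∀ l < #S, w k = w l → k = l := fun k hk l hl => hw.injOn hk hl
  constructor
  · rcases hS.eq_or_eq_of_intercept_eq (hmem i (by omega)) (hmem j hj) (hmem i' (by omega)) h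
      (by linarith) with h₁ | h₁ | h₁
    · exact absurd (hinj _ (by omega) _ hj h₁) hij.ne
    · exact hinj _ (by omega) _ (by omega) h₁
    · exact absurd (hinj _ hj _ (by omega) h₁) hi'j.ne'
  · rcases hS.eq_or_eq_of_intercept_eq (hmem i (by omega)) (hmem j hj) (hmem j' hj') h
      (by linarith) with h₁ | h₁ | h₁
    · exact absurd (hinj _ (by omega) _ hj h₁) hij.ne
    · exact absurd (hinj _ (by omega) _ hj' h₁) hij''.ne
    · exact hinj _ hj _ hj' h₁

/-- The admissible slopes form an open interval, so they can avoid any finite set; tilting the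
sweep line slightly resolves the only possible tie across the cut. -/
theorem SortedAt.exists_separating_line (hS : InGeneralPosition S)
    (hw : Set.BijOn w (Set.Iio #S) S) (hs : SortedAt s #S w) (K : ℕ) (avoid : Finset ℝ) :
    ∃ a ∉ avoid, ∃ c, ∀ i < #S, (i < K → intercept a (w i) < c) ∧
      (K ≤ i → c < intercept a (w i)) := by
  set cross := {ij ∈ range #S ×ˢ range #S | ij.1 < K ∧ K ≤ ij.2}
  set slopes := fun (P : ℝ × ℝ → ℝ × ℝ → Prop) [DecidableRel P] =>
    {ij ∈ cross | P (w ij.1) (w ij.2)}.image fun ij => lineSlope (w ij.1) (w ij.2)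
  have hfst : ∀ i < #S, ∀ j < #S, i ≠ j → (w i).1 ≠ (w j).1 := fun i hi j hj hij =>
    hS.fst_ne _ (hw.mapsTo hi) _ (hw.mapsTo hj) fun h => hij (hw.injOn hi hj h)
  have hsep : ∀ l ∈ slopes fun p q => q.1 < p.1, ∀ u ∈ slopes fun p q => p.1 < q.1, l < u := by
    simp only [slopes, cross, mem_image, mem_filter, mem_product, mem_range]
    rintro _ ⟨⟨i, j⟩, ⟨⟨⟨hi, hj⟩, hiK, hKj⟩, hgt⟩, rfl⟩ _ ⟨⟨i', j'⟩, ⟨⟨⟨hi', hj'⟩, hi'K, hKj'⟩, hlt⟩, rfl⟩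
    dsimp only at *
    have hl := (intercept_le_intercept_iff_of_fst_gt hgt s).mp
      (hs (show i ∈ Set.Iio #S from hi) (show j ∈ Set.Iio #S from hj) (by omega))
    have hu := (intercept_le_intercept_iff_of_fst_lt hlt s).mp
      (hs (show i' ∈ Set.Iio #S from hi') (show j' ∈ Set.Iio #S from hj') (by omega))
    by_contra! hul
    obtain ⟨rfl, rfl⟩ := hs.eq_of_intercept_eq hS hw (by omega) (by omega) (by omega) (by omega)
      hj hj' ((intercept_eq_intercept_iff (hfst i hi j hj (by omega)) s).mpr (by linarith))
      ((intercept_eq_intercept_iff (hfst i' hi' j' hj' (by omega)) s).mpr (by linarith))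
    exact lt_asymm hgt hlt
  obtain ⟨a, ha, hlow, hup⟩ := exists_between_notMem _ _ avoid hsep
  have hcross : ∀ i < K, ∀ j < #S, K ≤ j → intercept a (w i) < intercept a (w j) := by
    intro i hiK j hj hKj
    have hmem : (i, j) ∈ cross := by simp [cross]; omega
    rcases (hfst i (by omega) j hj (by omega)).lt_or_gt with hlt | hgt
    · exact (intercept_lt_intercept_iff_of_fst_lt hlt a).mpr
        (hup _ (mem_image_of_mem _ (mem_filter.mpr ⟨hmem, hlt⟩)))
    · exact (intercept_lt_intercept_iff_of_fst_gt hgt a).mpr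
        (hlow _ (mem_image_of_mem _ (mem_filter.mpr ⟨hmem, hgt⟩)))
  obtain ⟨c, hc₁, hc₂⟩ := ((range (min K #S)).image fun i => intercept a (w i)).exists_between'
    ((Ico K #S).image fun i => intercept a (w i)) (by
      simp only [mem_image, mem_range, mem_Ico, lt_min_iff]
      rintro _ ⟨i, hi, rfl⟩ _ ⟨j, hj, rfl⟩
      exact hcross i hi.1 j hj.2 hj.1)
  refine ⟨a, ha, c, fun i hi => ⟨fun hiK => hc₁ _ ?_, fun hKi => hc₂ _ ?_⟩⟩
  · exact mem_image_of_mem _ (mem_range.mpr (lt_min hiK hi))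
  · exact mem_image_of_mem _ (mem_Ico.mpr ⟨hKi, hi⟩)

/-- Rotating the sweep line up to the smallest slope of an adjacent pair in `x`-order produces
a tie there, which may then be swapped. -/
theorem SortedAt.exists_swap (hS : InGeneralPosition S) (hw : Set.BijOn w (Set.Iio #S) S)
    (hs : SortedAt s #S w) (hasc : ∃ i, i + 1 < #S ∧ (w i).1 < (w (i + 1)).1) :
    ∃ i s', i + 1 < #S ∧ (w i).1 < (w (i + 1)).1 ∧ SortedAt s' #S (w ∘ Equiv.swap i (i + 1)) := by
  obtain ⟨i, hi, hmin⟩ := exists_min_image {i ∈ range #S | i + 1 < #S ∧ (w i).1 < (w (i + 1)).1}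
    (fun i => lineSlope (w i) (w (i + 1)))
    (by obtain ⟨i, hi⟩ := hasc; exact ⟨i, by simp [hi]; omega⟩)
  simp only [mem_filter, mem_range] at hi hmin
  set s' := lineSlope (w i) (w (i + 1))
  have hmem : ∀ k < #S, k ∈ Set.Iio #S := fun k hk => hk
  have hss' : s ≤ s' := (intercept_le_intercept_iff_of_fst_lt hi.2.2 s).mp
    (hs (hmem i (by omega)) (hmem _ hi.2.1) (by omega))
  have hs' : SortedAt s' #S w := by
    refine monotoneOn_of_le_add_one Set.ordConnected_Iio fun m _ hm hm₁ => ?_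
    have hne : w m ≠ w (m + 1) := fun h => by simpa using hw.injOn hm hm₁ h
    rcases (hS.fst_ne _ (hw.mapsTo hm) _ (hw.mapsTo hm₁) hne).lt_or_gt with hlt | hgt
    · exact (intercept_le_intercept_iff_of_fst_lt hlt s').mpr
        (hmin m ⟨by simpa using hm, hm₁, hlt⟩)
    · exact (intercept_le_intercept_iff_of_fst_gt hgt s').mpr
        (((intercept_le_intercept_iff_of_fst_gt hgt s).mp (hs hm hm₁ (by omega))).trans hss')
  refine ⟨i, s', hi.2.1, hi.2.2, hs'.comp_swap ?_⟩
  exact (intercept_eq_intercept_iff hi.2.2.ne s').mpr rfl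

lemma isBalanced_comp {color : ℝ × ℝ → Fin 3} (hcard : #S = 6 * n)
    (hbal : ∀ c, #{p ∈ S | color p = c} = 2 * n) (hw : Set.BijOn w (Set.Iio #S) S) :
    IsBalanced n (color ∘ w) := fun c => by
  rw [← hcard, ← hbal c]
  exact card_filter_range_eq_of_bijOn hw (color · = c)

lemma exists_sortedAt_strictMonoOn_fst (hS : InGeneralPosition S) :
    ∃ w s, Set.BijOn w (Set.Iio #S) S ∧ StrictMonoOn (Prod.fst ∘ w) (Set.Iio #S) ∧
      SortedAt s #S w := by
  obtain ⟨w, hw, hmono⟩ := exists_bijOn_strictMonoOn hS.injOn_fst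
  obtain ⟨s, -, hs⟩ := (∅ : Finset ℝ).exists_between'
    ((S ×ˢ S).image fun pq => lineSlope pq.1 pq.2) (by simp)
  refine ⟨w, s, hw, hmono, fun i hi j hj hij => ?_⟩
  rcases hij.eq_or_lt with rfl | hlt
  · exact le_rfl
  exact (intercept_le_intercept_iff_of_fst_lt (hmono hi hj hlt) s).mpr
    (hs _ (mem_image.mpr ⟨(w i, w j), mem_product.mpr ⟨hw.mapsTo hi, hw.mapsTo hj⟩, rfl⟩)).le

theorem winding_eq_neg_of_sortedAt (hS : InGeneralPosition S) {color : ℝ × ℝ → Fin 3}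
    (hn : 0 < n) (hcard : #S = 6 * n) (hbal : ∀ c, #{p ∈ S | color p = c} = 2 * n)
    (hnb : ∀ w s, Set.BijOn w (Set.Iio #S) S → SortedAt s #S w →
      ∀ k ≤ 3 * n, ¬IsBalancedWindow n (color ∘ w) k)
    {w₀ : ℕ → ℝ × ℝ} {s₀ : ℝ} (hw₀ : Set.BijOn w₀ (Set.Iio #S) S)
    (hmono : StrictMonoOn (Prod.fst ∘ w₀) (Set.Iio #S)) (hs₀ : SortedAt s₀ #S w₀)
    (hw : Set.BijOn w (Set.Iio #S) S) (hs : SortedAt s #S w) :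
    winding n (color ∘ w) = -winding n (color ∘ w₀) := by
  induction hm : #(ascents (Prod.fst ∘ w) #S) using Nat.strong_induction_on generalizing w s
    with | _ m ih =>
  by_cases hasc : ∃ i, i + 1 < #S ∧ (w i).1 < (w (i + 1)).1
  · obtain ⟨i, s', hi, hlt, hs'⟩ := hs.exists_swap hS hw hasc
    have hw' : Set.BijOn (w ∘ Equiv.swap i (i + 1)) (Set.Iio #S) S :=
      hw.comp (Equiv.swap_bijOn_self (by simp; omega))
    rw [← winding_comp_swap hn (by omega) (isBalanced_comp hcard hbal hw)
      (isBalanced_comp hcard hbal hw') (hnb w s hw hs) (hnb _ s' hw' hs')]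
    exact ih _ (hm ▸ card_ascents_comp_swap_lt (x := Prod.fst ∘ w) hi hlt) hw' hs' rfl
  · push Not at hasc
    have hanti : StrictAntiOn (Prod.fst ∘ w) (Set.Iio #S) :=
      strictAntiOn_of_add_one_lt Set.ordConnected_Iio fun i _ hi hi₁ =>
        (hasc i hi₁).lt_of_ne (hS.fst_ne _ (hw.mapsTo hi₁) _ (hw.mapsTo hi)
          fun h => by simpa using hw.injOn hi₁ hi h)
    refine winding_reverse hn (fun j hj => ?_) (hnb w₀ s₀ hw₀ hs₀)
    simp only [Function.comp_apply, ← hcard]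
    rw [eq_rev_of_strictMonoOn_of_strictAntiOn hS.injOn_fst hw₀ hw hmono hanti (j := j)
      (by omega)]

theorem exists_sortedAt_isBalancedWindow (hS : InGeneralPosition S) (color : ℝ × ℝ → Fin 3)
    (hcard : #S = 6 * n) (hbal : ∀ c, #{p ∈ S | color p = c} = 2 * n) :
    ∃ w s, Set.BijOn w (Set.Iio #S) S ∧ SortedAt s #S w ∧
      ∃ k ≤ 3 * n, IsBalancedWindow n (color ∘ w) k := by
  obtain ⟨w₀, s₀, hw₀, hmono, hs₀⟩ := exists_sortedAt_strictMonoOn_fst hS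
  by_contra! hnb
  have h₀ := hnb w₀ s₀ hw₀ hs₀ 0 (Nat.zero_le _)
  have hn : 0 < n := Nat.pos_of_ne_zero fun hn => h₀ fun c => by simp [windowCount, hn]
  have hneg := winding_eq_neg_of_sortedAt hS hn hcard hbal hnb hw₀ hmono hs₀ hw₀ hs₀
  have hmod := winding_emod_six (isBalanced_comp hcard hbal hw₀) h₀
  omega

lemma ncard_mul_neg_eq (hw : Set.BijOn w (Set.Iio #S) S) {K₁ K₂ : ℕ} (hK : K₁ ≤ K₂)
    (hK₂ : K₂ ≤ #S) {m₁ c₁ m₂ c₂ : ℝ}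
    (h₁ : ∀ i < #S, (i < K₁ → intercept m₁ (w i) < c₁) ∧ (K₁ ≤ i → c₁ < intercept m₁ (w i)))
    (h₂ : ∀ i < #S, (i < K₂ → intercept m₂ (w i) < c₂) ∧ (K₂ ≤ i → c₂ < intercept m₂ (w i)))
    (P : ℝ × ℝ → Prop) [DecidablePred P] :
    {p | p ∈ S ∧ P p ∧ (intercept m₁ p - c₁) * (intercept m₂ p - c₂) < 0}.ncard =
      #{i ∈ Ico K₁ K₂ | P (w i)} := by
  have hneg : ∀ i < #S,
      (intercept m₁ (w i) - c₁) * (intercept m₂ (w i) - c₂) < 0 ↔ i ∈ Ico K₁ K₂ := by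
    intro i hi
    obtain ⟨hlt₁, hge₁⟩ := h₁ i hi
    obtain ⟨hlt₂, hge₂⟩ := h₂ i hi
    rw [mem_Ico]
    rcases lt_or_ge i K₁ with hi₁ | hi₁
    · exact iff_of_false (lt_asymm (mul_pos_of_neg_of_neg (sub_neg.mpr (hlt₁ hi₁))
        (sub_neg.mpr (hlt₂ (by omega))))) (by omega)
    rcases lt_or_ge i K₂ with hi₂ | hi₂
    · exact iff_of_true (mul_neg_of_pos_of_neg (sub_pos.mpr (hge₁ hi₁)) (sub_neg.mpr (hlt₂ hi₂)))
        ⟨hi₁, hi₂⟩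
    · exact iff_of_false (lt_asymm (mul_pos (sub_pos.mpr (hge₁ hi₁)) (sub_pos.mpr (hge₂ hi₂))))
        (by omega)
  have hset : {p | p ∈ S ∧ P p ∧ (intercept m₁ p - c₁) * (intercept m₂ p - c₂) < 0} =
      w '' ↑{i ∈ Ico K₁ K₂ | P (w i)} := by
    ext p
    simp only [Set.mem_ofPred_eq, Set.mem_image, coe_filter]
    constructor
    · rintro ⟨hp, hP, hp'⟩
      obtain ⟨i, hi, rfl⟩ := hw.surjOn hp
      exact ⟨i, ⟨(hneg i hi).mp hp', hP⟩, rfl⟩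
    · rintro ⟨i, ⟨hi, hP⟩, rfl⟩
      have hiS : i < #S := by rw [mem_Ico] at hi; omega
      exact ⟨hw.mapsTo hiS, hP, (hneg i hiS).mpr hi⟩
  rw [hset, (hw.injOn.mono fun i hi => ?_).ncard_image, Set.ncard_coe_finset]
  simp only [coe_filter, mem_Ico, Set.mem_ofPred_eq] at hi
  exact Set.mem_Iio.mpr (by omega)

end DoubleWedge

theorem stmt_6_general (n : ℕ)
    (S : Finset (ℝ × ℝ))
    (color : ℝ × ℝ → Fin 3)
    (hbal : ∀ i : Fin 3, (S.filter (fun p => color p = i)).card = 2 * n)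
    (hgen : ∀ p ∈ S, ∀ q ∈ S, ∀ r ∈ S, p ≠ q → p ≠ r → q ≠ r →
      ¬ Collinear ℝ ({p, q, r} : Set (ℝ × ℝ)))
    (hx : ∀ p ∈ S, ∀ q ∈ S, p ≠ q → p.1 ≠ q.1) :
    ∃ m₁ c₁ m₂ c₂ : ℝ, m₁ ≠ m₂ ∧ ∀ i : Fin 3,
      {p : ℝ × ℝ | p ∈ S ∧ color p = i ∧
        (p.2 - m₁ * p.1 - c₁) * (p.2 - m₂ * p.1 - c₂) < 0}.ncard = n := by
  have hS : DoubleWedge.InGeneralPosition S := ⟨hgen, hx⟩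
  have hcard : #S = 6 * n := by
    rw [card_eq_sum_card_fiberwise (f := color) (t := univ) fun p _ => mem_univ _,
      Fin.sum_univ_three, hbal 0, hbal 1, hbal 2]
    ring
  obtain ⟨w, s, hw, hs, k, hk, hwin⟩ :=
    DoubleWedge.exists_sortedAt_isBalancedWindow hS color hcard hbal
  obtain ⟨m₁, -, c₁, h₁⟩ := hs.exists_separating_line hS hw k ∅
  obtain ⟨m₂, hm₂, c₂, h₂⟩ := hs.exists_separating_line hS hw (k + 3 * n) {m₁}
  refine ⟨m₁, c₁, m₂, c₂, fun h => hm₂ (by simp [h]), fun i => ?_⟩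
  rw [← hwin i]
  exact DoubleWedge.ncard_mul_neg_eq hw (by omega) (by omega) h₁ h₂ (color · = i)

/-- **A double wedge containing exactly `n` points of each color.**
For a set of `6n` points in the plane with exactly `2n` points of each of the
three colors (`Fin 3`: 0 = red, 1 = green, 2 = blue), in general position
(no three collinear) with pairwise distinct x- and y-coordinates, there is a
double wedge `{(x,y) | (y - m₁x - c₁)(y - m₂x - c₂) < 0}` (with `m₁ ≠ m₂`)
containing exactly `n` points of each color. -/
theorem stmt_6 (n : ℕ) (hn : 1 ≤ n)
    (S : Finset (ℝ × ℝ))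
    (color : ℝ × ℝ → Fin 3)
    (hbal : ∀ i : Fin 3, (S.filter (fun p => color p = i)).card = 2 * n)
    (hgen : ∀ p ∈ S, ∀ q ∈ S, ∀ r ∈ S, p ≠ q → p ≠ r → q ≠ r →
      ¬ Collinear ℝ ({p, q, r} : Set (ℝ × ℝ)))
    (hx : ∀ p ∈ S, ∀ q ∈ S, p ≠ q → p.1 ≠ q.1)
    (hy : ∀ p ∈ S, ∀ q ∈ S, p ≠ q → p.2 ≠ q.2) :
    ∃ m₁ c₁ m₂ c₂ : ℝ, m₁ ≠ m₂ ∧ ∀ i : Fin 3,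
      {p : ℝ × ℝ | p ∈ S ∧ color p = i ∧
        (p.2 - m₁ * p.1 - c₁) * (p.2 - m₂ * p.1 - c₂) < 0}.ncard = n :=
  stmt_6_general n S color hbal hgen hx
end

section
/- There exists a constant C such that for every integer n ≥ 2 and every integer k with 1 ≤ k ≤ n, there is a finite sequence h₁, h₂, …, h_t of functions, each equal to either f(x) = ⌊x/2⌋ or g(x) = n − x, with t ≤ 2·log₂(n) + C, such that h_t(h_{t−1}(⋯h₁(n)⋯)) = k. -/
/-- Prepending a halving step: if every `m ∈ [u,v]` reaches `k` within `c`
steps, then every `m ∈ [2u, 2v+1] ∩ [0,n]` reaches `k` within `c+1` steps. -/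
private lemma stepF (n k u v c : ℕ)
    (hyp : ∀ m, u ≤ m → m ≤ v → ∃ l : List (ℕ → ℕ),
       (∀ h ∈ l, h = (fun x => x / 2) ∨ h = (fun x => n - x)) ∧
       l.length ≤ c ∧ l.foldl (fun x h => h x) m = k) :
    ∀ m, 2 * u ≤ m → m ≤ 2 * v + 1 → ∃ l : List (ℕ → ℕ),
       (∀ h ∈ l, h = (fun x => x / 2) ∨ h = (fun x => n - x)) ∧
       l.length ≤ c + 1 ∧ l.foldl (fun x h => h x) m = k := by
  intro m hm1 hm2
  obtain ⟨l, h1, h2, h3⟩ := hyp (m / 2) (by omega) (by omega)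
  refine ⟨(fun x => x / 2) :: l, ?_, ?_, ?_⟩
  · intro h hh
    rcases List.mem_cons.mp hh with h' | h'
    · exact Or.inl h'
    · exact h1 h h'
  · simp only [List.length_cons]
    clear h3
    omega
  · simpa using h3

/-- Prepending a reflection step. -/
private lemma stepG (n k u v c : ℕ) (hu : u ≤ n) (hv : v ≤ n)
    (hyp : ∀ m, u ≤ m → m ≤ v → ∃ l : List (ℕ → ℕ),
       (∀ h ∈ l, h = (fun x => x / 2) ∨ h = (fun x => n - x)) ∧
       l.length ≤ c ∧ l.foldl (fun x h => h x) m = k) :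
    ∀ m, n - v ≤ m → m ≤ n - u → ∃ l : List (ℕ → ℕ),
       (∀ h ∈ l, h = (fun x => x / 2) ∨ h = (fun x => n - x)) ∧
       l.length ≤ c + 1 ∧ l.foldl (fun x h => h x) m = k := by
  intro m hm1 hm2
  obtain ⟨l, h1, h2, h3⟩ := hyp (n - m) (by omega) (by omega)
  refine ⟨(fun x => n - x) :: l, ?_, ?_, ?_⟩
  · intro h hh
    rcases List.mem_cons.mp hh with h' | h'
    · exact Or.inr h'
    · exact h1 h h'
  · simp only [List.length_cons]
    clear h3
    omega
  · simpa using h3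

/-- Main interval-growing induction: if `[u,v] ⊆ [0,n]` consists of values
reaching `k` within `c` steps, and `(v+1-u) * 2^s > n`, then `n` reaches `k`
within `c + 2s` steps. -/
private lemma reachA (n k : ℕ) : ∀ s u v c : ℕ, u ≤ v → v ≤ n →
    n + 1 ≤ (v + 1 - u) * 2 ^ s →
    (∀ m, u ≤ m → m ≤ v → ∃ l : List (ℕ → ℕ),
       (∀ h ∈ l, h = (fun x => x / 2) ∨ h = (fun x => n - x)) ∧
       l.length ≤ c ∧ l.foldl (fun x h => h x) m = k) →
    ∃ l : List (ℕ → ℕ),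
       (∀ h ∈ l, h = (fun x => x / 2) ∨ h = (fun x => n - x)) ∧
       l.length ≤ c + 2 * s ∧ l.foldl (fun x h => h x) n = k := by
  intro s
  induction s with
  | zero =>
    intro u v c huv hv hlen hyp
    rw [pow_zero, mul_one] at hlen
    obtain ⟨l, h1, h2, h3⟩ := hyp n (by omega) (by omega)
    exact ⟨l, h1, by clear h3; omega, h3⟩
  | succ s ih =>
    intro u v c huv hv hlen hyp
    by_cases hnv : n ≤ v
    · obtain ⟨l, h1, h2, h3⟩ := hyp n (by omega) (by omega)
      exact ⟨l, h1, by clear h3; omega, h3⟩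
    by_cases h2u : 2 * u ≤ n
    · -- halving step applies directly
      have hyp' := stepF n k u v c hyp
      by_cases hclip : n ≤ 2 * v + 1
      · obtain ⟨l, h1, h2, h3⟩ := hyp' n h2u hclip
        exact ⟨l, h1, by clear h3; omega, h3⟩
      · have hlen' : n + 1 ≤ (2 * v + 1 + 1 - 2 * u) * 2 ^ s := by
          have he : 2 * v + 1 + 1 - 2 * u = (v + 1 - u) * 2 := by omega
          rw [he, mul_assoc, ← pow_succ']
          exact hlen
        obtain ⟨l, h1, h2, h3⟩ :=
          ih (2 * u) (2 * v + 1) (c + 1) (by omega) (by omega) hlen' hyp'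
        exact ⟨l, h1, by clear h3; omega, h3⟩
    · -- reflect first, then halve
      have hypG := stepG n k u v c (by omega) hv hyp
      have hyp' := stepF n k (n - v) (n - u) (c + 1) hypG
      by_cases hclip : n ≤ 2 * (n - u) + 1
      · obtain ⟨l, h1, h2, h3⟩ := hyp' n (by omega) hclip
        exact ⟨l, h1, by clear h3; omega, h3⟩
      · have hlen' : n + 1 ≤ (2 * (n - u) + 1 + 1 - 2 * (n - v)) * 2 ^ s := by
          have he : 2 * (n - u) + 1 + 1 - 2 * (n - v) = (v + 1 - u) * 2 := by omega
          rw [he, mul_assoc, ← pow_succ']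
          exact hlen
        obtain ⟨l, h1, h2, h3⟩ :=
          ih (2 * (n - v)) (2 * (n - u) + 1) (c + 2) (by omega) (by omega) hlen' hyp'
        exact ⟨l, h1, by clear h3; omega, h3⟩

/-- **Arithmetic lemma.**
There is a constant `C` such that for every `n ≥ 2` and every `k` with
`1 ≤ k ≤ n`, the number `k` can be obtained from `n` by applying at most
`2 log₂ n + C` functions, each equal to `f(x) = ⌊x/2⌋` or `g(x) = n - x`
(all values involved lie in `{0, …, n}`, so natural subtraction and division
agree with the integer operations). -/
theorem stmt_8 : ∃ C : ℝ, ∀ n : ℕ, 2 ≤ n → ∀ k : ℕ, 1 ≤ k → k ≤ n →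
    ∃ l : List (ℕ → ℕ),
      (∀ h ∈ l, h = (fun x => x / 2) ∨ h = (fun x => n - x)) ∧
      (l.length : ℝ) ≤ 2 * Real.logb 2 n + C ∧
      l.foldl (fun x h => h x) n = k := by
  refine ⟨2, ?_⟩
  intro n hn k hk1 hk2
  have hstart : ∀ m, k ≤ m → m ≤ k → ∃ l : List (ℕ → ℕ),
      (∀ h ∈ l, h = (fun x => x / 2) ∨ h = (fun x => n - x)) ∧
      l.length ≤ 0 ∧ l.foldl (fun x h => h x) m = k := by
    intro m h1 h2
    have : m = k := le_antisymm h2 h1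
    exact ⟨[], by simp, by simp, by simp [this]⟩
  have hpow : n + 1 ≤ (k + 1 - k) * 2 ^ (Nat.log 2 n + 1) := by
    have := Nat.lt_pow_succ_log_self (by norm_num : 1 < 2) n
    have hkk : k + 1 - k = 1 := by omega
    rw [hkk, one_mul]; omega
  obtain ⟨l, hmem, hlen, hfold⟩ :=
    reachA n k (Nat.log 2 n + 1) k k 0 le_rfl hk2 hpow hstart
  refine ⟨l, hmem, ?_, hfold⟩
  have h1 : (Nat.log 2 n : ℝ) ≤ Real.logb 2 n := Real.natLog_le_logb n 2
  have h2 : l.length ≤ 2 * Nat.log 2 n + 2 := by clear hfold; omega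
  have h3 : (l.length : ℝ) ≤ 2 * (Nat.log 2 n : ℝ) + 2 := by
    exact_mod_cast Nat.cast_le.mpr h2
  nlinarith [h1]
end

section
/- Let S ⊆ ℤ² be a set of 3n points (n ≥ 2), consisting of exactly n red, n green, and n blue points, in general position in the lattice (no two points of S have the same x-coordinate and no two have the same y-coordinate). Suppose that the orthogonal convex hull of S is monochromatic red, i.e., every point p ∈ S such that at least one of the four closed axis-parallel quadrants with apex p contains no point of S other than p is red. Then there exists a nontrivial balanced L-line: there exist an integer k with 1 ≤ k ≤ n − 1 and a region T ⊆ ℝ² of one of the following forms — an open axis-parallel halfplane {q : q₁ < a}, {q : q₁ > a}, {q : q₂ < b}, or {q : q₂ > b}, or an open axis-parallel quadrant {q : ±(q₁ − a) > 0 and ±(q₂ − b) > 0} for some a, b ∈ ℝ (any of the four sign combinations) — such that T contains exactly k red points, exactly k green points, and exactly k blue points of S. -/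
/-- quadrant label of a nonzero lattice vector (junk value at 0) -/
def qlab (u : ℤ × ℤ) : ℤ :=
  if 0 < u.1 ∧ 0 ≤ u.2 then 0 else if u.1 ≤ 0 ∧ 0 < u.2 then 1
  else if u.1 < 0 ∧ u.2 ≤ 0 then 2 else 3

/-- quarter-turn counter between labels -/
def tau (u v : ℤ × ℤ) : ℤ :=
  if (qlab v - qlab u) % 4 = 1 then 1 else if (qlab v - qlab u) % 4 = 3 then -1 else 0

/-- the six possible increments of the count vector -/
def step6 (d : ℤ × ℤ) : Prop :=
  (d.1 = 1 ∧ d.2 = 1) ∨ (d.1 = -1 ∧ d.2 = -1) ∨ (d.1 = 1 ∧ d.2 = 0) ∨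
  (d.1 = -1 ∧ d.2 = 0) ∨ (d.1 = 0 ∧ d.2 = 1) ∨ (d.1 = 0 ∧ d.2 = -1)

lemma step6_neg {d : ℤ × ℤ} (h : step6 d) : step6 (-d) := by
  unfold step6 at *; rcases d with ⟨x, y⟩; simp only [Prod.fst_neg, Prod.snd_neg] at *; omega

lemma qlab_cases (u : ℤ × ℤ) (hu : u ≠ 0) :
    (0 < u.1 ∧ 0 ≤ u.2 ∧ qlab u = 0) ∨ (u.1 ≤ 0 ∧ 0 < u.2 ∧ qlab u = 1) ∨
    (u.1 < 0 ∧ u.2 ≤ 0 ∧ qlab u = 2) ∨ (u.2 < 0 ∧ 0 ≤ u.1 ∧ qlab u = 3) := by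
  have h : ¬(u.1 = 0 ∧ u.2 = 0) := by
    intro h; exact hu (Prod.ext_iff.mpr ⟨h.1, h.2⟩)
  unfold qlab; split_ifs <;> omega

lemma qlab_range (u : ℤ × ℤ) : 0 ≤ qlab u ∧ qlab u ≤ 3 := by
  unfold qlab; split_ifs <;> omega

lemma tau_self (u : ℤ × ℤ) : tau u u = 0 := by
  unfold tau; norm_num

lemma tau_bound (u v : ℤ × ℤ) : -1 ≤ tau u v ∧ tau u v ≤ 1 := by
  unfold tau; split_ifs <;> omega

lemma tau_antisymm (u v : ℤ × ℤ) : tau v u = - tau u v := by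
  unfold tau; split_ifs <;> omega

lemma qlab_neg (u : ℤ × ℤ) (hu : u ≠ 0) : qlab (-u) = (qlab u + 2) % 4 := by
  have h1 := qlab_cases u hu
  have h2 := qlab_cases (-u) (neg_ne_zero.mpr hu)
  simp only [Prod.fst_neg, Prod.snd_neg] at h2
  omega

lemma tau_neg (u v : ℤ × ℤ) (hu : u ≠ 0) (hv : v ≠ 0) : tau (-u) (-v) = tau u v := by
  have h1 := qlab_neg u hu
  have h2 := qlab_neg v hv
  have r1 := qlab_range u
  have r2 := qlab_range v
  unfold tau; rw [h1, h2]; split_ifs <;> omega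

/-- a small step never jumps to the opposite quadrant -/
lemma edge_not2 (u v : ℤ × ℤ) (hu : u ≠ 0) (hv : v ≠ 0) (h : step6 (v - u)) :
    (qlab v - qlab u) % 4 ≠ 2 := by
  have h1 := qlab_cases u hu
  have h2 := qlab_cases v hv
  unfold step6 at h
  simp only [Prod.fst_sub, Prod.snd_sub] at h
  omega

lemma edge_mod (u v : ℤ × ℤ) (hu : u ≠ 0) (hv : v ≠ 0) (h : v = u ∨ step6 (v - u)) :
    tau u v % 4 = (qlab v - qlab u) % 4 := by
  rcases h with h | h
  · subst h; rw [tau_self]; norm_num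
  · have := edge_not2 u v hu hv h
    unfold tau; split_ifs <;> omega

/-- structure of a +1 transition along a small step -/
lemma trans1 (u v : ℤ × ℤ) (hu : u ≠ 0) (hv : v ≠ 0) (h6 : step6 (v - u))
    (h : (qlab v - qlab u) % 4 = 1) :
    (qlab v = qlab u + 1 ∨ (qlab u = 3 ∧ qlab v = 0)) ∧
    (qlab u = 0 → 1 ≤ u.2) ∧ (qlab u = 3 → v.2 = 0) := by
  have h1 := qlab_cases u hu
  have h2 := qlab_cases v hv
  unfold step6 at h6
  simp only [Prod.fst_sub, Prod.snd_sub] at h6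
  omega

/-- no 4-cycle of small steps can make four +1 transitions -/
lemma cycle4 (w0 w1 w2 w3 : ℤ × ℤ) (n0 : w0 ≠ 0) (n1 : w1 ≠ 0) (n2 : w2 ≠ 0) (n3 : w3 ≠ 0)
    (s01 : step6 (w1 - w0)) (s12 : step6 (w2 - w1)) (s23 : step6 (w3 - w2))
    (s30 : step6 (w0 - w3))
    (t01 : tau w0 w1 = 1) (t12 : tau w1 w2 = 1) (t23 : tau w2 w3 = 1)
    (t30 : tau w3 w0 = 1) : False := by
  have m01 : (qlab w1 - qlab w0) % 4 = 1 := by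
    unfold tau at t01; split_ifs at t01 <;> omega
  have m12 : (qlab w2 - qlab w1) % 4 = 1 := by
    unfold tau at t12; split_ifs at t12 <;> omega
  have m23 : (qlab w3 - qlab w2) % 4 = 1 := by
    unfold tau at t23; split_ifs at t23 <;> omega
  have m30 : (qlab w0 - qlab w3) % 4 = 1 := by
    unfold tau at t30; split_ifs at t30 <;> omega
  have a01 := trans1 w0 w1 n0 n1 s01 m01
  have a12 := trans1 w1 w2 n1 n2 s12 m12
  have a23 := trans1 w2 w3 n2 n3 s23 m23
  have a30 := trans1 w3 w0 n3 n0 s30 m30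
  have r0 := qlab_range w0
  have r1 := qlab_range w1
  have r2 := qlab_range w2
  have r3 := qlab_range w3
  omega

/-- the sum of tau around any 4-cycle of small steps (or trivial steps) is 0 -/
lemma cell_zero (w0 w1 w2 w3 : ℤ × ℤ) (n0 : w0 ≠ 0) (n1 : w1 ≠ 0) (n2 : w2 ≠ 0) (n3 : w3 ≠ 0)
    (e01 : w1 = w0 ∨ step6 (w1 - w0)) (e12 : w2 = w1 ∨ step6 (w2 - w1))
    (e23 : w3 = w2 ∨ step6 (w3 - w2)) (e30 : w0 = w3 ∨ step6 (w0 - w3)) :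
    tau w0 w1 + tau w1 w2 + tau w2 w3 + tau w3 w0 = 0 := by
  have b01 := tau_bound w0 w1
  have b12 := tau_bound w1 w2
  have b23 := tau_bound w2 w3
  have b30 := tau_bound w3 w0
  have m01 := edge_mod w0 w1 n0 n1 e01
  have m12 := edge_mod w1 w2 n1 n2 e12
  have m23 := edge_mod w2 w3 n2 n3 e23
  have m30 := edge_mod w3 w0 n3 n0 e30
  -- the sum is ≡ 0 mod 4 and lies in [-4,4]
  by_contra hne
  have hsum : tau w0 w1 + tau w1 w2 + tau w2 w3 + tau w3 w0 = 4 ∨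
      tau w0 w1 + tau w1 w2 + tau w2 w3 + tau w3 w0 = -4 := by omega
  rcases hsum with h4 | h4
  · -- all four are 1
    have ht : tau w0 w1 = 1 ∧ tau w1 w2 = 1 ∧ tau w2 w3 = 1 ∧ tau w3 w0 = 1 := by omega
    obtain ⟨t01, t12, t23, t30⟩ := ht
    have s01 : step6 (w1 - w0) := by
      rcases e01 with h | h
      · exfalso; rw [h, tau_self] at t01; omega
      · exact h
    have s12 : step6 (w2 - w1) := by
      rcases e12 with h | h
      · exfalso; rw [h, tau_self] at t12; omega
      · exact h
    have s23 : step6 (w3 - w2) := by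
      rcases e23 with h | h
      · exfalso; rw [h, tau_self] at t23; omega
      · exact h
    have s30 : step6 (w0 - w3) := by
      rcases e30 with h | h
      · exfalso; rw [h, tau_self] at t30; omega
      · exact h
    exact cycle4 w0 w1 w2 w3 n0 n1 n2 n3 s01 s12 s23 s30 t01 t12 t23 t30
  · -- all four are -1 : reverse the cycle
    have ht : tau w0 w1 = -1 ∧ tau w1 w2 = -1 ∧ tau w2 w3 = -1 ∧ tau w3 w0 = -1 := by omega
    obtain ⟨t01, t12, t23, t30⟩ := ht
    have t01' : tau w1 w0 = 1 := by rw [tau_antisymm]; omega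
    have t12' : tau w2 w1 = 1 := by rw [tau_antisymm]; omega
    have t23' : tau w3 w2 = 1 := by rw [tau_antisymm]; omega
    have t30' : tau w0 w3 = 1 := by rw [tau_antisymm]; omega
    have s01 : step6 (w0 - w1) := by
      rcases e01 with h | h
      · exfalso; rw [h, tau_self] at t01; omega
      · have := step6_neg h; simpa using this
    have s12 : step6 (w1 - w2) := by
      rcases e12 with h | h
      · exfalso; rw [h, tau_self] at t12; omega
      · have := step6_neg h; simpa using this
    have s23 : step6 (w2 - w3) := by
      rcases e23 with h | h
      · exfalso; rw [h, tau_self] at t23; omega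
      · have := step6_neg h; simpa using this
    have s30 : step6 (w3 - w0) := by
      rcases e30 with h | h
      · exfalso; rw [h, tau_self] at t30; omega
      · have := step6_neg h; simpa using this
    exact cycle4 w0 w3 w2 w1 n0 n3 n2 n1 s30 s23 s12 s01 t30' t23' t12' t01'


section Ranks
variable (S : Finset (ℤ × ℤ)) (f : ℤ × ℤ → ℤ)

/-- rank of a point w.r.t. coordinate `f` -/
def rkf (p : ℤ × ℤ) : ℕ := (S.filter (fun q => f q < f p)).card

lemma rk_mono {p q : ℤ × ℤ} (h : f p ≤ f q) : rkf S f p ≤ rkf S f q := by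
  apply Finset.card_le_card
  intro r hr
  simp only [Finset.mem_filter] at hr ⊢
  exact ⟨hr.1, by omega⟩

lemma rk_strict {p q : ℤ × ℤ} (hp : p ∈ S) (h : f p < f q) : rkf S f p < rkf S f q := by
  apply Finset.card_lt_card
  constructor
  · intro r hr
    simp only [Finset.mem_filter] at hr ⊢
    exact ⟨hr.1, by omega⟩
  · intro hsub
    have : p ∈ S.filter (fun r => f r < f q) := by
      simp only [Finset.mem_filter]; exact ⟨hp, h⟩
    have := hsub this
    simp only [Finset.mem_filter] at this
    omega

lemma rk_lt_card {p : ℤ × ℤ} (hp : p ∈ S) : rkf S f p < S.card := by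
  have hsub : S.filter (fun q => f q < f p) ⊆ S.erase p := by
    intro r hr
    simp only [Finset.mem_filter] at hr
    exact Finset.mem_erase.mpr ⟨by rintro rfl; omega, hr.1⟩
  calc rkf S f p ≤ (S.erase p).card := Finset.card_le_card hsub
    _ < S.card := Finset.card_erase_lt_of_mem hp

variable (hinj : ∀ p ∈ S, ∀ q ∈ S, p ≠ q → f p ≠ f q)

include hinj in
lemma rk_injOn : ∀ p ∈ S, ∀ q ∈ S, rkf S f p = rkf S f q → p = q := by
  intro p hp q hq hrk
  by_contra hne
  have hfne := hinj p hp q hq hne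
  rcases lt_or_gt_of_ne hfne with h | h
  · have := rk_strict S f hp h; omega
  · have := rk_strict S f hq h; omega

include hinj in
lemma rk_image : S.image (rkf S f) = Finset.range S.card := by
  apply Finset.eq_of_subset_of_card_le
  · intro x hx
    simp only [Finset.mem_image] at hx
    obtain ⟨p, hp, rfl⟩ := hx
    exact Finset.mem_range.mpr (rk_lt_card S f hp)
  · rw [Finset.card_range, Finset.card_image_of_injOn]
    intro p hp q hq
    exact rk_injOn S f hinj p hp q hq

include hinj in
lemma rk_count (i : ℕ) : (S.filter (fun p => rkf S f p < i)).card = min i S.card := by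
  have h1 : (S.filter (fun p => rkf S f p < i)).card
      = ((S.filter (fun p => rkf S f p < i)).image (rkf S f)).card := by
    rw [Finset.card_image_of_injOn]
    intro p hp q hq
    have hp' := Finset.mem_of_mem_filter p hp
    have hq' := Finset.mem_of_mem_filter q hq
    exact rk_injOn S f hinj p hp' q hq'
  have h2 : (S.filter (fun p => rkf S f p < i)).image (rkf S f)
      = (S.image (rkf S f)).filter (fun x => x < i) := by
    rw [Finset.filter_image]
  have h3 : (Finset.range S.card).filter (fun x => x < i) = Finset.range (min i S.card) := by
    ext a
    simp only [Finset.mem_filter, Finset.mem_range]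
    omega
  rw [h1, h2, rk_image S f hinj, h3, Finset.card_range]

end Ranks


section P3
variable (S : Finset (ℤ × ℤ)) (color : ℤ × ℤ → Fin 3)

def phiv (F : Finset (ℤ × ℤ)) : ℤ × ℤ :=
  (((F.filter (fun p => color p = 0)).card : ℤ) - ((F.filter (fun p => color p = 1)).card : ℤ),
   ((F.filter (fun p => color p = 0)).card : ℤ) - ((F.filter (fun p => color p = 2)).card : ℤ))

def cvec : Fin 3 → ℤ × ℤ := fun c => if c = 0 then (1,1) else if c = 1 then (-1,0) else (0,-1)

lemma fin3_cases (c : Fin 3) : c = 0 ∨ c = 1 ∨ c = 2 := by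
  have h3 := c.isLt
  simp only [Fin.ext_iff]
  omega

lemma phiv_insert (F : Finset (ℤ × ℤ)) (p : ℤ × ℤ) (hp : p ∉ F) :
    phiv color (insert p F) = phiv color F + cvec (color p) := by
  have h : ∀ c : Fin 3, ((insert p F).filter (fun q => color q = c)).card
      = (F.filter (fun q => color q = c)).card + (if color p = c then 1 else 0) := by
    intro c
    rw [Finset.filter_insert]
    split_ifs with h
    · rw [Finset.card_insert_of_notMem (fun hc => hp (Finset.mem_of_mem_filter p hc))]
    · omega
  have h0 := h 0; have h1 := h 1; have h2 := h 2
  rcases fin3_cases (color p) with hc | hc | hc <;>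
    rw [hc] at h0 h1 h2 ⊢ <;>
    simp only [Fin.reduceEq, reduceIte, if_true, if_false, eq_self_iff_true] at h0 h1 h2 <;>
    simp only [phiv, cvec, h0, h1, h2, Fin.reduceEq, reduceIte, if_true, if_false,
      Prod.ext_iff, Prod.fst_add, Prod.snd_add] <;>
    refine ⟨by push_cast; omega, by push_cast; omega⟩

lemma card_eq_three_counts (F : Finset (ℤ × ℤ)) :
    F.card = (F.filter (fun p => color p = 0)).card + (F.filter (fun p => color p = 1)).card
      + (F.filter (fun p => color p = 2)).card := by
  have := Finset.card_eq_sum_card_fiberwise (f := color) (s := F) (t := Finset.univ)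
    (fun p _ => Finset.mem_univ _)
  rw [this, Fin.sum_univ_three]

lemma phiv_sdiff (F R : Finset (ℤ × ℤ)) (h : R ⊆ F) :
    phiv color (F \ R) = phiv color F - phiv color R := by
  have key : ∀ c : Fin 3, ((F \ R).filter (fun q => color q = c))
      = F.filter (fun q => color q = c) \ R.filter (fun q => color q = c) := by
    intro c
    ext a
    simp only [Finset.mem_filter, Finset.mem_sdiff]
    tauto
  have hs : ∀ c : Fin 3, (R.filter (fun q => color q = c)) ⊆ F.filter (fun q => color q = c) :=
    fun c => Finset.filter_subset_filter _ h
  have hcard : ∀ c : Fin 3, ((F \ R).filter (fun q => color q = c)).card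
      = (F.filter (fun q => color q = c)).card - (R.filter (fun q => color q = c)).card := by
    intro c; rw [key c, Finset.card_sdiff_of_subset (hs c)]
  have h0 := hcard 0; have h1 := hcard 1; have h2 := hcard 2
  have l0 := Finset.card_le_card (hs 0)
  have l1 := Finset.card_le_card (hs 1)
  have l2 := Finset.card_le_card (hs 2)
  simp only [phiv, Prod.ext_iff, Prod.fst_sub, Prod.snd_sub, h0, h1, h2]
  constructor <;> push_cast [Nat.cast_sub l0, Nat.cast_sub l1, Nat.cast_sub l2] <;> ring

end P3




section P4
variable (S : Finset (ℤ × ℤ)) (N : ℕ)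

/-- the grid of regions: for `t ≤ N` a SW-quadrant, for `t > N` a NW-quadrant -/
def regq (i t : ℕ) : Finset (ℤ × ℤ) :=
  if t ≤ N then S.filter (fun p => rkf S Prod.fst p < i ∧ rkf S Prod.snd p < t)
  else S.filter (fun p => rkf S Prod.fst p < i ∧ t - N ≤ rkf S Prod.snd p)

lemma regq_subset (i t : ℕ) : regq S N i t ⊆ S := by
  unfold regq; split_ifs <;> exact Finset.filter_subset _ _

lemma regq_t0 (i : ℕ) : regq S N i 0 = ∅ := by
  unfold regq
  rw [if_pos (Nat.zero_le N)]
  apply Finset.filter_false_of_mem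
  intro p _
  omega

lemma regq_i0 (t : ℕ) : regq S N 0 t = ∅ := by
  unfold regq; split_ifs <;> (apply Finset.filter_false_of_mem; intro p _; omega)

lemma regq_top (hN : 1 ≤ N) (hcard : S.card = N) (i : ℕ) : regq S N i (2*N) = ∅ := by
  unfold regq
  rw [if_neg (by omega)]
  apply Finset.filter_false_of_mem
  intro p hp
  have := rk_lt_card S Prod.snd hp
  omega

lemma regq_full (hcard : S.card = N) : regq S N N N = S := by
  unfold regq
  rw [if_pos (le_refl N)]
  apply Finset.filter_true_of_mem
  intro p hp
  exact ⟨hcard ▸ rk_lt_card S Prod.fst hp, hcard ▸ rk_lt_card S Prod.snd hp⟩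

lemma regq_h_subset (i t : ℕ) : regq S N i t ⊆ regq S N (i+1) t := by
  unfold regq; split_ifs <;>
  · intro p hp
    simp only [Finset.mem_filter] at hp ⊢
    exact ⟨hp.1, by omega, hp.2.2⟩

lemma regq_h_diff (i t : ℕ) :
    regq S N (i+1) t \ regq S N i t ⊆ S.filter (fun p => rkf S Prod.fst p = i) := by
  unfold regq; split_ifs <;>
  · intro p hp
    simp only [Finset.mem_sdiff, Finset.mem_filter] at hp ⊢
    refine ⟨hp.1.1, ?_⟩
    have h2 := hp.2
    by_contra hne
    exact h2 ⟨hp.1.1, by omega, hp.1.2.2⟩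

lemma regq_v_low_subset (i t : ℕ) (ht : t < N) : regq S N i t ⊆ regq S N i (t+1) := by
  unfold regq
  rw [if_pos (by omega), if_pos (by omega)]
  intro p hp
  simp only [Finset.mem_filter] at hp ⊢
  exact ⟨hp.1, hp.2.1, by omega⟩

lemma regq_v_low_diff (i t : ℕ) (ht : t < N) :
    regq S N i (t+1) \ regq S N i t ⊆ S.filter (fun p => rkf S Prod.snd p = t) := by
  unfold regq
  rw [if_pos (by omega), if_pos (by omega)]
  intro p hp
  simp only [Finset.mem_sdiff, Finset.mem_filter] at hp ⊢
  refine ⟨hp.1.1, ?_⟩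
  have h2 := hp.2
  by_contra hne
  exact h2 ⟨hp.1.1, hp.1.2.1, by omega⟩

lemma regq_v_high_subset (hcard : S.card = N) (i t : ℕ) (ht : N ≤ t) :
    regq S N i (t+1) ⊆ regq S N i t := by
  unfold regq
  rw [if_neg (show ¬(t+1 ≤ N) by omega)]
  by_cases h : t ≤ N
  · rw [if_pos h]
    intro p hp
    simp only [Finset.mem_filter] at hp ⊢
    have := rk_lt_card S Prod.snd hp.1
    exact ⟨hp.1, hp.2.1, by omega⟩
  · rw [if_neg h]
    intro p hp
    simp only [Finset.mem_filter] at hp ⊢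
    exact ⟨hp.1, hp.2.1, by omega⟩

lemma regq_v_high_diff (hcard : S.card = N) (i t : ℕ) (ht : N ≤ t) :
    regq S N i t \ regq S N i (t+1) ⊆ S.filter (fun p => rkf S Prod.snd p = t - N) := by
  unfold regq
  rw [if_neg (show ¬(t+1 ≤ N) by omega)]
  by_cases h : t ≤ N
  · rw [if_pos h]
    intro p hp
    simp only [Finset.mem_sdiff, Finset.mem_filter] at hp ⊢
    refine ⟨hp.1.1, ?_⟩
    have h2 := hp.2
    by_contra hne
    exact h2 ⟨hp.1.1, hp.1.2.1, by omega⟩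
  · rw [if_neg h]
    intro p hp
    simp only [Finset.mem_sdiff, Finset.mem_filter] at hp ⊢
    refine ⟨hp.1.1, ?_⟩
    have h2 := hp.2
    by_contra hne
    exact h2 ⟨hp.1.1, hp.1.2.1, by omega⟩

end P4

/-- generic dichotomy: a superset whose difference is a subsingleton -/
lemma subset_dich {α : Type*} [DecidableEq α] (R R' : Finset α) (hsub : R ⊆ R')
    (hss : ∀ p ∈ R' \ R, ∀ q ∈ R' \ R, p = q) :
    R' = R ∨ ∃ p, p ∉ R ∧ R' = insert p R := by
  by_cases h : R' \ R = ∅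
  · left
    apply Finset.Subset.antisymm _ hsub
    intro x hx
    by_contra hxR
    have : x ∈ R' \ R := Finset.mem_sdiff.mpr ⟨hx, hxR⟩
    rw [h] at this
    exact absurd this (Finset.notMem_empty x)
  · right
    obtain ⟨p, hp⟩ := Finset.nonempty_iff_ne_empty.mpr h
    have hpd := Finset.mem_sdiff.mp hp
    refine ⟨p, hpd.2, ?_⟩
    ext x
    simp only [Finset.mem_insert]
    constructor
    · intro hx
      by_cases hxR : x ∈ R
      · exact Or.inr hxR
      · exact Or.inl (hss x (Finset.mem_sdiff.mpr ⟨hx, hxR⟩) p hp)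
    · rintro (rfl | hx)
      · exact hpd.1
      · exact hsub hx


section P5
variable (S : Finset (ℤ × ℤ)) (color : ℤ × ℤ → Fin 3) (N : ℕ)

/-- a singleton region lies on the orthogonal hull, hence red -/
lemma single_red
    (hhull : ∀ p ∈ S,
      ((∀ q ∈ S, q ≠ p → ¬(p.1 ≤ q.1 ∧ p.2 ≤ q.2)) ∨
       (∀ q ∈ S, q ≠ p → ¬(p.1 ≤ q.1 ∧ q.2 ≤ p.2)) ∨
       (∀ q ∈ S, q ≠ p → ¬(q.1 ≤ p.1 ∧ p.2 ≤ q.2)) ∨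
       (∀ q ∈ S, q ≠ p → ¬(q.1 ≤ p.1 ∧ q.2 ≤ p.2))) → color p = 0)
    (i t : ℕ) (p : ℤ × ℤ) (h : regq S N i t = {p}) : color p = 0 := by
  have hp : p ∈ regq S N i t := h ▸ Finset.mem_singleton_self p
  have hq : ∀ q, q ∈ regq S N i t → q = p := by
    intro q hq; rw [h] at hq; exact Finset.mem_singleton.mp hq
  unfold regq at hp hq
  by_cases ht : t ≤ N
  · rw [if_pos ht] at hp hq
    simp only [Finset.mem_filter] at hp
    apply hhull p hp.1
    right; right; right
    intro q hqS hne ⟨hx, hy⟩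
    apply hne
    apply hq
    simp only [Finset.mem_filter]
    have h1 := rk_mono S Prod.fst hx
    have h2 := rk_mono S Prod.snd hy
    exact ⟨hqS, by omega, by omega⟩
  · rw [if_neg ht] at hp hq
    simp only [Finset.mem_filter] at hp
    apply hhull p hp.1
    right; right; left
    intro q hqS hne ⟨hx, hy⟩
    apply hne
    apply hq
    simp only [Finset.mem_filter]
    have h1 := rk_mono S Prod.fst hx
    have h2 := rk_mono S Prod.snd hy
    exact ⟨hqS, by omega, by omega⟩

/-- a co-singleton region: the missing point lies on the hull, hence red -/
lemma cosingle_red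
    (hhull : ∀ p ∈ S,
      ((∀ q ∈ S, q ≠ p → ¬(p.1 ≤ q.1 ∧ p.2 ≤ q.2)) ∨
       (∀ q ∈ S, q ≠ p → ¬(p.1 ≤ q.1 ∧ q.2 ≤ p.2)) ∨
       (∀ q ∈ S, q ≠ p → ¬(q.1 ≤ p.1 ∧ p.2 ≤ q.2)) ∨
       (∀ q ∈ S, q ≠ p → ¬(q.1 ≤ p.1 ∧ q.2 ≤ p.2))) → color p = 0)
    (i t : ℕ) (p : ℤ × ℤ) (h : S \ regq S N i t = {p}) : color p = 0 := by
  have hp : p ∈ S \ regq S N i t := h ▸ Finset.mem_singleton_self p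
  have hq : ∀ q, q ∈ S \ regq S N i t → q = p := by
    intro q hq; rw [h] at hq; exact Finset.mem_singleton.mp hq
  rw [Finset.mem_sdiff] at hp
  unfold regq at hp hq
  by_cases ht : t ≤ N
  · rw [if_pos ht] at hp hq
    apply hhull p hp.1
    left
    intro q hqS hne ⟨hx, hy⟩
    apply hne
    apply hq
    rw [Finset.mem_sdiff]
    refine ⟨hqS, ?_⟩
    intro hmem
    simp only [Finset.mem_filter] at hmem
    have h1 := rk_mono S Prod.fst hx
    have h2 := rk_mono S Prod.snd hy
    have h3 := hp.2
    apply h3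
    simp only [Finset.mem_filter]
    exact ⟨hp.1, by omega, by omega⟩
  · rw [if_neg ht] at hp hq
    apply hhull p hp.1
    right; left
    intro q hqS hne ⟨hx, hy⟩
    apply hne
    apply hq
    rw [Finset.mem_sdiff]
    refine ⟨hqS, ?_⟩
    intro hmem
    simp only [Finset.mem_filter] at hmem
    have h1 := rk_mono S Prod.fst hx
    have h2 := rk_mono S Prod.snd hy
    have h3 := hp.2
    apply h3
    simp only [Finset.mem_filter]
    exact ⟨hp.1, by omega, by omega⟩

/-- the (modified) count vector of a region -/
def psiF (F : Finset (ℤ × ℤ)) : ℤ × ℤ :=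
  if F = ∅ then (1,1) else if F = S then (-1,-1) else phiv color F

lemma cvec_step6 (c : Fin 3) : step6 (cvec c) := by
  rcases fin3_cases c with hc | hc | hc <;> subst hc <;>
    simp [cvec, step6]

lemma phiv_empty : phiv color ∅ = 0 := by
  simp [phiv]

/-- key step lemma: along an edge the psi-value either stays or moves by a small step -/
lemma psiF_step (hN : 2 ≤ S.card) (hphiS : phiv color S = 0)
    (R R' : Finset (ℤ × ℤ)) (hR'S : R' ⊆ S)
    (hdich : R' = R ∨ ∃ p, p ∉ R ∧ R' = insert p R ∧ (R = ∅ → color p = 0) ∧ (R' = S → color p = 0)) :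
    psiF S color R' = psiF S color R ∨ step6 (psiF S color R' - psiF S color R) := by
  rcases hdich with rfl | ⟨p, hpR, rfl, hred1, hred2⟩
  · exact Or.inl rfl
  have hpS : p ∈ S := hR'S (Finset.mem_insert_self p R)
  have hRS : R ⊆ S := fun x hx => hR'S (Finset.mem_insert_of_mem hx)
  have hRneS : R ≠ S := by
    intro h; rw [← h] at hpS; exact hpR hpS
  have hins : insert p R ≠ ∅ := Finset.insert_ne_empty p R
  by_cases hRe : R = ∅
  · -- singleton case
    subst hRe
    have hred := hred1 rfl
    have hsne : insert p (∅ : Finset (ℤ × ℤ)) ≠ S := by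
      intro h
      have : S.card = 1 := by rw [← h]; simp
      omega
    left
    unfold psiF
    rw [if_neg hins, if_neg hsne, if_pos rfl]
    rw [phiv_insert color ∅ p (Finset.notMem_empty p), phiv_empty, hred]
    simp [cvec]
  · by_cases hR'S' : insert p R = S
    · -- co-singleton case
      have hred := hred2 hR'S'
      left
      unfold psiF
      rw [if_neg hins, if_pos hR'S', if_neg hRe, if_neg hRneS]
      have := phiv_insert color R p hpR
      rw [hR'S'] at this
      rw [hphiS] at this
      have : phiv color R = - cvec (color p) := by
        rw [eq_neg_iff_add_eq_zero, ← this]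
      rw [this, hred]
      simp [cvec, Prod.ext_iff]
    · -- generic case
      right
      unfold psiF
      rw [if_neg hins, if_neg hR'S', if_neg hRe, if_neg hRneS]
      rw [phiv_insert color R p hpR]
      simp only [add_sub_cancel_left]
      exact cvec_step6 (color p)

/-- cut lemma, lower side -/
lemma cut_lt (f : ℤ × ℤ → ℤ) (i : ℕ)
    (hne : (S.filter (fun p => rkf S f p < i)).Nonempty) :
    ∃ a : ℤ, ∀ p ∈ S, (rkf S f p < i ↔ f p < a) := by
  set F := S.filter (fun p => rkf S f p < i) with hF
  have hne' : (F.image f).Nonempty := hne.image f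
  refine ⟨(F.image f).max' hne' + 1, ?_⟩
  intro p hp
  constructor
  · intro h
    have : f p ∈ F.image f := Finset.mem_image_of_mem f (Finset.mem_filter.mpr ⟨hp, h⟩)
    have := Finset.le_max' _ _ this
    omega
  · intro h
    have hM : (F.image f).max' hne' ∈ F.image f := Finset.max'_mem _ _
    obtain ⟨q, hqF, hfq⟩ := Finset.mem_image.mp hM
    have hq2 := (Finset.mem_filter.mp hqF).2
    have : rkf S f p ≤ rkf S f q := rk_mono S f (by omega)
    omega

/-- cut lemma, upper side -/
lemma cut_ge (f : ℤ × ℤ → ℤ) (j : ℕ)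
    (hne : (S.filter (fun p => j ≤ rkf S f p)).Nonempty) :
    ∃ b : ℤ, ∀ p ∈ S, (j ≤ rkf S f p ↔ b < f p) := by
  set G := S.filter (fun p => j ≤ rkf S f p) with hG
  have hne' : (G.image f).Nonempty := hne.image f
  refine ⟨(G.image f).min' hne' - 1, ?_⟩
  intro p hp
  constructor
  · intro h
    have : f p ∈ G.image f := Finset.mem_image_of_mem f (Finset.mem_filter.mpr ⟨hp, h⟩)
    have := Finset.min'_le _ _ this
    omega
  · intro h
    have hM : (G.image f).min' hne' ∈ G.image f := Finset.min'_mem _ _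
    obtain ⟨q, hqG, hfq⟩ := Finset.mem_image.mp hM
    have hq2 := (Finset.mem_filter.mp hqG).2
    have : rkf S f q ≤ rkf S f p := rk_mono S f (by omega)
    omega

end P5



/-- A region of the plane cut off by an `L`-line: an open axis-parallel
halfplane or an open axis-parallel quadrant. -/
def IsLRegion (T : Set (ℝ × ℝ)) : Prop :=
  (∃ a : ℝ, T = {q : ℝ × ℝ | q.1 < a} ∨ T = {q : ℝ × ℝ | a < q.1} ∨
             T = {q : ℝ × ℝ | q.2 < a} ∨ T = {q : ℝ × ℝ | a < q.2}) ∨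
  (∃ a b : ℝ, T = {q : ℝ × ℝ | q.1 < a ∧ q.2 < b} ∨
              T = {q : ℝ × ℝ | q.1 < a ∧ b < q.2} ∨
              T = {q : ℝ × ℝ | a < q.1 ∧ q.2 < b} ∨
              T = {q : ℝ × ℝ | a < q.1 ∧ b < q.2})

set_option maxHeartbeats 2000000 in
/-- **Nontrivial balanced `L`-lines in the lattice.**
Let `S ⊆ ℤ²` consist of `3n` points (`n ≥ 2`), exactly `n` of each of the
colors `Fin 3` (0 = red, 1 = green, 2 = blue), in general position in the
lattice (distinct x-coordinates and distinct y-coordinates).  If every point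
of `S` on the orthogonal convex hull of `S` (i.e. every `p ∈ S` such that some
closed axis-parallel quadrant with apex `p` contains no other point of `S`)
is red, then some `L`-line region (quadrant or halfplane) contains exactly
`k` points of each color, for some `1 ≤ k ≤ n - 1`. -/
theorem stmt_12 (n : ℕ) (hn : 2 ≤ n) (S : Finset (ℤ × ℤ))
    (color : ℤ × ℤ → Fin 3)
    (hbal : ∀ i : Fin 3, (S.filter (fun p => color p = i)).card = n)
    (hgen : ∀ p ∈ S, ∀ q ∈ S, p ≠ q → p.1 ≠ q.1 ∧ p.2 ≠ q.2)
    (hhull : ∀ p ∈ S,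
      ((∀ q ∈ S, q ≠ p → ¬(p.1 ≤ q.1 ∧ p.2 ≤ q.2)) ∨
       (∀ q ∈ S, q ≠ p → ¬(p.1 ≤ q.1 ∧ q.2 ≤ p.2)) ∨
       (∀ q ∈ S, q ≠ p → ¬(q.1 ≤ p.1 ∧ p.2 ≤ q.2)) ∨
       (∀ q ∈ S, q ≠ p → ¬(q.1 ≤ p.1 ∧ q.2 ≤ p.2))) → color p = 0) :
    ∃ k : ℕ, 1 ≤ k ∧ k ≤ n - 1 ∧ ∃ T : Set (ℝ × ℝ), IsLRegion T ∧
      ∀ i : Fin 3,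
        {p : ℤ × ℤ | p ∈ S ∧ color p = i ∧ ((p.1 : ℝ), (p.2 : ℝ)) ∈ T}.ncard = k := by
  classical
  set N := 3 * n with hNdef
  have hinjx : ∀ p ∈ S, ∀ q ∈ S, p ≠ q → Prod.fst p ≠ Prod.fst q :=
    fun p hp q hq hne => (hgen p hp q hq hne).1
  have hinjy : ∀ p ∈ S, ∀ q ∈ S, p ≠ q → Prod.snd p ≠ Prod.snd q :=
    fun p hp q hq hne => (hgen p hp q hq hne).2
  have hcard : S.card = N := by
    have h := card_eq_three_counts color S
    rw [hbal 0, hbal 1, hbal 2] at h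
    omega
  have hN6 : 6 ≤ N := by omega
  have hphiS : phiv color S = 0 := by
    simp only [phiv, hbal 0, hbal 1, hbal 2, Prod.ext_iff]
    norm_num
  by_contra hcon
  -- Step 1: no nontrivial balanced region in the grid family
  have hNB : ∀ i t : ℕ, regq S N i t ≠ ∅ → regq S N i t ≠ S →
      phiv color (regq S N i t) ≠ 0 := by
    intro i t hne hneS h0
    apply hcon
    have hFsub : regq S N i t ⊆ S := regq_subset S N i t
    set F := regq S N i t with hF
    have e1 : ((F.filter (fun p => color p = 0)).card : ℤ)
        - ((F.filter (fun p => color p = 1)).card : ℤ) = 0 := congrArg Prod.fst h0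
    have e2 : ((F.filter (fun p => color p = 0)).card : ℤ)
        - ((F.filter (fun p => color p = 2)).card : ℤ) = 0 := congrArg Prod.snd h0
    set k := (F.filter (fun p => color p = 0)).card with hk
    have hk1 : (F.filter (fun p => color p = 1)).card = k := by omega
    have hk2 : (F.filter (fun p => color p = 2)).card = k := by omega
    have hcardF : F.card = 3 * k := by
      have := card_eq_three_counts color F
      omega
    have hkpos : 1 ≤ k := by
      have : 0 < F.card := Finset.card_pos.mpr (Finset.nonempty_iff_ne_empty.mpr hne)
      omega
    have hklt : F.card < S.card := Finset.card_lt_card (Finset.ssubset_iff_subset_ne.mpr ⟨hFsub, hneS⟩)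
    have hkn : k ≤ n - 1 := by omega
    refine ⟨k, hkpos, hkn, ?_⟩
    obtain ⟨p₀, hp₀⟩ := Finset.nonempty_iff_ne_empty.mpr hne
    by_cases ht : t ≤ N
    · -- SW quadrant
      have hFdef : F = S.filter (fun p => rkf S Prod.fst p < i ∧ rkf S Prod.snd p < t) := by
        rw [hF]; unfold regq; rw [if_pos ht]
      have hp₀' := Finset.mem_filter.mp (hFdef ▸ hp₀)
      obtain ⟨a, ha⟩ := cut_lt S Prod.fst i
        ⟨p₀, Finset.mem_filter.mpr ⟨hp₀'.1, hp₀'.2.1⟩⟩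
      obtain ⟨b, hb⟩ := cut_lt S Prod.snd t
        ⟨p₀, Finset.mem_filter.mpr ⟨hp₀'.1, hp₀'.2.2⟩⟩
      refine ⟨{q : ℝ × ℝ | q.1 < (a : ℝ) ∧ q.2 < (b : ℝ)},
        Or.inr ⟨(a : ℝ), (b : ℝ), Or.inl rfl⟩, ?_⟩
      intro c
      have hset : {p : ℤ × ℤ | p ∈ S ∧ color p = c ∧ ((p.1 : ℝ), (p.2 : ℝ)) ∈
          {q : ℝ × ℝ | q.1 < (a : ℝ) ∧ q.2 < (b : ℝ)}}
          = ↑(F.filter (fun p => color p = c)) := by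
        ext p
        simp only [Set.mem_setOf_eq, Finset.coe_filter, hFdef, Finset.mem_filter]
        constructor
        · rintro ⟨hpS, hc, hx, hy⟩
          have hx' : p.1 < a := by exact_mod_cast hx
          have hy' : p.2 < b := by exact_mod_cast hy
          exact ⟨⟨hpS, (ha p hpS).mpr hx', (hb p hpS).mpr hy'⟩, hc⟩
        · rintro ⟨⟨hpS, h1, h2⟩, hc⟩
          refine ⟨hpS, hc, ?_, ?_⟩
          · exact_mod_cast (ha p hpS).mp h1
          · exact_mod_cast (hb p hpS).mp h2
      rw [hset, Set.ncard_coe_finset]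
      rcases fin3_cases c with rfl | rfl | rfl
      · exact hk.symm
      · exact hk1
      · exact hk2
    · -- NW quadrant
      have hFdef : F = S.filter (fun p => rkf S Prod.fst p < i ∧ t - N ≤ rkf S Prod.snd p) := by
        rw [hF]; unfold regq; rw [if_neg ht]
      have hp₀' := Finset.mem_filter.mp (hFdef ▸ hp₀)
      obtain ⟨a, ha⟩ := cut_lt S Prod.fst i
        ⟨p₀, Finset.mem_filter.mpr ⟨hp₀'.1, hp₀'.2.1⟩⟩
      obtain ⟨b, hb⟩ := cut_ge S Prod.snd (t - N)
        ⟨p₀, Finset.mem_filter.mpr ⟨hp₀'.1, hp₀'.2.2⟩⟩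
      refine ⟨{q : ℝ × ℝ | q.1 < (a : ℝ) ∧ (b : ℝ) < q.2},
        Or.inr ⟨(a : ℝ), (b : ℝ), Or.inr (Or.inl rfl)⟩, ?_⟩
      intro c
      have hset : {p : ℤ × ℤ | p ∈ S ∧ color p = c ∧ ((p.1 : ℝ), (p.2 : ℝ)) ∈
          {q : ℝ × ℝ | q.1 < (a : ℝ) ∧ (b : ℝ) < q.2}}
          = ↑(F.filter (fun p => color p = c)) := by
        ext p
        simp only [Set.mem_setOf_eq, Finset.coe_filter, hFdef, Finset.mem_filter]
        constructor
        · rintro ⟨hpS, hc, hx, hy⟩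
          have hx' : p.1 < a := by exact_mod_cast hx
          have hy' : b < p.2 := by exact_mod_cast hy
          exact ⟨⟨hpS, (ha p hpS).mpr hx', (hb p hpS).mpr hy'⟩, hc⟩
        · rintro ⟨⟨hpS, h1, h2⟩, hc⟩
          refine ⟨hpS, hc, ?_, ?_⟩
          · exact_mod_cast (ha p hpS).mp h1
          · exact_mod_cast (hb p hpS).mp h2
      rw [hset, Set.ncard_coe_finset]
      rcases fin3_cases c with rfl | rfl | rfl
      · exact hk.symm
      · exact hk1
      · exact hk2
  -- Step 2: the grid of psi values
  set ψ : ℕ → ℕ → ℤ × ℤ := fun i t => psiF S color (regq S N i t) with hψ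
  have hψne : ∀ i t, ψ i t ≠ 0 := by
    intro i t
    show psiF S color (regq S N i t) ≠ 0
    unfold psiF
    split_ifs with h1 h2
    · intro h; rw [Prod.ext_iff] at h; norm_num at h
    · intro h; rw [Prod.ext_iff] at h; norm_num at h
    · exact hNB i t h1 h2
  -- horizontal edges
  have hedgeH : ∀ i t, ψ (i+1) t = ψ i t ∨ step6 (ψ (i+1) t - ψ i t) := by
    intro i t
    apply psiF_step S color (by omega) hphiS _ _ (regq_subset S N (i+1) t)
    have hsub := regq_h_subset S N i t
    have hdd := regq_h_diff S N i t
    have hss : ∀ p ∈ regq S N (i+1) t \ regq S N i t,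
        ∀ q ∈ regq S N (i+1) t \ regq S N i t, p = q := by
      intro p hp q hq
      have hp' := Finset.mem_filter.mp (hdd hp)
      have hq' := Finset.mem_filter.mp (hdd hq)
      exact rk_injOn S Prod.fst hinjx p hp'.1 q hq'.1 (by omega)
    rcases subset_dich _ _ hsub hss with h | ⟨p, hp1, hp2⟩
    · exact Or.inl h
    · refine Or.inr ⟨p, hp1, hp2, ?_, ?_⟩
      · intro hRe
        apply single_red S color N hhull (i+1) t p
        rw [hp2, hRe]
        rfl
      · intro hRS
        apply cosingle_red S color N hhull i t p
        rw [hp2] at hRS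
        ext x
        simp only [Finset.mem_sdiff, Finset.mem_singleton]
        constructor
        · rintro ⟨hxS, hxR⟩
          rw [← hRS] at hxS
          rcases Finset.mem_insert.mp hxS with rfl | hx
          · rfl
          · exact absurd hx hxR
        · intro hxp
          constructor
          · rw [hxp, ← hRS]; exact Finset.mem_insert_self _ _
          · rw [hxp]; exact hp1
  -- vertical edges
  have hedgeV : ∀ i t, ψ i (t+1) = ψ i t ∨ step6 (ψ i (t+1) - ψ i t) := by
    intro i t
    by_cases ht : t < N
    · apply psiF_step S color (by omega) hphiS _ _ (regq_subset S N i (t+1))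
      have hsub := regq_v_low_subset S N i t ht
      have hdd := regq_v_low_diff S N i t ht
      have hss : ∀ p ∈ regq S N i (t+1) \ regq S N i t,
          ∀ q ∈ regq S N i (t+1) \ regq S N i t, p = q := by
        intro p hp q hq
        have hp' := Finset.mem_filter.mp (hdd hp)
        have hq' := Finset.mem_filter.mp (hdd hq)
        exact rk_injOn S Prod.snd hinjy p hp'.1 q hq'.1 (by omega)
      rcases subset_dich _ _ hsub hss with h | ⟨p, hp1, hp2⟩
      · exact Or.inl h
      · refine Or.inr ⟨p, hp1, hp2, ?_, ?_⟩
        · intro hRe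
          apply single_red S color N hhull i (t+1) p
          rw [hp2, hRe]
          rfl
        · intro hRS
          apply cosingle_red S color N hhull i t p
          rw [hp2] at hRS
          ext x
          simp only [Finset.mem_sdiff, Finset.mem_singleton]
          constructor
          · rintro ⟨hxS, hxR⟩
            rw [← hRS] at hxS
            rcases Finset.mem_insert.mp hxS with rfl | hx
            · rfl
            · exact absurd hx hxR
          · intro hxp
            constructor
            · rw [hxp, ← hRS]; exact Finset.mem_insert_self _ _
            · rw [hxp]; exact hp1
    · -- high side : the inclusion is reversed
      have ht' : N ≤ t := by omega
      have main : psiF S color (regq S N i t) = psiF S color (regq S N i (t+1)) ∨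
          step6 (psiF S color (regq S N i t) - psiF S color (regq S N i (t+1))) := by
        apply psiF_step S color (by omega) hphiS _ _ (regq_subset S N i t)
        have hsub := regq_v_high_subset S N hcard i t ht'
        have hdd := regq_v_high_diff S N hcard i t ht'
        have hss : ∀ p ∈ regq S N i t \ regq S N i (t+1),
            ∀ q ∈ regq S N i t \ regq S N i (t+1), p = q := by
          intro p hp q hq
          have hp' := Finset.mem_filter.mp (hdd hp)
          have hq' := Finset.mem_filter.mp (hdd hq)
          exact rk_injOn S Prod.snd hinjy p hp'.1 q hq'.1 (by omega)
        rcases subset_dich _ _ hsub hss with h | ⟨p, hp1, hp2⟩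
        · exact Or.inl h
        · refine Or.inr ⟨p, hp1, hp2, ?_, ?_⟩
          · intro hRe
            apply single_red S color N hhull i t p
            rw [hp2, hRe]
            rfl
          · intro hRS
            apply cosingle_red S color N hhull i (t+1) p
            rw [hp2] at hRS
            ext x
            simp only [Finset.mem_sdiff, Finset.mem_singleton]
            constructor
            · rintro ⟨hxS, hxR⟩
              rw [← hRS] at hxS
              rcases Finset.mem_insert.mp hxS with rfl | hx
              · rfl
              · exact absurd hx hxR
            · intro hxp
              constructor
              · rw [hxp, ← hRS]; exact Finset.mem_insert_self _ _
              · rw [hxp]; exact hp1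
      rcases main with h | h
      · exact Or.inl h.symm
      · right
        have := step6_neg h
        rwa [neg_sub] at this
  -- cells
  have hcell : ∀ i t, tau (ψ i t) (ψ (i+1) t) + tau (ψ (i+1) t) (ψ (i+1) (t+1))
      - tau (ψ i (t+1)) (ψ (i+1) (t+1)) - tau (ψ i t) (ψ i (t+1)) = 0 := by
    intro i t
    have e01 := hedgeH i t
    have e12 := hedgeV (i+1) t
    have e23 : ψ i (t+1) = ψ (i+1) (t+1) ∨ step6 (ψ i (t+1) - ψ (i+1) (t+1)) := by
      rcases hedgeH i (t+1) with h | h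
      · exact Or.inl h.symm
      · right; have := step6_neg h; rwa [neg_sub] at this
    have e30 : ψ i t = ψ i (t+1) ∨ step6 (ψ i t - ψ i (t+1)) := by
      rcases hedgeV i t with h | h
      · exact Or.inl h.symm
      · right; have := step6_neg h; rwa [neg_sub] at this
    have hz := cell_zero (ψ i t) (ψ (i+1) t) (ψ (i+1) (t+1)) (ψ i (t+1))
      (hψne i t) (hψne (i+1) t) (hψne (i+1) (t+1)) (hψne i (t+1))
      e01 e12 e23 e30
    have ha1 := tau_antisymm (ψ i (t+1)) (ψ (i+1) (t+1))
    have ha2 := tau_antisymm (ψ i t) (ψ i (t+1))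
    omega
  -- telescoping
  have hHh0 : ∀ i : ℕ, tau (ψ i 0) (ψ (i+1) 0) = 0 := by
    intro i
    show tau (psiF S color (regq S N i 0)) (psiF S color (regq S N (i+1) 0)) = 0
    rw [regq_t0, regq_t0]
    exact tau_self _
  have hHh2N : ∀ i : ℕ, tau (ψ i (2*N)) (ψ (i+1) (2*N)) = 0 := by
    intro i
    show tau (psiF S color (regq S N i (2*N))) (psiF S color (regq S N (i+1) (2*N))) = 0
    rw [regq_top S N (by omega) hcard, regq_top S N (by omega) hcard]
    exact tau_self _
  have hVv0 : ∀ t : ℕ, tau (ψ 0 t) (ψ 0 (t+1)) = 0 := by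
    intro t
    show tau (psiF S color (regq S N 0 t)) (psiF S color (regq S N 0 (t+1))) = 0
    rw [regq_i0, regq_i0]
    exact tau_self _
  have key0 : ∑ t ∈ Finset.range (2*N), tau (ψ N t) (ψ N (t+1)) = 0 := by
    have big : ∑ i ∈ Finset.range N, ∑ t ∈ Finset.range (2*N),
        ((tau (ψ i t) (ψ (i+1) t) - tau (ψ i (t+1)) (ψ (i+1) (t+1)))
          + (tau (ψ (i+1) t) (ψ (i+1) (t+1)) - tau (ψ i t) (ψ i (t+1)))) = 0 := by
      apply Finset.sum_eq_zero
      intro i _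
      apply Finset.sum_eq_zero
      intro t _
      have := hcell i t
      omega
    rw [Finset.sum_congr rfl (fun i _ => Finset.sum_add_distrib)] at big
    rw [Finset.sum_add_distrib] at big
    have part1 : ∑ i ∈ Finset.range N, ∑ t ∈ Finset.range (2*N),
        (tau (ψ i t) (ψ (i+1) t) - tau (ψ i (t+1)) (ψ (i+1) (t+1))) = 0 := by
      apply Finset.sum_eq_zero
      intro i _
      have := Finset.sum_range_sub' (fun t => tau (ψ i t) (ψ (i+1) t)) (2*N)
      rw [this, hHh0 i, hHh2N i]
      ring
    have part2 : ∑ t ∈ Finset.range (2*N), ∑ i ∈ Finset.range N,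
        (tau (ψ (i+1) t) (ψ (i+1) (t+1)) - tau (ψ i t) (ψ i (t+1)))
        = ∑ t ∈ Finset.range (2*N), tau (ψ N t) (ψ N (t+1)) := by
      apply Finset.sum_congr rfl
      intro t _
      have := Finset.sum_range_sub (fun i => tau (ψ i t) (ψ i (t+1))) N
      rw [this, hVv0 t]
      ring
    rw [part1, Finset.sum_comm, part2] at big
    omega
  -- right-column values
  have hpsiN0 : ψ N 0 = (1,1) := by
    show psiF S color (regq S N N 0) = (1,1)
    rw [regq_t0]
    unfold psiF
    rw [if_pos rfl]
  have hSne : S ≠ ∅ := by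
    intro h
    rw [h, Finset.card_empty] at hcard
    omega
  have hpsiNN : ψ N N = (-1,-1) := by
    show psiF S color (regq S N N N) = (-1,-1)
    rw [regq_full S N hcard]
    unfold psiF
    rw [if_neg hSne, if_pos rfl]
  have tele : ∀ m : ℕ, (∑ t ∈ Finset.range m, tau (ψ N t) (ψ N (t+1))) % 4
      = (qlab (ψ N m) - qlab (ψ N 0)) % 4 := by
    intro m
    induction m with
    | zero => simp
    | succ m ih =>
      rw [Finset.sum_range_succ]
      have hedge := edge_mod (ψ N m) (ψ N (m+1)) (hψne N m) (hψne N (m+1)) (hedgeV N m)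
      omega
  have hA2 : (∑ t ∈ Finset.range N, tau (ψ N t) (ψ N (t+1))) % 4 = 2 := by
    have h := tele N
    rw [hpsiNN, hpsiN0] at h
    have q1 : qlab (-1,-1) = 2 := by norm_num [qlab]
    have q2 : qlab (1,1) = 0 := by norm_num [qlab]
    rw [q1, q2] at h
    omega
  -- antipodal symmetry of the right column
  have hanti : ∀ j, j ≤ N → ψ N (N + j) = - ψ N j := by
    intro j hj
    by_cases hj0 : j = 0
    · subst hj0
      rw [Nat.add_zero, hpsiNN, hpsiN0]
      rfl
    by_cases hjN : j = N
    · subst hjN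
      have h2N : N + N = 2*N := by ring
      rw [h2N, hpsiNN]
      show psiF S color (regq S N N (2*N)) = -(-1,-1)
      rw [regq_top S N (by omega) hcard]
      unfold psiF
      rw [if_pos rfl]
      rfl
    -- now 1 ≤ j ≤ N-1
    have hj1 : 1 ≤ j := by omega
    have hjN' : j < N := by omega
    have h1 : regq S N N j = S.filter (fun p => rkf S Prod.snd p < j) := by
      unfold regq
      rw [if_pos (by omega)]
      apply Finset.filter_congr
      intro p hp
      have := rk_lt_card S Prod.fst hp
      constructor
      · exact fun h => h.2
      · exact fun h => ⟨by omega, h⟩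
    have hcard1 : (regq S N N j).card = j := by
      rw [h1]
      have := rk_count S Prod.snd hinjy j
      rw [hcard] at this
      omega
    have hne1 : regq S N N j ≠ ∅ := by
      intro h
      rw [h, Finset.card_empty] at hcard1
      omega
    have hneS1 : regq S N N j ≠ S := by
      intro h
      rw [h, hcard] at hcard1
      omega
    have h2 : regq S N N (N + j) = S \ regq S N N j := by
      rw [h1]
      unfold regq
      rw [if_neg (by omega)]
      ext p
      constructor
      · intro hmem
        have hm := Finset.mem_filter.mp hmem
        rw [Finset.mem_sdiff]
        refine ⟨hm.1, ?_⟩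
        intro hmem2
        have := (Finset.mem_filter.mp hmem2).2
        omega
      · intro hmem
        rw [Finset.mem_sdiff] at hmem
        have hx := rk_lt_card S Prod.fst hmem.1
        have hy : ¬ rkf S Prod.snd p < j := fun hh => hmem.2 (Finset.mem_filter.mpr ⟨hmem.1, hh⟩)
        exact Finset.mem_filter.mpr ⟨hmem.1, by omega, by omega⟩
    have hne2 : regq S N N (N + j) ≠ ∅ := by
      rw [h2]
      intro h
      have hcc := Finset.card_sdiff_of_subset (regq_subset S N N j)
      rw [h, Finset.card_empty] at hcc
      omega
    have hneS2 : regq S N N (N + j) ≠ S := by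
      intro h
      obtain ⟨p₀, hp₀⟩ := Finset.nonempty_iff_ne_empty.mpr hne1
      have hp₀S := regq_subset S N N j hp₀
      have hmem : p₀ ∈ regq S N N (N + j) := by rw [h]; exact hp₀S
      rw [h2] at hmem
      exact (Finset.mem_sdiff.mp hmem).2 hp₀
    show psiF S color (regq S N N (N+j)) = - psiF S color (regq S N N j)
    unfold psiF
    rw [if_neg hne1, if_neg hneS1, if_neg hne2, if_neg hneS2]
    rw [h2, phiv_sdiff color S _ (regq_subset S N N j), hphiS]
    ring
  -- second half equals first half
  have hhalf : ∑ t ∈ Finset.range (2*N), tau (ψ N t) (ψ N (t+1))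
      = 2 * ∑ t ∈ Finset.range N, tau (ψ N t) (ψ N (t+1)) := by
    have h2N : 2*N = N + N := by ring
    rw [h2N, Finset.sum_range_add, two_mul]
    congr 1
    apply Finset.sum_congr rfl
    intro j hj
    have hjN := Finset.mem_range.mp hj
    have e1 : ψ N (N + j) = - ψ N j := hanti j (by omega)
    have e2 : ψ N (N + j + 1) = - ψ N (j+1) := by
      have : N + j + 1 = N + (j+1) := by ring
      rw [this]
      exact hanti (j+1) (by omega)
    rw [e1, e2, tau_neg _ _ (hψne N j) (hψne N (j+1))]
  rw [hhalf] at key0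
  omega
end
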